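/- arXiv:1409.1075 — 7 statements merged into one kernel-verified Lean document; each statement's English description precedes it below -/
import Mathlib

section
/- For a > 1, c ∈ ℝ, and x > 0, the Turán type inequality ψ(a,c,x)² − ψ(a−1,c−1,x)·ψ(a+1,c+1,x) < (1/a)·ψ(a,c,x)² holds, where ψ is the Tricomi confluent hypergeometric function. -/
open MeasureTheory Real

noncomputable def tricomiPsi (a c x : ℝ) : ℝ :=
  (1 / Real.Gamma a) * ∫ t in Set.Ioi (0:ℝ), Real.exp (-x * t) * t ^ (a - 1) * (1 + t) ^ (c - a - 1)

open Set in

lemma psi_integrable (p b x : ℝ) (hp : -1 < p) (hx : 0 < x) :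
    IntegrableOn (fun t => Real.exp (-x * t) * t ^ p * (1 + t) ^ b) (Set.Ioi (0:ℝ)) := by
  set B := |b| with hB
  have hB0 : 0 ≤ B := abs_nonneg b
  have h1 : IntegrableOn (fun t:ℝ => t ^ p * Real.exp (-x * t)) (Ioi 0) := by
    have := integrableOn_rpow_mul_exp_neg_mul_rpow hp zero_lt_one hx
    simpa using this
  have h2 : IntegrableOn (fun t:ℝ => t ^ (p + B) * Real.exp (-x * t)) (Ioi 0) := by
    have := integrableOn_rpow_mul_exp_neg_mul_rpow (by linarith : (-1:ℝ) < p + B) zero_lt_one hx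
    simpa using this
  have hg : IntegrableOn (fun t:ℝ => 2 ^ B * (t ^ p * Real.exp (-x * t))
      + 2 ^ B * (t ^ (p + B) * Real.exp (-x * t))) (Ioi 0) :=
    (h1.const_mul _).add (h2.const_mul _)
  have hmeas : AEStronglyMeasurable (fun t => Real.exp (-x * t) * t ^ p * (1 + t) ^ b)
      (volume.restrict (Ioi (0:ℝ))) := by
    apply ContinuousOn.aestronglyMeasurable ?_ measurableSet_Ioi
    apply ContinuousOn.mul
    · apply ContinuousOn.mul
      · exact (Real.continuous_exp.comp (continuous_const.mul continuous_id)).continuousOn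
      · exact fun t ht => (continuousAt_id.rpow_const (Or.inl (ne_of_gt ht))).continuousWithinAt
    · intro t ht
      have ht0 : (0:ℝ) < t := ht
      exact (ContinuousAt.rpow_const (by fun_prop) (Or.inl (by positivity))).continuousWithinAt
  refine Integrable.mono' hg hmeas ?_
  filter_upwards [ae_restrict_mem measurableSet_Ioi] with t ht
  have ht : (0:ℝ) < t := ht
  have h1t : (0:ℝ) < 1 + t := by linarith
  rw [Real.norm_eq_abs, abs_of_nonneg (by positivity)]
  have key : (1 + t) ^ b ≤ 2 ^ B * (1 + t ^ B) := by
    have step1 : (1 + t) ^ b ≤ (1 + t) ^ B :=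
      Real.rpow_le_rpow_of_exponent_le (by linarith) (le_abs_self b)
    rcases le_total t 1 with h | h
    · have : (1 + t) ^ B ≤ 2 ^ B := Real.rpow_le_rpow (by linarith) (by linarith) hB0
      have h2 : (0:ℝ) ≤ t ^ B := Real.rpow_nonneg ht.le _
      nlinarith [Real.rpow_pos_of_pos (show (0:ℝ)<2 by norm_num) B]
    · have : (1 + t) ^ B ≤ (2 * t) ^ B := Real.rpow_le_rpow (by linarith) (by linarith) hB0
      rw [Real.mul_rpow (by norm_num) ht.le] at this
      have h2 : (0:ℝ) < 2 ^ B := Real.rpow_pos_of_pos (by norm_num) B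
      nlinarith
  have hrw : t ^ p * t ^ B = t ^ (p + B) := (Real.rpow_add ht p B).symm
  have he : (0:ℝ) < Real.exp (-x * t) := Real.exp_pos _
  have htp : (0:ℝ) ≤ t ^ p := Real.rpow_nonneg ht.le _
  calc Real.exp (-x * t) * t ^ p * (1 + t) ^ b
      ≤ Real.exp (-x * t) * t ^ p * (2 ^ B * (1 + t ^ B)) := by
        apply mul_le_mul_of_nonneg_left key (by positivity)
    _ = 2 ^ B * (t ^ p * Real.exp (-x * t)) + 2 ^ B * (t ^ (p + B) * Real.exp (-x * t)) := by
        rw [← hrw]; ring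

open Set in

lemma pos_setIntegral (f : ℝ → ℝ) (hint : IntegrableOn f (Ioi (0:ℝ)))
    (l : ℝ) (hnn : ∀ t ∈ Ioi (0:ℝ), 0 ≤ f t)
    (hpos : ∀ t ∈ Ioi (0:ℝ), t ≠ l → 0 < f t) :
    0 < ∫ t in Ioi (0:ℝ), f t := by
  have hnn' : 0 ≤ᵐ[volume.restrict (Ioi (0:ℝ))] f := by
    filter_upwards [ae_restrict_mem measurableSet_Ioi] with t ht using hnn t ht
  rw [setIntegral_pos_iff_support_of_nonneg_ae hnn' hint]
  have hsub : Ioi (0:ℝ) \ {l} ⊆ Function.support f ∩ Ioi 0 := by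
    rintro t ⟨ht, htl⟩
    exact ⟨ne_of_gt (hpos t ht (by simpa using htl)), ht⟩
  have : volume (Ioi (0:ℝ) \ {l}) = ⊤ := by
    rw [measure_diff_null (measure_singleton l), Real.volume_Ioi]
  calc (0:ENNReal) < ⊤ := by simp
    _ = volume (Ioi (0:ℝ) \ {l}) := this.symm
    _ ≤ volume (Function.support f ∩ Ioi 0) := measure_mono hsub

open Set in
theorem turan_lt_inv_a (a c x : ℝ) (ha : 1 < a) (hx : 0 < x) :
    (tricomiPsi a c x) ^ 2 - tricomiPsi (a - 1) (c - 1) x * tricomiPsi (a + 1) (c + 1) x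
      < (1 / a) * (tricomiPsi a c x) ^ 2 := by
  have ha0 : (0:ℝ) < a := by linarith
  have ha1 : (0:ℝ) < a - 1 := by linarith
  set b : ℝ := c - a - 1 with hb
  set f0 : ℝ → ℝ := fun t => Real.exp (-x*t) * t ^ (a-2) * (1+t) ^ b with hf0
  set f1 : ℝ → ℝ := fun t => Real.exp (-x*t) * t ^ (a-1) * (1+t) ^ b with hf1
  set f2 : ℝ → ℝ := fun t => Real.exp (-x*t) * t ^ a * (1+t) ^ b with hf2
  have i0 : IntegrableOn f0 (Ioi 0) := psi_integrable _ _ _ (by linarith) hx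
  have i1 : IntegrableOn f1 (Ioi 0) := psi_integrable _ _ _ (by linarith) hx
  have i2 : IntegrableOn f2 (Ioi 0) := psi_integrable _ _ _ (by linarith) hx
  set J0 : ℝ := ∫ t in Ioi (0:ℝ), f0 t with hJ0def
  set J1 : ℝ := ∫ t in Ioi (0:ℝ), f1 t with hJ1def
  set J2 : ℝ := ∫ t in Ioi (0:ℝ), f2 t with hJ2def
  -- relations f1 = t*f0, f2 = t*f1 on Ioi 0
  have hrel1 : ∀ t ∈ Ioi (0:ℝ), f1 t = t * f0 t := by
    intro t ht
    have ht0 : (0:ℝ) < t := ht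
    simp only [hf0, hf1]
    rw [show a - 1 = (a-2) + 1 by ring, Real.rpow_add_one (ne_of_gt ht0)]
    ring
  have hrel2 : ∀ t ∈ Ioi (0:ℝ), f2 t = t * f1 t := by
    intro t ht
    have ht0 : (0:ℝ) < t := ht
    simp only [hf1, hf2]
    rw [show a = (a-1) + 1 by ring, Real.rpow_add_one (ne_of_gt ht0)]
    ring
  have f0pos : ∀ t ∈ Ioi (0:ℝ), 0 < f0 t := by
    intro t ht
    have ht0 : (0:ℝ) < t := ht
    have h1 : (0:ℝ) < 1 + t := by linarith
    simp only [hf0]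
    positivity
  have hJ0 : 0 < J0 :=
    pos_setIntegral f0 i0 (-1) (fun t ht => (f0pos t ht).le)
      (fun t ht _ => f0pos t ht)
  -- variance positivity
  set l : ℝ := J1 / J0 with hl
  have hgeq : ∀ t ∈ Ioi (0:ℝ), (t - l)^2 * f0 t = f2 t - (2*l) * f1 t + l^2 * f0 t := by
    intro t ht
    rw [hrel2 t ht, hrel1 t ht]
    ring
  have hcomb : IntegrableOn (fun t => f2 t - (2*l) * f1 t + l^2 * f0 t) (Ioi 0) :=
    (i2.sub (i1.const_mul _)).add (i0.const_mul _)
  have ig : IntegrableOn (fun t => (t - l)^2 * f0 t) (Ioi 0) :=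
    hcomb.congr_fun (fun t ht => (hgeq t ht).symm) measurableSet_Ioi
  have hvarpos : 0 < ∫ t in Ioi (0:ℝ), (t - l)^2 * f0 t := by
    apply pos_setIntegral _ ig l
    · intro t ht
      exact mul_nonneg (sq_nonneg _) (f0pos t ht).le
    · intro t ht htl
      have h1 : t - l ≠ 0 := sub_ne_zero.mpr htl
      have h2 : 0 < (t - l)^2 := lt_of_le_of_ne (sq_nonneg _) (Ne.symm (pow_ne_zero 2 h1))
      exact mul_pos h2 (f0pos t ht)
  have hvareq : ∫ t in Ioi (0:ℝ), (t - l)^2 * f0 t = J2 - (2*l) * J1 + l^2 * J0 := by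
    have ib : Integrable (fun t => (2*l) * f1 t) (volume.restrict (Ioi 0)) := i1.const_mul _
    have ic : Integrable (fun t => l^2 * f0 t) (volume.restrict (Ioi 0)) := i0.const_mul _
    have ia : Integrable (fun t => f2 t - (2*l) * f1 t) (volume.restrict (Ioi 0)) := i2.sub ib
    rw [setIntegral_congr_fun measurableSet_Ioi hgeq, integral_add ia ic,
      integral_sub i2 ib, integral_const_mul, integral_const_mul]
  have hkey : J1^2 < J0 * J2 := by
    rw [hvareq, hl] at hvarpos
    have h2 := mul_pos hJ0 hvarpos
    have hJ0' : J0 ≠ 0 := ne_of_gt hJ0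
    field_simp at h2
    nlinarith [h2]
  -- express tricomiPsi in terms of J's
  have e1 : tricomiPsi a c x = (1 / Real.Gamma a) * J1 := by
    rw [hJ1def, hf1, hb, tricomiPsi]
  have e0 : tricomiPsi (a-1) (c-1) x = (1 / Real.Gamma (a-1)) * J0 := by
    rw [hJ0def, hf0, hb, tricomiPsi]
    congr 2
    ext t
    rw [show a - 1 - 1 = a - 2 from by ring, show c - 1 - (a-1) - 1 = c - a - 1 from by ring]
  have e2 : tricomiPsi (a+1) (c+1) x = (1 / Real.Gamma (a+1)) * J2 := by
    rw [hJ2def, hf2, hb, tricomiPsi]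
    congr 2
    ext t
    rw [show a + 1 - 1 = a from by ring, show c + 1 - (a+1) - 1 = c - a - 1 from by ring]
  have hG : 0 < Real.Gamma (a-1) := Real.Gamma_pos_of_pos ha1
  have hgaa : Real.Gamma (a+1) = a * Real.Gamma a := Real.Gamma_add_one (ne_of_gt ha0)
  have hgam : Real.Gamma a = (a-1) * Real.Gamma (a-1) := by
    have h := Real.Gamma_add_one (ne_of_gt ha1)
    rwa [sub_add_cancel] at h
  rw [e1, e0, e2, hgaa, hgam]
  set G : ℝ := Real.Gamma (a-1)
  have hden : (0:ℝ) < a * (a-1) * G^2 := by positivity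
  have hsplit : (1 / ((a-1) * G) * J1)^2 - (1 / G * J0) * (1 / (a * ((a-1) * G)) * J2)
      - 1 / a * (1 / ((a-1) * G) * J1)^2 = (J1^2 - J0 * J2) / (a * (a-1) * G^2) := by
    field_simp
    ring
  have hneg : (J1^2 - J0 * J2) / (a * (a-1) * G^2) < 0 :=
    div_neg_of_neg_of_pos (by linarith) (by positivity)
  linarith [hsplit ▸ hneg]
end

section
/- For a > 0, c < 1, and x > 0, define Δ(x) = ψ(a,c,x)² − ψ(a−1,c−1,x)·ψ(a+1,c+1,x). Then Δ(x) > ((c−a−1)/x²)·ψ(a,c,x)². -/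
open MeasureTheory Real

section AuxLemmas
open Set Filter

lemma contOn {x α m : ℝ} : ContinuousOn
    (fun t : ℝ => Real.exp (-x * t) * t ^ α * (1 + t) ^ m) (Set.Ioi 0) := by
  refine ContinuousOn.mul (ContinuousOn.mul ?_ ?_) ?_
  · exact (Real.continuous_exp.comp (continuous_const.mul continuous_id)).continuousOn
  · exact fun t ht => (Real.continuousAt_rpow_const t α (Or.inl (ne_of_gt ht))).continuousWithinAt
  · intro t ht
    have : (1:ℝ) + t ≠ 0 := by have : (0:ℝ) < t := ht; positivity
    exact (ContinuousAt.comp (Real.continuousAt_rpow_const _ m (Or.inl this))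
      (continuous_const.add continuous_id).continuousAt).continuousWithinAt

lemma integ {x α m : ℝ} (hx : 0 < x) (hα : -1 < α) (hm : m ≤ 0) :
    IntegrableOn (fun t : ℝ => Real.exp (-x * t) * t ^ α * (1 + t) ^ m) (Set.Ioi 0) := by
  have h0 : IntegrableOn (fun t : ℝ => t ^ α * Real.exp (-x * t ^ (1:ℝ))) (Set.Ioi 0) :=
    integrableOn_rpow_mul_exp_neg_mul_rpow hα one_pos hx
  refine Integrable.mono h0 (contOn.aestronglyMeasurable measurableSet_Ioi) ?_
  rw [ae_restrict_iff' measurableSet_Ioi]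
  refine ae_of_all _ fun t ht => ?_
  have ht0 : (0:ℝ) < t := ht
  have h1 : (0:ℝ) < 1 + t := by linarith
  have hb : (1 + t) ^ m ≤ 1 := Real.rpow_le_one_of_one_le_of_nonpos (by linarith) hm
  have hb0 : 0 ≤ (1 + t) ^ m := (Real.rpow_pos_of_pos h1 m).le
  rw [Real.norm_eq_abs, Real.norm_eq_abs, abs_of_nonneg (by positivity), abs_of_nonneg ?_]
  · rw [Real.rpow_one]
    calc Real.exp (-x * t) * t ^ α * (1 + t) ^ m ≤ Real.exp (-x * t) * t ^ α * 1 := by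
          apply mul_le_mul_of_nonneg_left hb (by positivity)
      _ = t ^ α * Real.exp (-x * t) := by ring
  · rw [Real.rpow_one]; positivity

lemma ipos {x α m : ℝ} (hx : 0 < x) (hα : -1 < α) (hm : m ≤ 0) :
    0 < ∫ t in Set.Ioi (0:ℝ), Real.exp (-x * t) * t ^ α * (1 + t) ^ m := by
  have hnn : 0 ≤ᶠ[ae (volume.restrict (Set.Ioi (0:ℝ)))]
      fun t => Real.exp (-x * t) * t ^ α * (1 + t) ^ m := by
    rw [EventuallyLE, ae_restrict_iff' measurableSet_Ioi]
    refine ae_of_all _ fun t ht => ?_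
    have ht0 : (0:ℝ) < t := ht
    have h1 : (0:ℝ) < 1 + t := by linarith
    positivity
  rw [setIntegral_pos_iff_support_of_nonneg_ae hnn (integ hx hα hm)]
  refine lt_of_lt_of_le ?_ (measure_mono (fun t (ht : t ∈ Set.Ioi (0:ℝ)) => ?_))
  · show (0:ENNReal) < volume (Set.Ioi (0:ℝ))
    simp [Real.volume_Ioi]
  · have ht0 : (0:ℝ) < t := ht
    have h1 : (0:ℝ) < 1 + t := by linarith
    exact ⟨ne_of_gt (by positivity), ht⟩

lemma split {x α m : ℝ} (hx : 0 < x) (hα : -1 < α) (hm : m ≤ 0) :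
    ∫ t in Set.Ioi (0:ℝ), Real.exp (-x * t) * t ^ α * (1 + t) ^ m
      = (∫ t in Set.Ioi (0:ℝ), Real.exp (-x * t) * t ^ α * (1 + t) ^ (m - 1))
        + ∫ t in Set.Ioi (0:ℝ), Real.exp (-x * t) * t ^ (α + 1) * (1 + t) ^ (m - 1) := by
  rw [← integral_add (integ hx hα (by linarith)) (integ hx (by linarith) (by linarith))]
  refine setIntegral_congr_fun measurableSet_Ioi fun t ht => ?_
  have ht0 : (0:ℝ) < t := ht
  have h1 : (0:ℝ) < 1 + t := by linarith
  have e1 : (1 + t) ^ m = (1 + t) ^ (m - 1) * (1 + t) := by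
    rw [← Real.rpow_add_one (ne_of_gt h1)]; ring_nf
  have e2 : t ^ (α + 1) = t ^ α * t := Real.rpow_add_one (ne_of_gt ht0) α
  simp only [e1, e2]; ring

lemma ibp {x α m : ℝ} (hx : 0 < x) (hα : 0 < α) (hm : m ≤ 0) :
    α * (∫ t in Set.Ioi (0:ℝ), Real.exp (-x * t) * t ^ (α - 1) * (1 + t) ^ m)
      + m * (∫ t in Set.Ioi (0:ℝ), Real.exp (-x * t) * t ^ α * (1 + t) ^ (m - 1))
      = x * ∫ t in Set.Ioi (0:ℝ), Real.exp (-x * t) * t ^ α * (1 + t) ^ m := by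
  set F : ℝ → ℝ := fun t => Real.exp (-x * t) * t ^ α * (1 + t) ^ m with hF
  set F' : ℝ → ℝ := fun t =>
    α * (Real.exp (-x * t) * t ^ (α - 1) * (1 + t) ^ m)
      + m * (Real.exp (-x * t) * t ^ α * (1 + t) ^ (m - 1))
      - x * (Real.exp (-x * t) * t ^ α * (1 + t) ^ m) with hF'
  have hderiv : ∀ t ∈ Set.Ioi (0:ℝ), HasDerivAt F (F' t) t := by
    intro t ht
    have ht0 : (0:ℝ) < t := ht
    have h1 : (0:ℝ) < 1 + t := by linarith
    have d1 : HasDerivAt (fun t : ℝ => Real.exp (-x * t)) (-x * Real.exp (-x * t)) t := by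
      simpa [Function.comp_def, mul_comm] using (Real.hasDerivAt_exp (-x * t)).comp t
        ((hasDerivAt_id t).const_mul (-x))
    have d2 : HasDerivAt (fun t : ℝ => t ^ α) (α * t ^ (α - 1)) t :=
      Real.hasDerivAt_rpow_const (Or.inl (ne_of_gt ht0))
    have d3 : HasDerivAt (fun t : ℝ => (1 + t) ^ m) (m * (1 + t) ^ (m - 1)) t := by
      have := (Real.hasDerivAt_rpow_const (p := m) (Or.inl (ne_of_gt h1))).comp t
        ((hasDerivAt_id t).const_add 1)
      simpa [Function.comp_def] using this
    have : HasDerivAt F _ t := (d1.mul d2).mul d3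
    convert this using 1
    simp only [hF', Pi.mul_apply]; ring
  have hint : IntegrableOn F' (Set.Ioi (0:ℝ)) := by
    apply Integrable.sub ?_ ((integ hx (by linarith) hm).const_mul x)
    exact Integrable.add ((integ hx (by linarith) hm).const_mul α)
      ((integ hx (by linarith) (by linarith)).const_mul m)
  have hcont : ContinuousWithinAt F (Set.Ici (0:ℝ)) 0 := by
    apply ContinuousWithinAt.mul (ContinuousWithinAt.mul ?_ ?_) ?_
    · exact (Real.continuous_exp.comp (continuous_const.mul continuous_id)).continuousAt.continuousWithinAt
    · exact (Real.continuousAt_rpow_const 0 α (Or.inr hα.le)).continuousWithinAt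
    · refine ContinuousAt.continuousWithinAt ?_
      exact ContinuousAt.comp (Real.continuousAt_rpow_const _ m (by norm_num))
        (continuous_const.add continuous_id).continuousAt
  have htop : Tendsto F atTop (nhds 0) := by
    refine squeeze_zero_norm' ?_ (tendsto_rpow_mul_exp_neg_mul_atTop_nhds_zero α x hx)
    · filter_upwards [eventually_gt_atTop (0:ℝ)] with t ht
      have h1 : (0:ℝ) < 1 + t := by linarith
      have hb : (1 + t) ^ m ≤ 1 := Real.rpow_le_one_of_one_le_of_nonpos (by linarith) hm
      have hb0 : 0 ≤ (1 + t) ^ m := (Real.rpow_pos_of_pos h1 m).le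
      rw [Real.norm_eq_abs, abs_of_nonneg (by positivity)]
      calc Real.exp (-x * t) * t ^ α * (1 + t) ^ m ≤ Real.exp (-x * t) * t ^ α * 1 :=
            mul_le_mul_of_nonneg_left hb (by positivity)
        _ = t ^ α * Real.exp (-x * t) := by ring
  have key : ∫ t in Set.Ioi (0:ℝ), F' t = 0 - F 0 :=
    integral_Ioi_of_hasDerivAt_of_tendsto hcont hderiv hint htop
  have hF0 : F 0 = 0 := by
    simp [hF, Real.zero_rpow (ne_of_gt hα)]
  rw [hF0, sub_zero] at key
  have i1 : IntegrableOn (fun t : ℝ => α * (Real.exp (-x * t) * t ^ (α - 1) * (1 + t) ^ m)) (Set.Ioi 0) :=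
    (integ hx (by linarith) hm).const_mul α
  have i2 : IntegrableOn (fun t : ℝ => m * (Real.exp (-x * t) * t ^ α * (1 + t) ^ (m - 1))) (Set.Ioi 0) :=
    (integ hx (by linarith) (by linarith)).const_mul m
  have i3 : IntegrableOn (fun t : ℝ => x * (Real.exp (-x * t) * t ^ α * (1 + t) ^ m)) (Set.Ioi 0) :=
    (integ hx (by linarith) hm).const_mul x
  have i12 : IntegrableOn (fun t : ℝ => α * (Real.exp (-x * t) * t ^ (α - 1) * (1 + t) ^ m)
      + m * (Real.exp (-x * t) * t ^ α * (1 + t) ^ (m - 1))) (Set.Ioi 0) := i1.add i2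
  have expand : ∫ t in Set.Ioi (0:ℝ), F' t
      = α * (∫ t in Set.Ioi (0:ℝ), Real.exp (-x * t) * t ^ (α - 1) * (1 + t) ^ m)
        + m * (∫ t in Set.Ioi (0:ℝ), Real.exp (-x * t) * t ^ α * (1 + t) ^ (m - 1))
        - x * ∫ t in Set.Ioi (0:ℝ), Real.exp (-x * t) * t ^ α * (1 + t) ^ m := by
    rw [hF']
    rw [integral_sub i12 i3, integral_add i1 i2,
        integral_const_mul, integral_const_mul, integral_const_mul]
  rw [expand] at key
  linarith

lemma cs {x α m : ℝ} (hx : 0 < x) (hα : 0 < α) (hm : m + 1 ≤ 0) :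
    (∫ t in Set.Ioi (0:ℝ), Real.exp (-x * t) * t ^ α * (1 + t) ^ m) ^ 2
      ≤ (∫ t in Set.Ioi (0:ℝ), Real.exp (-x * t) * t ^ (α + 1) * (1 + t) ^ (m - 1))
        * ∫ t in Set.Ioi (0:ℝ), Real.exp (-x * t) * t ^ (α - 1) * (1 + t) ^ (m + 1) := by
  set N := ∫ t in Set.Ioi (0:ℝ), Real.exp (-x * t) * t ^ α * (1 + t) ^ m with hN
  set W := ∫ t in Set.Ioi (0:ℝ), Real.exp (-x * t) * t ^ (α + 1) * (1 + t) ^ (m - 1) with hW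
  set M := ∫ t in Set.Ioi (0:ℝ), Real.exp (-x * t) * t ^ (α - 1) * (1 + t) ^ (m + 1) with hM
  have hWpos : 0 < W := ipos hx (by linarith) (by linarith)
  set l : ℝ := N / W with hl
  have key : 2 * l * N ≤ l ^ 2 * W + M := by
    have mono : ∫ t in Set.Ioi (0:ℝ), 2 * l * (Real.exp (-x * t) * t ^ α * (1 + t) ^ m)
        ≤ ∫ t in Set.Ioi (0:ℝ), (l ^ 2 * (Real.exp (-x * t) * t ^ (α + 1) * (1 + t) ^ (m - 1))
            + Real.exp (-x * t) * t ^ (α - 1) * (1 + t) ^ (m + 1)) := by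
      refine setIntegral_mono_on ((integ hx (by linarith) (by linarith)).const_mul _)
        (((integ hx (by linarith) (by linarith)).const_mul _).add
          (integ hx (by linarith) (by linarith))) measurableSet_Ioi fun t ht => ?_
      have ht0 : (0:ℝ) < t := ht
      have h1 : (0:ℝ) < 1 + t := by linarith
      set n := Real.exp (-x * t) * t ^ α * (1 + t) ^ m with hn
      set w := Real.exp (-x * t) * t ^ (α + 1) * (1 + t) ^ (m - 1) with hw
      set mm := Real.exp (-x * t) * t ^ (α - 1) * (1 + t) ^ (m + 1) with hmm
      have a1 : t ^ (α + 1) = t ^ α * t := Real.rpow_add_one (ne_of_gt ht0) α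
      have a2 : t ^ (α - 1) = t ^ α / t := by
        rw [Real.rpow_sub ht0, Real.rpow_one]
      have b1 : (1 + t) ^ (m - 1) = (1 + t) ^ m / (1 + t) := by
        rw [Real.rpow_sub h1, Real.rpow_one]
      have b2 : (1 + t) ^ (m + 1) = (1 + t) ^ m * (1 + t) := Real.rpow_add_one (ne_of_gt h1) m
      have hsq : n ^ 2 = w * mm := by
        rw [hn, hw, hmm, a1, a2, b1, b2]
        field_simp
      have hw0 : 0 ≤ w := by rw [hw]; positivity
      have hmm0 : 0 ≤ mm := by rw [hmm]; positivity
      have hn0 : 0 ≤ n := by rw [hn]; positivity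
      clear_value n w mm
      show 2 * l * n ≤ l ^ 2 * w + mm
      rcases eq_or_lt_of_le hw0 with hw' | hw'
      · have : n = 0 := by nlinarith [hsq, sq_nonneg n]
        rw [this, ← hw']
        nlinarith [hmm0]
      · have h2 := sq_nonneg (l * w - n)
        nlinarith [h2, hsq, hw', hmm0]
    rw [integral_const_mul] at mono
    rw [integral_add ((integ hx (by linarith) (by linarith)).const_mul _)
        (integ hx (by linarith) (by linarith)), integral_const_mul] at mono
    exact mono
  rw [hl] at key
  have h3 : (N / W) ^ 2 * W = N ^ 2 / W := by field_simp
  have h4 : 2 * (N / W) * N = 2 * (N ^ 2 / W) := by ring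
  rw [h3, h4] at key
  have h5 : N ^ 2 / W ≤ M := by linarith
  calc N ^ 2 = N ^ 2 / W * W := by field_simp
    _ ≤ M * W := mul_le_mul_of_nonneg_right h5 hWpos.le
    _ = W * M := by ring

private lemma junk_zero (a c x : ℝ) (ha : 0 < a) (ha1 : a < 1) (hc : c < 1) (hx : 0 < x) :
    tricomiPsi (a - 1) (c - 1) x = 0 := by
  rw [tricomiPsi]
  have hni : ¬ IntegrableOn
      (fun t : ℝ => Real.exp (-x * t) * t ^ (a - 1 - 1) * (1 + t) ^ (c - 1 - (a - 1) - 1))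
      (Set.Ioi 0) := by
    intro h
    have hsub : IntegrableOn
        (fun t : ℝ => Real.exp (-x * t) * t ^ (a - 1 - 1) * (1 + t) ^ (c - 1 - (a - 1) - 1))
        (Set.Ioo 0 1) := h.mono_set Set.Ioo_subset_Ioi_self
    set C : ℝ := Real.exp (-x) * 2 ^ (c - 1 - (a - 1) - 1) with hC
    have hCpos : 0 < C := by rw [hC]; positivity
    have hg : IntegrableOn (fun t : ℝ => C * t ^ (a - 1 - 1)) (Set.Ioo (0:ℝ) 1) := by
      refine Integrable.mono hsub ?_ ?_
      · refine ContinuousOn.aestronglyMeasurable ?_ measurableSet_Ioo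
        refine continuousOn_const.mul fun t ht => ?_
        exact (Real.continuousAt_rpow_const t _ (Or.inl (ne_of_gt ht.1))).continuousWithinAt
      · rw [ae_restrict_iff' measurableSet_Ioo]
        refine ae_of_all _ fun t ht => ?_
        have ht0 : (0:ℝ) < t := ht.1
        have ht1 : t < 1 := ht.2
        have h1 : (0:ℝ) < 1 + t := by linarith
        have e1 : Real.exp (-x) ≤ Real.exp (-x * t) := by
          apply Real.exp_le_exp.2; nlinarith
        have e2 : (2:ℝ) ^ (c - 1 - (a - 1) - 1) ≤ (1 + t) ^ (c - 1 - (a - 1) - 1) :=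
          Real.rpow_le_rpow_of_nonpos h1 (by linarith) (by linarith)
        rw [Real.norm_eq_abs, Real.norm_eq_abs, abs_of_nonneg (by positivity),
          abs_of_nonneg (by positivity)]
        calc C * t ^ (a - 1 - 1)
            = (Real.exp (-x) * t ^ (a - 1 - 1)) * 2 ^ (c - 1 - (a - 1) - 1) := by rw [hC]; ring
          _ ≤ (Real.exp (-x * t) * t ^ (a - 1 - 1)) * (1 + t) ^ (c - 1 - (a - 1) - 1) := by
              apply mul_le_mul ?_ e2 (by positivity) (by positivity)
              exact mul_le_mul_of_nonneg_right e1 (by positivity)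
    have h3 : IntegrableOn (fun t : ℝ => t ^ (a - 1 - 1)) (Set.Ioo (0:ℝ) 1) := by
      have h4 := hg.const_mul C⁻¹
      refine IntegrableOn.congr_fun h4 (fun t ht => ?_) measurableSet_Ioo
      field_simp
    rw [intervalIntegral.integrableOn_Ioo_rpow_iff one_pos] at h3
    linarith
  rw [MeasureTheory.integral_undef hni, mul_zero]

private lemma main_case (a c x : ℝ) (ha : 1 < a) (hc : c < 1) (hx : 0 < x) :
    (tricomiPsi a c x) ^ 2 - tricomiPsi (a - 1) (c - 1) x * tricomiPsi (a + 1) (c + 1) x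
      > ((c - a - 1) / x ^ 2) * (tricomiPsi a c x) ^ 2 := by
  have ha0 : 0 < a := by linarith
  -- relations
  have R1 := ibp (x := x) (α := a - 1) (m := c - a - 1) hx (by linarith) (by linarith)
  rw [show a - 1 - 1 = a - 2 from by ring, show c - a - 1 - 1 = c - a - 2 from by ring] at R1
  have R3 := ibp (x := x) (α := a) (m := c - a - 1) hx (by linarith) (by linarith)
  rw [show c - a - 1 - 1 = c - a - 2 from by ring, show a - 1 = a - 1 from rfl] at R3
  have R2 := ibp (x := x) (α := a) (m := c - a - 2) hx (by linarith) (by linarith)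
  rw [show c - a - 2 - 1 = c - a - 3 from by ring] at R2
  have S1 := split (x := x) (α := a - 1) (m := c - a - 1) hx (by linarith) (by linarith)
  rw [show c - a - 1 - 1 = c - a - 2 from by ring, show a - 1 + 1 = a from by ring] at S1
  have S2 := split (x := x) (α := a) (m := c - a - 2) hx (by linarith) (by linarith)
  rw [show c - a - 2 - 1 = c - a - 3 from by ring] at S2
  have CS := cs (x := x) (α := a) (m := c - a - 2) hx (by linarith) (by linarith)
  rw [show c - a - 2 - 1 = c - a - 3 from by ring, show c - a - 2 + 1 = c - a - 1 from by ring] at CS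
  have hMpos := ipos (x := x) (α := a - 1) (m := c - a - 1) hx (by linarith) (by linarith)
  have hMmpos := ipos (x := x) (α := a - 2) (m := c - a - 1) hx (by linarith) (by linarith)
  have hMppos := ipos (x := x) (α := a) (m := c - a - 1) hx (by linarith) (by linarith)
  have hPpos := ipos (x := x) (α := a - 1) (m := c - a - 2) hx (by linarith) (by linarith)
  have hNpos := ipos (x := x) (α := a) (m := c - a - 2) hx (by linarith) (by linarith)
  have hWpos := ipos (x := x) (α := a + 1) (m := c - a - 3) hx (by linarith) (by linarith)
  -- unfold goal
  rw [tricomiPsi, tricomiPsi, tricomiPsi,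
    show a - 1 - 1 = a - 2 from by ring, show c - 1 - (a - 1) - 1 = c - a - 1 from by ring,
    show a + 1 - 1 = a from by ring, show c + 1 - (a + 1) - 1 = c - a - 1 from by ring]
  set M := ∫ t in Set.Ioi (0:ℝ), Real.exp (-x * t) * t ^ (a - 1) * (1 + t) ^ (c - a - 1) with hMdef
  set Mm := ∫ t in Set.Ioi (0:ℝ), Real.exp (-x * t) * t ^ (a - 2) * (1 + t) ^ (c - a - 1) with hMmdef
  set Mp := ∫ t in Set.Ioi (0:ℝ), Real.exp (-x * t) * t ^ a * (1 + t) ^ (c - a - 1) with hMpdef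
  set P := ∫ t in Set.Ioi (0:ℝ), Real.exp (-x * t) * t ^ (a - 1) * (1 + t) ^ (c - a - 2) with hPdef
  set N := ∫ t in Set.Ioi (0:ℝ), Real.exp (-x * t) * t ^ a * (1 + t) ^ (c - a - 2) with hNdef
  set W := ∫ t in Set.Ioi (0:ℝ), Real.exp (-x * t) * t ^ (a + 1) * (1 + t) ^ (c - a - 3) with hWdef
  set N2 := ∫ t in Set.Ioi (0:ℝ), Real.exp (-x * t) * t ^ a * (1 + t) ^ (c - a - 3) with hN2def
  clear_value M Mm Mp P N W N2
  clear hMdef hMmdef hMpdef hPdef hNdef hWdef hN2def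
  -- algebra
  have hM' : M = P + N := S1
  have hH2 : 0 ≤ x * N ^ 2 + (x + 2 - c) * N * P - a * P ^ 2 := by
    have e : x * N ^ 2 + (x + 2 - c) * N * P - a * P ^ 2
        = (2 + a - c) * (W * M - N ^ 2) := by
      linear_combination (-M) * R2 + (-M) * (c - a - 2) * S2
        + (a * P - (x + 2 + a - c) * N) * hM'
    rw [e]
    have : 0 ≤ W * M - N ^ 2 := by nlinarith [CS]
    have h2c : 0 ≤ 2 + a - c := by linarith
    positivity
  have hG : 0 < (a + x ^ 2) * N ^ 2 + (2 * a + x ^ 2 + x * (1 - c)) * N * P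
      + a * (1 - x) * P ^ 2 := by
    rcases le_or_gt 1 x with hx1 | hx1
    · have h1 : 0 ≤ (x - 1) * (x * N ^ 2 + (x + 2 - c) * N * P - a * P ^ 2) :=
        mul_nonneg (by linarith) hH2
      nlinarith [mul_pos hNpos hPpos, mul_pos hNpos hNpos, mul_pos ha0 (mul_pos hNpos hNpos),
        mul_pos hx (mul_pos hNpos hNpos)]
    · nlinarith [mul_pos hNpos hPpos, mul_pos hNpos hNpos, mul_pos hPpos hPpos,
        mul_pos ha0 (mul_pos hPpos hPpos)]
  have key : a * (x ^ 2 + (1 + a - c)) * M ^ 2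
      > x * ((x * M + (1 + a - c) * P) * (a * M - (1 + a - c) * N)) := by
    have e2 : a * (x ^ 2 + (1 + a - c)) * M ^ 2
        - x * ((x * M + (1 + a - c) * P) * (a * M - (1 + a - c) * N))
        = (1 + a - c) * ((a + x ^ 2) * N ^ 2 + (2 * a + x ^ 2 + x * (1 - c)) * N * P
            + a * (1 - x) * P ^ 2) := by
      rw [hM']; ring
    have h3 : 0 < (1 + a - c) * ((a + x ^ 2) * N ^ 2 + (2 * a + x ^ 2 + x * (1 - c)) * N * P
        + a * (1 - x) * P ^ 2) := mul_pos (by linarith) hG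
    linarith [e2, h3]
  have hMm : (a - 1) * Mm = x * M + (1 + a - c) * P := by linarith [R1]
  have hMp : x * Mp = a * M - (1 + a - c) * N := by linarith [R3]
  have key2 : a * (x ^ 2 + (1 + a - c)) * M ^ 2 > (a - 1) * x ^ 2 * (Mm * Mp) := by
    have e4 : (a - 1) * x ^ 2 * (Mm * Mp)
        = x * (((a - 1) * Mm) * (x * Mp)) := by ring
    rw [hMm, hMp] at e4
    linarith [key, e4]
  -- Gamma manipulation
  have hg1 : 0 < Real.Gamma (a - 1) := Real.Gamma_pos_of_pos (by linarith)
  have hga : Real.Gamma a = (a - 1) * Real.Gamma (a - 1) := by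
    have := Real.Gamma_add_one (s := a - 1) (by intro h; linarith [h])
    rw [show a - 1 + 1 = a from by ring] at this
    exact this
  have hgp : Real.Gamma (a + 1) = a * Real.Gamma a := Real.Gamma_add_one (ne_of_gt ha0)
  rw [gt_iff_lt, ← sub_pos]
  have hEq : (1 / Real.Gamma a * M) ^ 2
      - 1 / Real.Gamma (a - 1) * Mm * (1 / Real.Gamma (a + 1) * Mp)
      - (c - a - 1) / x ^ 2 * (1 / Real.Gamma a * M) ^ 2
      = (a * (x ^ 2 + (1 + a - c)) * M ^ 2 - (a - 1) * x ^ 2 * (Mm * Mp))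
        / (a * (a - 1) ^ 2 * (Real.Gamma (a - 1)) ^ 2 * x ^ 2) := by
    rw [hga, hgp, hga]
    have h1 : a - 1 ≠ 0 := by intro h; linarith [h]
    have h2 : Real.Gamma (a - 1) ≠ 0 := ne_of_gt hg1
    have h3 : a ≠ 0 := ne_of_gt ha0
    have h4 : x ≠ 0 := ne_of_gt hx
    field_simp
    ring
  rw [hEq]
  have h5 : (0:ℝ) < a - 1 := by linarith
  exact div_pos (by linarith [key2]) (by positivity)


end AuxLemmas

theorem turan_lower_shift_both (a c x : ℝ) (ha : 0 < a) (hc : c < 1) (hx : 0 < x) :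
    (tricomiPsi a c x) ^ 2 - tricomiPsi (a - 1) (c - 1) x * tricomiPsi (a + 1) (c + 1) x
      > ((c - a - 1) / x ^ 2) * (tricomiPsi a c x) ^ 2 := by
  have hψpos : 0 < tricomiPsi a c x := by
    rw [tricomiPsi]
    exact mul_pos (div_pos one_pos (Real.Gamma_pos_of_pos ha))
      (ipos hx (by linarith) (by linarith))
  rcases lt_trichotomy a 1 with h1 | h1 | h1
  · have hzero : tricomiPsi (a - 1) (c - 1) x = 0 := junk_zero a c x ha h1 hc hx
    rw [hzero, zero_mul, sub_zero]
    have hd : (c - a - 1) / x ^ 2 < 0 := div_neg_of_neg_of_pos (by linarith) (by positivity)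
    have := mul_neg_of_neg_of_pos hd (pow_pos hψpos 2)
    nlinarith [pow_pos hψpos 2]
  · have hzero : tricomiPsi (a - 1) (c - 1) x = 0 := by
      rw [tricomiPsi, h1, show (1:ℝ) - 1 = 0 from by ring, Real.Gamma_zero]
      simp
    rw [hzero, zero_mul, sub_zero]
    have hd : (c - a - 1) / x ^ 2 < 0 := div_neg_of_neg_of_pos (by linarith) (by positivity)
    have := mul_neg_of_neg_of_pos hd (pow_pos hψpos 2)
    nlinarith [pow_pos hψpos 2]
  · exact main_case a c x h1 hc hx
end

section
/- For a > 0, c < 1, and x > 0, define Δ(x) = ψ(a,c,x)² − ψ(a−1,c−1,x)·ψ(a+1,c+1,x). Then Δ(x) > −(1/(2x))·ψ(a,c,x)². -/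
open MeasureTheory Real

namespace TuranAux

open Set Filter

lemma integrable_kernel (x p q : ℝ) (hx : 0 < x) (hp : -1 < p) (hq : q ≤ 0) :
    IntegrableOn (fun t : ℝ => Real.exp (-x * t) * t ^ p * (1 + t) ^ q) (Set.Ioi 0) := by
  have base : IntegrableOn (fun t : ℝ => t ^ p * Real.exp (-x * t)) (Set.Ioi 0) := by
    refine (integrableOn_rpow_mul_exp_neg_mul_rpow hp zero_lt_one hx).congr_fun (fun t ht => ?_)
      measurableSet_Ioi
    simp only [Real.rpow_one]
  refine base.mono' ?_ ?_
  · apply ContinuousOn.aestronglyMeasurable ?_ measurableSet_Ioi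
    apply ContinuousOn.mul
    apply ContinuousOn.mul
    · exact (Real.continuous_exp.comp (continuous_const.mul continuous_id)).continuousOn
    · intro t ht
      exact (Real.continuousAt_rpow_const t p (Or.inl (ne_of_gt ht))).continuousWithinAt
    · intro t ht
      exact (((continuousAt_const.add continuousAt_id).rpow_const
        (Or.inl (ne_of_gt (show (0:ℝ) < 1 + t by simp only [mem_Ioi] at ht; linarith)))) : ContinuousAt _ t).continuousWithinAt
  · filter_upwards [ae_restrict_mem measurableSet_Ioi] with t ht
    simp only [mem_Ioi] at ht
    have h1 : (0:ℝ) ≤ Real.exp (-x * t) * t ^ p := by positivity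
    have h2 : (1 + t) ^ q ≤ 1 := Real.rpow_le_one_of_one_le_of_nonpos (by linarith) hq
    have h3 : (0:ℝ) ≤ (1 + t) ^ q := Real.rpow_nonneg (by linarith) q
    rw [Real.norm_eq_abs, abs_of_nonneg (by positivity)]
    calc Real.exp (-x * t) * t ^ p * (1 + t) ^ q ≤ Real.exp (-x * t) * t ^ p * 1 :=
          mul_le_mul_of_nonneg_left h2 h1
    _ = t ^ p * Real.exp (-x * t) := by ring

lemma pos_kernel (x p q : ℝ) (hx : 0 < x) (hp : -1 < p) (hq : q ≤ 0) :
    0 < ∫ t in Set.Ioi (0:ℝ), Real.exp (-x * t) * t ^ p * (1 + t) ^ q := by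
  have hnn : 0 ≤ᵐ[volume.restrict (Set.Ioi (0:ℝ))]
      (fun t : ℝ => Real.exp (-x * t) * t ^ p * (1 + t) ^ q) := by
    filter_upwards [ae_restrict_mem measurableSet_Ioi] with t ht
    simp only [mem_Ioi] at ht
    positivity
  rw [setIntegral_pos_iff_support_of_nonneg_ae hnn (integrable_kernel x p q hx hp hq)]
  have hsub : Set.Ioi (0:ℝ) ⊆ Function.support (fun t : ℝ =>
      Real.exp (-x * t) * t ^ p * (1 + t) ^ q) ∩ Set.Ioi 0 := by
    intro t ht
    simp only [mem_Ioi] at ht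
    refine ⟨?_, ht⟩
    simp only [Function.mem_support]
    positivity
  calc (0:ENNReal) < volume (Set.Ioi (0:ℝ)) := by simp [Real.volume_Ioi]
  _ ≤ _ := measure_mono hsub

lemma tendsto_kernel (x r s : ℝ) (hx : 0 < x) (hr : 0 ≤ r) :
    Tendsto (fun t : ℝ => Real.exp (-x * t) * t ^ r * (1 + t) ^ s) atTop (nhds 0) := by
  have key : Tendsto (fun t : ℝ => Real.exp x * ((1 + t) ^ (r + s) * Real.exp (-x * (1 + t))))
      atTop (nhds 0) := by
    rw [show (0:ℝ) = Real.exp x * 0 by ring]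
    apply Tendsto.const_mul
    exact (tendsto_rpow_mul_exp_neg_mul_atTop_nhds_zero (r + s) x hx).comp
      (tendsto_atTop_add_const_left atTop 1 tendsto_id)
  apply squeeze_zero' ?_ ?_ key
  · filter_upwards [eventually_ge_atTop (0:ℝ)] with t ht
    positivity
  · filter_upwards [eventually_ge_atTop (0:ℝ)] with t ht
    have h1 : t ^ r ≤ (1 + t) ^ r := Real.rpow_le_rpow ht (by linarith) hr
    have h2 : (0:ℝ) < 1 + t := by linarith
    have h3 : (1 + t) ^ (r + s) = (1 + t) ^ r * (1 + t) ^ s := Real.rpow_add h2 r s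
    have h4 : Real.exp x * Real.exp (-x * (1 + t)) = Real.exp (-x * t) := by
      rw [← Real.exp_add]; ring_nf
    calc Real.exp (-x * t) * t ^ r * (1 + t) ^ s
        ≤ Real.exp (-x * t) * (1 + t) ^ r * (1 + t) ^ s := by
          have h5 : Real.exp (-x * t) * t ^ r ≤ Real.exp (-x * t) * (1 + t) ^ r :=
            mul_le_mul_of_nonneg_left h1 (Real.exp_nonneg _)
          exact mul_le_mul_of_nonneg_right h5 (Real.rpow_nonneg h2.le s)
    _ = Real.exp x * ((1 + t) ^ (r + s) * Real.exp (-x * (1 + t))) := by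
          rw [h3, ← h4]; ring

lemma ibp (x r s : ℝ) (hx : 0 < x) (hr : 0 < r) (hs : s ≤ 0) :
    x * (∫ t in Set.Ioi (0:ℝ), Real.exp (-x * t) * t ^ r * (1 + t) ^ s)
      = r * (∫ t in Set.Ioi (0:ℝ), Real.exp (-x * t) * t ^ (r - 1) * (1 + t) ^ s)
        + s * (∫ t in Set.Ioi (0:ℝ), Real.exp (-x * t) * t ^ r * (1 + t) ^ (s - 1)) := by
  have hderiv : ∀ t ∈ Set.Ioi (0:ℝ), HasDerivAt
      (fun u : ℝ => Real.exp (-x * u) * u ^ r * (1 + u) ^ s)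
      ((-x) * (Real.exp (-x * t) * t ^ r * (1 + t) ^ s)
        + (r * (Real.exp (-x * t) * t ^ (r - 1) * (1 + t) ^ s)
          + s * (Real.exp (-x * t) * t ^ r * (1 + t) ^ (s - 1)))) t := by
    intro t ht
    simp only [mem_Ioi] at ht
    have hexp : HasDerivAt (fun u : ℝ => Real.exp (-x * u)) (Real.exp (-x * t) * (-x)) t := by
      simpa using ((hasDerivAt_id t).const_mul (-x)).exp
    have hpow : HasDerivAt (fun u : ℝ => u ^ r) (r * t ^ (r - 1)) t :=
      Real.hasDerivAt_rpow_const (Or.inl (ne_of_gt ht))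
    have hbase : HasDerivAt (fun u : ℝ => 1 + u) 1 t := by
      simpa using (hasDerivAt_id t).const_add (1:ℝ)
    have hpow2 : HasDerivAt (fun u : ℝ => (1 + u) ^ s) (s * (1 + t) ^ (s - 1)) t := by
      have h := (Real.hasDerivAt_rpow_const (x := 1 + t) (p := s)
        (Or.inl (by positivity))).comp t hbase
      rw [mul_one] at h; exact h
    have h := (hexp.fun_mul hpow).fun_mul hpow2
    refine h.congr_deriv ?_
    ring
  have i1 : IntegrableOn (fun t : ℝ =>
      (-x) * (Real.exp (-x * t) * t ^ r * (1 + t) ^ s)) (Set.Ioi 0) :=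
    (integrable_kernel x r s hx (by linarith) hs).const_mul (-x)
  have i2 : IntegrableOn (fun t : ℝ =>
      r * (Real.exp (-x * t) * t ^ (r - 1) * (1 + t) ^ s)) (Set.Ioi 0) :=
    (integrable_kernel x (r - 1) s hx (by linarith) hs).const_mul r
  have i3 : IntegrableOn (fun t : ℝ =>
      s * (Real.exp (-x * t) * t ^ r * (1 + t) ^ (s - 1))) (Set.Ioi 0) :=
    (integrable_kernel x r (s - 1) hx (by linarith) (by linarith)).const_mul s
  have i23 : IntegrableOn (fun t : ℝ =>
      r * (Real.exp (-x * t) * t ^ (r - 1) * (1 + t) ^ s)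
        + s * (Real.exp (-x * t) * t ^ r * (1 + t) ^ (s - 1))) (Set.Ioi 0) := by
    exact i2.add i3
  have hint : IntegrableOn (fun t : ℝ =>
      (-x) * (Real.exp (-x * t) * t ^ r * (1 + t) ^ s)
        + (r * (Real.exp (-x * t) * t ^ (r - 1) * (1 + t) ^ s)
          + s * (Real.exp (-x * t) * t ^ r * (1 + t) ^ (s - 1)))) (Set.Ioi 0) := by
    exact i1.add i23
  have hcont : ContinuousWithinAt
      (fun u : ℝ => Real.exp (-x * u) * u ^ r * (1 + u) ^ s) (Set.Ici 0) 0 := by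
    apply ContinuousWithinAt.mul
    apply ContinuousWithinAt.mul
    · exact (Real.continuous_exp.comp (continuous_const.mul continuous_id)).continuousWithinAt
    · exact (Real.continuousAt_rpow_const 0 r (Or.inr hr.le)).continuousWithinAt
    · have hb : ContinuousAt (fun u : ℝ => 1 + u) 0 := continuousAt_const.add continuousAt_id
      have hc3 : ContinuousAt (fun u : ℝ => (1 + u) ^ s) 0 :=
        hb.rpow_const (Or.inl (by norm_num))
      exact hc3.continuousWithinAt
  have htop : Tendsto (fun u : ℝ => Real.exp (-x * u) * u ^ r * (1 + u) ^ s) atTop (nhds 0) :=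
    tendsto_kernel x r s hx hr.le
  have heq := integral_Ioi_of_hasDerivAt_of_tendsto hcont hderiv hint htop
  have h0 : Real.exp (-x * 0) * (0:ℝ) ^ r * (1 + 0) ^ s = 0 := by
    rw [Real.zero_rpow (ne_of_gt hr)]
    ring
  rw [h0, sub_zero] at heq
  rw [integral_add i1 i23, integral_add i2 i3, integral_const_mul, integral_const_mul,
    integral_const_mul] at heq
  linarith

lemma split_kernel (x p q : ℝ) (hx : 0 < x) (hp : -1 < p) (hq : q ≤ 0) :
    (∫ t in Set.Ioi (0:ℝ), Real.exp (-x * t) * t ^ (p + 1) * (1 + t) ^ (q - 1))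
      = (∫ t in Set.Ioi (0:ℝ), Real.exp (-x * t) * t ^ p * (1 + t) ^ q)
        - (∫ t in Set.Ioi (0:ℝ), Real.exp (-x * t) * t ^ p * (1 + t) ^ (q - 1)) := by
  rw [← integral_sub (integrable_kernel x p q hx hp hq)
    (integrable_kernel x p (q - 1) hx hp (by linarith))]
  apply setIntegral_congr_fun measurableSet_Ioi
  intro t ht
  simp only [mem_Ioi] at ht
  have h1 : (0:ℝ) < 1 + t := by linarith
  have e1 : t ^ (p + 1) = t ^ p * t := by
    rw [Real.rpow_add ht, Real.rpow_one]
  have e2 : (1 + t) ^ q = (1 + t) ^ (q - 1) * (1 + t) := by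
    rw [← Real.rpow_add_one (ne_of_gt h1), sub_add_cancel]
  show Real.exp (-x * t) * t ^ (p + 1) * (1 + t) ^ (q - 1)
      = Real.exp (-x * t) * t ^ p * (1 + t) ^ q - Real.exp (-x * t) * t ^ p * (1 + t) ^ (q - 1)
  rw [e1, e2]
  ring

lemma cs_kernel (x p q1 q2 m : ℝ) (hx : 0 < x) (hp : -1 < p) (hq1 : q1 ≤ 0) (hq2 : q2 ≤ 0)
    (hm : q1 + q2 = 2 * m) :
    (∫ t in Set.Ioi (0:ℝ), Real.exp (-x * t) * t ^ p * (1 + t) ^ m) ^ 2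
      ≤ (∫ t in Set.Ioi (0:ℝ), Real.exp (-x * t) * t ^ p * (1 + t) ^ q1)
        * (∫ t in Set.Ioi (0:ℝ), Real.exp (-x * t) * t ^ p * (1 + t) ^ q2) := by
  have hmle : m ≤ 0 := by linarith
  set IA := ∫ t in Set.Ioi (0:ℝ), Real.exp (-x * t) * t ^ p * (1 + t) ^ q1 with hIA
  set IB := ∫ t in Set.Ioi (0:ℝ), Real.exp (-x * t) * t ^ p * (1 + t) ^ m with hIB
  set IC := ∫ t in Set.Ioi (0:ℝ), Real.exp (-x * t) * t ^ p * (1 + t) ^ q2 with hIC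
  have hICpos : 0 < IC := pos_kernel x p q2 hx hp hq2
  set lam := IB / IC with hlam
  have hlamIC : lam * IC = IB := div_mul_cancel₀ IB (ne_of_gt hICpos)
  have hptwise : ∀ t ∈ Set.Ioi (0:ℝ),
      0 ≤ Real.exp (-x * t) * t ^ p * (1 + t) ^ q1
          - 2 * lam * (Real.exp (-x * t) * t ^ p * (1 + t) ^ m)
          + lam ^ 2 * (Real.exp (-x * t) * t ^ p * (1 + t) ^ q2) := by
    intro t ht
    simp only [mem_Ioi] at ht
    have h1t : (0:ℝ) < 1 + t := by linarith
    have f1pos : 0 < Real.exp (-x * t) * t ^ p * (1 + t) ^ q1 := by positivity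
    have f2pos : 0 < Real.exp (-x * t) * t ^ p * (1 + t) ^ q2 := by positivity
    have fmpos : 0 < Real.exp (-x * t) * t ^ p * (1 + t) ^ m := by positivity
    have hsq : (Real.exp (-x * t) * t ^ p * (1 + t) ^ m) ^ 2
        = (Real.exp (-x * t) * t ^ p * (1 + t) ^ q1)
          * (Real.exp (-x * t) * t ^ p * (1 + t) ^ q2) := by
      have hmm : (1 + t) ^ q1 * (1 + t) ^ q2 = (1 + t) ^ m * (1 + t) ^ m := by
        rw [← Real.rpow_add h1t, ← Real.rpow_add h1t, hm]
        ring_nf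
      linear_combination (-(Real.exp (-x * t) * t ^ p) ^ 2) * hmm
    have hprod : Real.sqrt (Real.exp (-x * t) * t ^ p * (1 + t) ^ q1)
        * Real.sqrt (Real.exp (-x * t) * t ^ p * (1 + t) ^ q2)
        = Real.exp (-x * t) * t ^ p * (1 + t) ^ m := by
      rw [← Real.sqrt_mul f1pos.le, ← hsq, Real.sqrt_sq fmpos.le]
    have e1 : lam * (Real.sqrt (Real.exp (-x * t) * t ^ p * (1 + t) ^ q1)
        * Real.sqrt (Real.exp (-x * t) * t ^ p * (1 + t) ^ q2))
        = lam * (Real.exp (-x * t) * t ^ p * (1 + t) ^ m) := by rw [hprod]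
    have e2 : lam ^ 2 * (Real.sqrt (Real.exp (-x * t) * t ^ p * (1 + t) ^ q2)) ^ 2
        = lam ^ 2 * (Real.exp (-x * t) * t ^ p * (1 + t) ^ q2) := by
      rw [Real.sq_sqrt f2pos.le]
    have e3 : (Real.sqrt (Real.exp (-x * t) * t ^ p * (1 + t) ^ q1)) ^ 2
        = Real.exp (-x * t) * t ^ p * (1 + t) ^ q1 := Real.sq_sqrt f1pos.le
    nlinarith [sq_nonneg (Real.sqrt (Real.exp (-x * t) * t ^ p * (1 + t) ^ q1)
        - lam * Real.sqrt (Real.exp (-x * t) * t ^ p * (1 + t) ^ q2)), e1, e2, e3]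
  have hintnn : 0 ≤ ∫ t in Set.Ioi (0:ℝ),
      (Real.exp (-x * t) * t ^ p * (1 + t) ^ q1
          - 2 * lam * (Real.exp (-x * t) * t ^ p * (1 + t) ^ m)
          + lam ^ 2 * (Real.exp (-x * t) * t ^ p * (1 + t) ^ q2)) :=
    setIntegral_nonneg measurableSet_Ioi hptwise
  have hsplit : (∫ t in Set.Ioi (0:ℝ),
      (Real.exp (-x * t) * t ^ p * (1 + t) ^ q1
          - 2 * lam * (Real.exp (-x * t) * t ^ p * (1 + t) ^ m)
          + lam ^ 2 * (Real.exp (-x * t) * t ^ p * (1 + t) ^ q2)))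
      = IA - 2 * lam * IB + lam ^ 2 * IC := by
    have j1 : IntegrableOn (fun t : ℝ => Real.exp (-x * t) * t ^ p * (1 + t) ^ q1
        - 2 * lam * (Real.exp (-x * t) * t ^ p * (1 + t) ^ m)) (Set.Ioi 0) := by
      exact (integrable_kernel x p q1 hx hp hq1).sub
        ((integrable_kernel x p m hx hp hmle).const_mul (2 * lam))
    have j2 : IntegrableOn (fun t : ℝ =>
        lam ^ 2 * (Real.exp (-x * t) * t ^ p * (1 + t) ^ q2)) (Set.Ioi 0) :=
      (integrable_kernel x p q2 hx hp hq2).const_mul (lam ^ 2)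
    rw [integral_add j1 j2,
      integral_sub (integrable_kernel x p q1 hx hp hq1)
        ((integrable_kernel x p m hx hp hmle).const_mul (2 * lam)),
      integral_const_mul, integral_const_mul]
  rw [hsplit] at hintnn
  have h1 : 0 ≤ (IA - 2 * lam * IB + lam ^ 2 * IC) * IC :=
    mul_nonneg hintnn hICpos.le
  have h2 : (lam * IC) * (lam * IC) = IB * IB := by rw [hlamIC]
  have h3 : IB * (lam * IC) = IB * IB := by rw [hlamIC]
  nlinarith [h1, h2, h3]

lemma coef_pos (a e x : ℝ) (ha : 1 < a) (hea : a < e) (hx : 0 < x) :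
    (a + 1) * (2 * e - a - 1) < (x + e) * ((x + e) + a + 1) := by
  nlinarith [sq_nonneg (2 * e - (a + 1)), sq_nonneg x, mul_pos hx hx,
    mul_pos hx (show (0:ℝ) < 2 * e + a + 1 by nlinarith)]

lemma step4 (a e x A G : ℝ) (ha : 1 < a) (hea : a < e) (hx : 0 < x) (hA : 0 < A) (hG : 0 < G)
    (hP : a ^ 2 * A ^ 2 + e * (a + 1) * G ^ 2 ≤ a * (x + a + 1 + e) * (A * G)) :
    a * (2 * e - a - 1) * A < 2 * e * (x + e) * G := by
  by_contra hcon
  push_neg at hcon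
  have hcoef : (a + 1) * (2 * e - a - 1) < (x + e) * ((x + e) + a + 1) := coef_pos a e x ha hea hx
  have he0 : (0:ℝ) < e := by linarith
  have t1 : 0 ≤ (2 * e * (x + e)) ^ 2
      * (a * (x + a + 1 + e) * (A * G) - a ^ 2 * A ^ 2 - e * (a + 1) * G ^ 2) :=
    mul_nonneg (sq_nonneg _) (by linarith)
  have t2 : 0 ≤ e * (a + 1) * (2 * e * (x + e) * G - a * (2 * e - a - 1) * A) ^ 2 :=
    mul_nonneg (by nlinarith) (sq_nonneg _)
  have t3 : 0 ≤ 2 * a * e * (((x + e) * ((x + e) + a + 1) - (a + 1) * (2 * e - a - 1))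
      * (A * (a * (2 * e - a - 1) * A - 2 * e * (x + e) * G))) := by
    apply mul_nonneg (by nlinarith)
    apply mul_nonneg (by linarith)
    exact mul_nonneg hA.le (by linarith)
  have hu : (0:ℝ) < x + e := by linarith
  have t4 : 0 < e * (a + 1) * (a ^ 2 * A ^ 2) * (((2 * e - a - 1) - (x + e)) ^ 2 + (x + e) ^ 2) := by
    apply mul_pos
    apply mul_pos (by nlinarith)
    · exact mul_pos (pow_pos (by linarith) 2) (pow_pos hA 2)
    · exact add_pos_of_nonneg_of_pos (sq_nonneg _) (pow_pos hu 2)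
  linarith [t1, t2, t3, t4]

lemma keyineq (a e x A G : ℝ) (ha : 1 < a) (hea : a < e) (hx : 0 < x) (hA : 0 < A) (hG : 0 < G)
    (hP : a ^ 2 * A ^ 2 + e * (a + 1) * G ^ 2 ≤ a * (x + a + 1 + e) * (A * G)) :
    0 < a * (2 * x + 1) * A ^ 2 - 2 * ((x + e) * A - e * G) * (a * A - e * G) := by
  have hs4 : a * (2 * e - a - 1) * A < 2 * e * (x + e) * G := step4 a e x A G ha hea hx hA hG hP
  have he0 : (0:ℝ) < e := by linarith
  have s1 : 0 ≤ 2 * e * (a * (x + a + 1 + e) * (A * G) - a ^ 2 * A ^ 2 - e * (a + 1) * G ^ 2) :=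
    mul_nonneg (by linarith) (by linarith)
  have s2 : 0 < A * (2 * e * (x + e) * G - a * (2 * e - a - 1) * A) :=
    mul_pos hA (by linarith)
  nlinarith [s1, s2, ha]

end TuranAux

set_option maxHeartbeats 1000000 in
theorem turan_lower_half (a c x : ℝ) (ha : 0 < a) (hc : c < 1) (hx : 0 < x) :
    (tricomiPsi a c x) ^ 2 - tricomiPsi (a - 1) (c - 1) x * tricomiPsi (a + 1) (c + 1) x
      > -(1 / (2 * x)) * (tricomiPsi a c x) ^ 2 := by
  have hΓa : 0 < Real.Gamma a := Real.Gamma_pos_of_pos ha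
  have hApos : 0 < ∫ t in Set.Ioi (0:ℝ), Real.exp (-x * t) * t ^ (a - 1) * (1 + t) ^ (c - a - 1) :=
    TuranAux.pos_kernel x (a - 1) (c - a - 1) hx (by linarith) (by linarith)
  have hpsi : 0 < tricomiPsi a c x := by
    unfold tricomiPsi
    exact mul_pos (by positivity) hApos
  have h2x : 0 < 1 / (2 * x) := by positivity
  have hp2 : 0 < tricomiPsi a c x ^ 2 := pow_pos hpsi 2
  rcases lt_trichotomy a 1 with h1 | h1 | h1
  · -- degenerate case a < 1 : the integral for ψ(a-1,c-1,x) diverges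
    have hzero : tricomiPsi (a - 1) (c - 1) x = 0 := by
      unfold tricomiPsi
      rw [MeasureTheory.integral_undef, mul_zero]
      intro hInt
      have hIO : IntegrableOn (fun t : ℝ =>
          Real.exp (-x * t) * t ^ (a - 1 - 1) * (1 + t) ^ (c - 1 - (a - 1) - 1))
          (Set.Ioi 0) := hInt
      have h2 : IntegrableOn (fun t : ℝ =>
          Real.exp (-x * t) * t ^ (a - 1 - 1) * (1 + t) ^ (c - 1 - (a - 1) - 1))
          (Set.Ioo 0 1) := hIO.mono_set Set.Ioo_subset_Ioi_self
      rw [show a - 1 - 1 = a - 2 by ring, show c - 1 - (a - 1) - 1 = c - a - 1 by ring] at h2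
      have h3 : IntegrableOn (fun t : ℝ => t ^ (a - 2)) (Set.Ioo 0 1) := by
        apply Integrable.mono' (h2.const_mul (Real.exp x * 2 ^ (a + 1 - c)))
        · apply ContinuousOn.aestronglyMeasurable ?_ measurableSet_Ioo
          intro t ht
          exact (Real.continuousAt_rpow_const t (a - 2)
            (Or.inl (ne_of_gt ht.1))).continuousWithinAt
        · filter_upwards [ae_restrict_mem measurableSet_Ioo] with t ht
          obtain ⟨ht0, ht1⟩ := ht
          have hl1 : Real.exp (-x) ≤ Real.exp (-x * t) := by
            apply Real.exp_le_exp.2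
            nlinarith
          have hl2 : (2:ℝ) ^ (c - a - 1) ≤ (1 + t) ^ (c - a - 1) :=
            Real.rpow_le_rpow_of_nonpos (by linarith) (by linarith) (by linarith)
          have hKey : (Real.exp x * 2 ^ (a + 1 - c)) * (Real.exp (-x) * 2 ^ (c - a - 1)) = 1 := by
            rw [show (Real.exp x * 2 ^ (a + 1 - c)) * (Real.exp (-x) * 2 ^ (c - a - 1))
                = (Real.exp x * Real.exp (-x)) * ((2:ℝ) ^ (a + 1 - c) * 2 ^ (c - a - 1)) by ring,
              ← Real.exp_add, ← Real.rpow_add (by norm_num : (0:ℝ) < 2),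
              show x + -x = 0 by ring, show a + 1 - c + (c - a - 1) = 0 by ring,
              Real.exp_zero, Real.rpow_zero, mul_one]
          have htp : (0:ℝ) ≤ t ^ (a - 2) := Real.rpow_nonneg ht0.le _
          rw [Real.norm_eq_abs, abs_of_nonneg htp]
          have hb1 : Real.exp (-x) * t ^ (a - 2) * (2:ℝ) ^ (c - a - 1)
              ≤ Real.exp (-x * t) * t ^ (a - 2) * (1 + t) ^ (c - a - 1) := by
            apply mul_le_mul
            · exact mul_le_mul_of_nonneg_right hl1 htp
            · exact hl2
            · positivity
            · positivity
          calc t ^ (a - 2)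
              = (Real.exp x * 2 ^ (a + 1 - c))
                * (Real.exp (-x) * t ^ (a - 2) * (2:ℝ) ^ (c - a - 1)) := by
                rw [show (Real.exp x * 2 ^ (a + 1 - c))
                    * (Real.exp (-x) * t ^ (a - 2) * (2:ℝ) ^ (c - a - 1))
                    = ((Real.exp x * 2 ^ (a + 1 - c)) * (Real.exp (-x) * 2 ^ (c - a - 1)))
                      * t ^ (a - 2) by ring, hKey, one_mul]
          _ ≤ (Real.exp x * 2 ^ (a + 1 - c))
                * (Real.exp (-x * t) * t ^ (a - 2) * (1 + t) ^ (c - a - 1)) := by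
                apply mul_le_mul_of_nonneg_left hb1 (by positivity)
      rw [intervalIntegral.integrableOn_Ioo_rpow_iff zero_lt_one] at h3
      linarith
    rw [hzero, zero_mul]
    nlinarith [mul_pos h2x hp2]
  · -- degenerate case a = 1 : Gamma 0 = 0
    subst h1
    have hzero : tricomiPsi (1 - 1) (c - 1) x = 0 := by
      unfold tricomiPsi
      rw [show (1:ℝ) - 1 = 0 by norm_num, Real.Gamma_zero]
      simp
    rw [hzero, zero_mul]
    nlinarith [mul_pos h2x hp2]
  · -- main case 1 < a
    have hs0 : c - a - 1 ≤ 0 := by linarith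
    have hBpos : 0 < ∫ t in Set.Ioi (0:ℝ), Real.exp (-x * t) * t ^ a * (1 + t) ^ (c - a - 1) :=
      TuranAux.pos_kernel x a (c - a - 1) hx (by linarith) hs0
    have hGpos : 0 < ∫ t in Set.Ioi (0:ℝ),
        Real.exp (-x * t) * t ^ a * (1 + t) ^ (c - a - 1 - 1) :=
      TuranAux.pos_kernel x a (c - a - 1 - 1) hx (by linarith) (by linarith)
    -- integration by parts identities
    have f1 := TuranAux.ibp x a (c - a - 1) hx (by linarith) hs0
    have f2 := TuranAux.ibp x (a + 1) (c - a - 1) hx (by linarith) hs0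
    rw [show a + 1 - 1 = a by ring] at f2
    have f3 := TuranAux.ibp x (a - 1) (c - a - 1) hx (by linarith) hs0
    have f4 := TuranAux.split_kernel x (a - 1) (c - a - 1) hx (by linarith) hs0
    rw [show a - 1 + 1 = a by ring] at f4
    have f5 := TuranAux.split_kernel x a (c - a - 1) hx (by linarith) hs0
    have f6 := TuranAux.split_kernel x a (c - a) hx (by linarith) (by linarith)
    have hCS := TuranAux.cs_kernel x a (c - a - 1 - 1) (c - a) (c - a - 1) hx (by linarith)
      (by linarith) (by linarith) (by ring)
    -- unfold the goal before abbreviating the integrals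
    unfold tricomiPsi
    rw [show c - 1 - (a - 1) - 1 = c - a - 1 by ring, show a + 1 - 1 = a by ring,
      show c + 1 - (a + 1) - 1 = c - a - 1 by ring]
    -- names
    set A := ∫ t in Set.Ioi (0:ℝ), Real.exp (-x * t) * t ^ (a - 1) * (1 + t) ^ (c - a - 1) with hA
    set B := ∫ t in Set.Ioi (0:ℝ), Real.exp (-x * t) * t ^ a * (1 + t) ^ (c - a - 1) with hB
    set C := ∫ t in Set.Ioi (0:ℝ), Real.exp (-x * t) * t ^ (a - 1 - 1) * (1 + t) ^ (c - a - 1)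
      with hCC
    set G := ∫ t in Set.Ioi (0:ℝ), Real.exp (-x * t) * t ^ a * (1 + t) ^ (c - a - 1 - 1) with hG
    set E := ∫ t in Set.Ioi (0:ℝ), Real.exp (-x * t) * t ^ (a + 1) * (1 + t) ^ (c - a - 1) with hE
    set S := ∫ t in Set.Ioi (0:ℝ), Real.exp (-x * t) * t ^ a * (1 + t) ^ (c - a) with hS
    set D := ∫ t in Set.Ioi (0:ℝ), Real.exp (-x * t) * t ^ (a - 1) * (1 + t) ^ (c - a - 1 - 1)
      with hD
    set H := ∫ t in Set.Ioi (0:ℝ), Real.exp (-x * t) * t ^ (a + 1) * (1 + t) ^ (c - a - 1 - 1)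
      with hH
    clear_value A B C G E S D H
    -- f1 : x * B = a * A + (c - a - 1) * G
    -- f2 : x * E = (a + 1) * B + (c - a - 1) * H
    -- f3 : x * A = (a - 1) * C + (c - a - 1) * D
    -- f4 : G = A - D
    -- f5 : H = B - G
    -- f6 : E = S - B
    -- hCS : B ^ 2 ≤ G * S
    have hxB : x * B = a * A - (a + 1 - c) * G := by linear_combination f1
    have hxE : x * E = c * B + (a + 1 - c) * G := by linear_combination f2 + (c - a - 1) * f5
    have hC1 : (a - 1) * C = (x + (a + 1 - c)) * A - (a + 1 - c) * G := by
      linear_combination -f3 + (a + 1 - c) * f4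
    have hSE : S = B + E := by linarith [f6]
    -- derive the parabola inequality hP
    have hGE : G * (x * E) = G * (c * B + (a + 1 - c) * G) := by rw [hxE]
    have hGB : G * (x * B) = G * (a * A - (a + 1 - c) * G) := by rw [hxB]
    have hBB : (x * B) ^ 2 = (a * A - (a + 1 - c) * G) ^ 2 := by rw [hxB]
    have hcs2 : x ^ 2 * B ^ 2 ≤ x ^ 2 * (G * S) := mul_le_mul_of_nonneg_left hCS (sq_nonneg x)
    have hchain : x ^ 2 * (G * S) = x * (G * (a * A - (a + 1 - c) * G))
        + c * (G * (a * A - (a + 1 - c) * G)) + x * ((a + 1 - c) * G ^ 2) := by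
      linear_combination x ^ 2 * G * hSE + x * hGB + x * hGE + c * hGB
    have hP0 : (a * A - (a + 1 - c) * G) ^ 2 ≤ x * (G * (a * A - (a + 1 - c) * G))
        + c * (G * (a * A - (a + 1 - c) * G)) + x * ((a + 1 - c) * G ^ 2) := by
      calc (a * A - (a + 1 - c) * G) ^ 2 = x ^ 2 * B ^ 2 := by rw [← hBB]; ring
      _ ≤ x ^ 2 * (G * S) := hcs2
      _ = _ := hchain
    have hP : a ^ 2 * A ^ 2 + (a + 1 - c) * (a + 1) * G ^ 2
        ≤ a * (x + a + 1 + (a + 1 - c)) * (A * G) := by nlinarith [hP0]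
    have hk := TuranAux.keyineq a (a + 1 - c) x A G h1 (by linarith) hx hApos hGpos hP
    have hsub : 2 * x * ((a - 1) * C) * B
        = 2 * ((x + (a + 1 - c)) * A - (a + 1 - c) * G) * (a * A - (a + 1 - c) * G) := by
      rw [← hC1, ← hxB]
      ring
    have keypos : 0 < a * (2 * x + 1) * A ^ 2 - 2 * x * ((a - 1) * C) * B := by
      rw [hsub]
      linarith [hk]
    -- Gamma function relations
    have hg1 : Real.Gamma (a + 1) = a * Real.Gamma a := Real.Gamma_add_one (ne_of_gt ha)
    have hg2 : Real.Gamma a = (a - 1) * Real.Gamma (a - 1) := by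
      have h := Real.Gamma_add_one (show a - 1 ≠ 0 by intro h; rw [sub_eq_zero] at h; linarith)
      rw [sub_add_cancel] at h
      exact h
    have hgpos : 0 < Real.Gamma (a - 1) := Real.Gamma_pos_of_pos (by linarith)
    -- final assembly
    have hane : a ≠ 0 := by linarith
    have ha1ne : a - 1 ≠ 0 := by intro h; rw [sub_eq_zero] at h; linarith
    have hgne : Real.Gamma (a - 1) ≠ 0 := ne_of_gt hgpos
    have hxne : (2:ℝ) * x ≠ 0 := by positivity
    rw [hg1, hg2]
    rw [gt_iff_lt, ← sub_pos]
    have hden : 0 < 2 * x * a * (a - 1) ^ 2 * Real.Gamma (a - 1) ^ 2 :=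
      mul_pos (mul_pos (mul_pos (by linarith) (by linarith)) (pow_pos (by linarith) 2))
        (pow_pos hgpos 2)
    have expand : (1 / ((a - 1) * Real.Gamma (a - 1)) * A) ^ 2
        - 1 / Real.Gamma (a - 1) * C * (1 / (a * ((a - 1) * Real.Gamma (a - 1))) * B)
        - (-(1 / (2 * x)) * (1 / ((a - 1) * Real.Gamma (a - 1)) * A) ^ 2)
        = (a * (2 * x + 1) * A ^ 2 - 2 * x * ((a - 1) * C) * B)
          / (2 * x * a * (a - 1) ^ 2 * Real.Gamma (a - 1) ^ 2) := by
      field_simp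
      ring
    rw [expand]
    exact div_pos keypos hden
end

section
/- For a > 0, c < 1, and x > 0, define Δₐ(x) = ψ(a,c,x)² − ψ(a−1,c,x)·ψ(a+1,c,x). Then Δₐ(x) > 0. -/
open MeasureTheory Real Set Filter Topology

noncomputable def Jx (x p q : ℝ) : ℝ :=
  ∫ t in Set.Ioi (0:ℝ), Real.exp (-x * t) * t ^ p * (1 + t) ^ q

lemma Jx_cont (x p q : ℝ) :
    ContinuousOn (fun t : ℝ => Real.exp (-x * t) * t ^ p * (1 + t) ^ q) (Set.Ioi 0) := by
  apply ContinuousOn.mul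
  · apply ContinuousOn.mul
    · exact (Real.continuous_exp.comp (continuous_const.mul continuous_id)).continuousOn
    · intro t ht
      exact (Real.continuousAt_rpow_const t p (Or.inl (ne_of_gt ht))).continuousWithinAt
  · apply ContinuousOn.rpow_const
    · exact (continuous_const.add continuous_id).continuousOn
    · intro t ht
      exact Or.inl (by simp only [mem_Ioi] at ht; positivity)

lemma Jx_integrable {x p : ℝ} (hx : 0 < x) (hp : -1 < p) (q : ℝ) :
    IntegrableOn (fun t : ℝ => Real.exp (-x * t) * t ^ p * (1 + t) ^ q) (Set.Ioi 0) := by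
  rw [← Set.Ioc_union_Ioi_eq_Ioi (zero_le_one : (0:ℝ) ≤ 1), integrableOn_union]
  constructor
  · -- on Ioc 0 1
    have hbase : IntegrableOn (fun t : ℝ => (2:ℝ) ^ |q| * t ^ p) (Set.Ioc 0 1) := by
      apply Integrable.const_mul
      have := intervalIntegral.intervalIntegrable_rpow' (a := 0) (b := 1) hp
      rwa [intervalIntegrable_iff_integrableOn_Ioc_of_le (zero_le_one : (0:ℝ) ≤ 1)] at this
    apply hbase.mono' (((Jx_cont x p q).mono (Set.Ioc_subset_Ioi_self)).aestronglyMeasurable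
      measurableSet_Ioc)
    rw [ae_restrict_iff' measurableSet_Ioc]
    filter_upwards with t ht
    obtain ⟨ht0, ht1⟩ := ht
    have h1t : (0:ℝ) < 1 + t := by linarith
    rw [Real.norm_eq_abs, abs_of_nonneg (by positivity)]
    have e1 : Real.exp (-x * t) ≤ 1 := by
      rw [Real.exp_le_one_iff]; nlinarith
    have e2 : (1 + t) ^ q ≤ 2 ^ |q| := by
      calc (1 + t) ^ q ≤ (1 + t) ^ |q| :=
            Real.rpow_le_rpow_of_exponent_le (by linarith) (le_abs_self q)
        _ ≤ 2 ^ |q| := Real.rpow_le_rpow (by positivity) (by linarith) (abs_nonneg q)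
    have hrp : (0:ℝ) ≤ t ^ p := by positivity
    calc Real.exp (-x * t) * t ^ p * (1 + t) ^ q ≤ 1 * t ^ p * (2 ^ |q|) := by
          apply mul_le_mul _ e2 (by positivity) (by positivity)
          apply mul_le_mul e1 le_rfl hrp zero_le_one
      _ = 2 ^ |q| * t ^ p := by ring
  · -- on Ioi 1
    have hbase : IntegrableOn (fun t : ℝ => (2:ℝ) ^ |q| * (t ^ (p + |q|) * Real.exp (-x * t)))
        (Set.Ioi 1) := by
      apply Integrable.const_mul
      apply IntegrableOn.mono_set _ (Set.Ioi_subset_Ioi zero_le_one)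
      have := integrableOn_rpow_mul_exp_neg_mul_rpow (p := 1) (s := p + |q|) (b := x)
        (by nlinarith [abs_nonneg q]) zero_lt_one hx
      apply this.congr_fun _ measurableSet_Ioi
      intro t ht
      simp [Real.rpow_one]
    apply hbase.mono' (((Jx_cont x p q).mono (Set.Ioi_subset_Ioi zero_le_one)).aestronglyMeasurable
      measurableSet_Ioi)
    rw [ae_restrict_iff' measurableSet_Ioi]
    filter_upwards with t ht
    rw [Set.mem_Ioi] at ht
    have ht0 : (0:ℝ) < t := lt_trans zero_lt_one ht
    have h1t : (0:ℝ) < 1 + t := by linarith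
    rw [Real.norm_eq_abs, abs_of_nonneg (by positivity)]
    have e2 : (1 + t) ^ q ≤ 2 ^ |q| * t ^ |q| := by
      calc (1 + t) ^ q ≤ (1 + t) ^ |q| :=
            Real.rpow_le_rpow_of_exponent_le (by linarith) (le_abs_self q)
        _ ≤ (2 * t) ^ |q| := Real.rpow_le_rpow (le_of_lt h1t) (by linarith) (abs_nonneg q)
        _ = 2 ^ |q| * t ^ |q| := Real.mul_rpow (by norm_num) ht0.le
    have e3 : t ^ p * t ^ |q| = t ^ (p + |q|) := (Real.rpow_add ht0 p |q|).symm
    calc Real.exp (-x * t) * t ^ p * (1 + t) ^ q ≤ Real.exp (-x * t) * t ^ p * (2 ^ |q| * t ^ |q|) := by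
          apply mul_le_mul_of_nonneg_left e2 (by positivity)
      _ = 2 ^ |q| * (t ^ p * t ^ |q| * Real.exp (-x * t)) := by ring
      _ = 2 ^ |q| * (t ^ (p + |q|) * Real.exp (-x * t)) := by rw [e3]

lemma Jx_pos {x p : ℝ} (hx : 0 < x) (hp : -1 < p) (q : ℝ) : 0 < Jx x p q := by
  rw [Jx]
  rw [setIntegral_pos_iff_support_of_nonneg_ae]
  · apply lt_of_lt_of_le _ (measure_mono (show Set.Ioi (1:ℝ) ⊆
      (Function.support fun t => Real.exp (-x * t) * t ^ p * (1 + t) ^ q) ∩ Set.Ioi 0 from ?_))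
    · rw [Real.volume_Ioi]; exact ENNReal.zero_lt_top
    · intro t ht
      rw [Set.mem_Ioi] at ht
      have ht0 : (0:ℝ) < t := lt_trans zero_lt_one ht
      constructor
      · have : 0 < Real.exp (-x * t) * t ^ p * (1 + t) ^ q := by positivity
        exact ne_of_gt this
      · exact ht0
  · rw [EventuallyLE, ae_restrict_iff' measurableSet_Ioi]
    filter_upwards with t ht
    rw [Set.mem_Ioi] at ht
    positivity
  · exact Jx_integrable hx hp q

lemma Jx_split {x p : ℝ} (hx : 0 < x) (hp : -1 < p) (q : ℝ) :
    Jx x p (q + 1) = Jx x p q + Jx x (p + 1) q := by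
  rw [Jx, Jx, Jx, ← integral_add (Jx_integrable hx hp q) (Jx_integrable hx (by linarith) q)]
  apply setIntegral_congr_fun measurableSet_Ioi
  intro t ht
  rw [Set.mem_Ioi] at ht
  have h1t : (0:ℝ) < 1 + t := by linarith
  simp only
  rw [Real.rpow_add_one (ne_of_gt h1t) q, Real.rpow_add_one (ne_of_gt ht) p]
  ring

lemma Jx_ibp {x A : ℝ} (hx : 0 < x) (hA : 0 < A) (B : ℝ) :
    A * Jx x (A - 1) B + B * Jx x A (B - 1) = x * Jx x A B := by
  set f1 : ℝ → ℝ := fun t => Real.exp (-x * t) * t ^ (A - 1) * (1 + t) ^ B with hf1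
  set f2 : ℝ → ℝ := fun t => Real.exp (-x * t) * t ^ A * (1 + t) ^ (B - 1) with hf2
  set f3 : ℝ → ℝ := fun t => Real.exp (-x * t) * t ^ A * (1 + t) ^ B with hf3
  set F : ℝ → ℝ := fun t => Real.exp (-x * t) * t ^ A * (1 + t) ^ B with hF
  set G : ℝ → ℝ := fun t => A * f1 t + B * f2 t - x * f3 t with hG
  have hderiv : ∀ t ∈ Set.Ioi (0:ℝ), HasDerivAt F (G t) t := by
    intro t ht
    rw [Set.mem_Ioi] at ht
    have h1t : (0:ℝ) < 1 + t := by linarith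
    have hexp : HasDerivAt (fun s : ℝ => Real.exp (-x * s)) (-x * Real.exp (-x * t)) t := by
      have h0 : HasDerivAt (fun s : ℝ => -x * s) (-x) t := by
        simpa using (hasDerivAt_id t).const_mul (-x)
      simpa [mul_comm] using h0.exp
    have hpow : HasDerivAt (fun s : ℝ => s ^ A) (A * t ^ (A - 1)) t :=
      Real.hasDerivAt_rpow_const (Or.inl (ne_of_gt ht))
    have hpow2 : HasDerivAt (fun s : ℝ => (1 + s) ^ B) (B * (1 + t) ^ (B - 1)) t := by
      have h0 : HasDerivAt (fun s : ℝ => 1 + s) 1 t := (hasDerivAt_id t).const_add 1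
      have h1 : HasDerivAt (fun y : ℝ => y ^ B) (B * (1 + t) ^ (B - 1)) (1 + t) :=
        Real.hasDerivAt_rpow_const (Or.inl (ne_of_gt h1t))
      exact (h1.comp t h0).congr_deriv (by ring)
    have := (hexp.mul hpow).mul hpow2
    refine this.congr_deriv ?_
    show _ = A * f1 t + B * f2 t - x * f3 t
    simp only [hf1, hf2, hf3, hF, Pi.mul_apply]
    ring
  have hint : IntegrableOn G (Set.Ioi (0:ℝ)) := by
    apply Integrable.sub
    · exact ((Jx_integrable hx (by linarith) B).const_mul A).add
        ((Jx_integrable hx (by linarith) (B - 1)).const_mul B)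
    · exact (Jx_integrable hx (by linarith) B).const_mul x
  have hcont : ContinuousWithinAt F (Set.Ici (0:ℝ)) 0 := by
    apply ContinuousWithinAt.mul
    apply ContinuousWithinAt.mul
    · exact (Real.continuous_exp.comp (continuous_const.mul continuous_id)).continuousWithinAt
    · exact (Real.continuousAt_rpow_const 0 A (Or.inr hA.le)).continuousWithinAt
    · apply ContinuousWithinAt.rpow_const
      · exact (continuous_const.add continuous_id).continuousWithinAt
      · exact Or.inl (by norm_num)
  have htend : Tendsto F atTop (nhds 0) := by
    have h1 : Tendsto (fun t : ℝ => t ^ A * Real.exp (-(x/2) * t)) atTop (nhds 0) :=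
      tendsto_rpow_mul_exp_neg_mul_atTop_nhds_zero A (x/2) (by positivity)
    have h2 : Tendsto (fun t : ℝ => (1 + t) ^ B * Real.exp (-(x/2) * (1 + t))) atTop (nhds 0) := by
      have h0 : Tendsto (fun t : ℝ => 1 + t) atTop atTop :=
        tendsto_atTop_add_const_left atTop 1 tendsto_id
      exact (tendsto_rpow_mul_exp_neg_mul_atTop_nhds_zero B (x/2) (by positivity)).comp h0
    have h3 := (h1.mul h2).mul_const (Real.exp (x/2))
    rw [show (0:ℝ) * 0 * Real.exp (x/2) = 0 by ring] at h3
    apply h3.congr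
    intro t
    simp only [hF]
    have he : Real.exp (-(x/2) * t) * Real.exp (-(x/2) * (1 + t)) * Real.exp (x/2)
        = Real.exp (-x * t) := by
      rw [← Real.exp_add, ← Real.exp_add]; ring_nf
    calc t ^ A * Real.exp (-(x/2) * t) * ((1 + t) ^ B * Real.exp (-(x/2) * (1 + t)))
          * Real.exp (x/2)
        = (Real.exp (-(x/2) * t) * Real.exp (-(x/2) * (1 + t)) * Real.exp (x/2))
          * t ^ A * (1 + t) ^ B := by ring
      _ = Real.exp (-x * t) * t ^ A * (1 + t) ^ B := by rw [he]
  have hF0 : F 0 = 0 := by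
    simp only [hF]
    rw [Real.zero_rpow (ne_of_gt hA)]
    ring
  have key : ∫ t in Set.Ioi (0:ℝ), G t = 0 - F 0 :=
    integral_Ioi_of_hasDerivAt_of_tendsto hcont hderiv hint htend
  rw [hF0, sub_zero] at key
  have expand : ∫ t in Set.Ioi (0:ℝ), G t
      = A * Jx x (A - 1) B + B * Jx x A (B - 1) - x * Jx x A B := by
    simp only [hG, hf1, hf2, hf3]
    have hi1 : Integrable (fun t : ℝ => A * (Real.exp (-x * t) * t ^ (A - 1) * (1 + t) ^ B))
        (volume.restrict (Set.Ioi 0)) := (Jx_integrable hx (by linarith) B).const_mul A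
    have hi2 : Integrable (fun t : ℝ => B * (Real.exp (-x * t) * t ^ A * (1 + t) ^ (B - 1)))
        (volume.restrict (Set.Ioi 0)) := (Jx_integrable hx (by linarith) (B - 1)).const_mul B
    have hi3 : Integrable (fun t : ℝ => x * (Real.exp (-x * t) * t ^ A * (1 + t) ^ B))
        (volume.restrict (Set.Ioi 0)) := (Jx_integrable hx (by linarith) B).const_mul x
    have hi12 : Integrable (fun t : ℝ => A * (Real.exp (-x * t) * t ^ (A - 1) * (1 + t) ^ B)
        + B * (Real.exp (-x * t) * t ^ A * (1 + t) ^ (B - 1)))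
        (volume.restrict (Set.Ioi 0)) := hi1.add hi2
    rw [integral_sub hi12 hi3, integral_add hi1 hi2, integral_const_mul, integral_const_mul,
      integral_const_mul]
    rfl
  rw [expand] at key
  linarith

lemma Jx_cs {x p : ℝ} (hx : 0 < x) (hp : -1 < p) (q : ℝ) :
    (Jx x (p + 1) q) ^ 2 ≤ Jx x p q * Jx x (p + 2) q := by
  set I1 := Jx x p q with hI1
  set I2 := Jx x (p + 1) q with hI2
  set I3 := Jx x (p + 2) q with hI3
  set g : ℝ → ℝ := fun t => Real.exp (-(x/2) * t) * t ^ (p/2) * (1 + t) ^ (q/2) with hg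
  set h : ℝ → ℝ := fun t => Real.exp (-(x/2) * t) * t ^ ((p+2)/2) * (1 + t) ^ (q/2) with hh
  have hgg : ∀ t : ℝ, 0 < t → g t * g t = Real.exp (-x * t) * t ^ p * (1 + t) ^ q := by
    intro t ht
    have h1t : (0:ℝ) < 1 + t := by linarith
    simp only [hg]
    rw [show Real.exp (-(x/2)*t) * t^(p/2) * (1+t)^(q/2) * (Real.exp (-(x/2)*t) * t^(p/2) *
        (1+t)^(q/2)) = (Real.exp (-(x/2)*t) * Real.exp (-(x/2)*t)) * (t^(p/2) * t^(p/2)) *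
        ((1+t)^(q/2) * (1+t)^(q/2)) from by ring,
      ← Real.exp_add, ← Real.rpow_add ht, ← Real.rpow_add h1t,
      show -(x/2)*t + -(x/2)*t = -x*t by ring, show p/2 + p/2 = p by ring,
      show q/2 + q/2 = q by ring]
  have hgh : ∀ t : ℝ, 0 < t → g t * h t = Real.exp (-x * t) * t ^ (p+1) * (1 + t) ^ q := by
    intro t ht
    have h1t : (0:ℝ) < 1 + t := by linarith
    simp only [hg, hh]
    rw [show Real.exp (-(x/2)*t) * t^(p/2) * (1+t)^(q/2) * (Real.exp (-(x/2)*t) * t^((p+2)/2) *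
        (1+t)^(q/2)) = (Real.exp (-(x/2)*t) * Real.exp (-(x/2)*t)) * (t^(p/2) * t^((p+2)/2)) *
        ((1+t)^(q/2) * (1+t)^(q/2)) from by ring,
      ← Real.exp_add, ← Real.rpow_add ht, ← Real.rpow_add h1t,
      show -(x/2)*t + -(x/2)*t = -x*t by ring, show p/2 + (p+2)/2 = p + 1 by ring,
      show q/2 + q/2 = q by ring]
  have hhh : ∀ t : ℝ, 0 < t → h t * h t = Real.exp (-x * t) * t ^ (p+2) * (1 + t) ^ q := by
    intro t ht
    have h1t : (0:ℝ) < 1 + t := by linarith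
    simp only [hh]
    rw [show Real.exp (-(x/2)*t) * t^((p+2)/2) * (1+t)^(q/2) * (Real.exp (-(x/2)*t) * t^((p+2)/2) *
        (1+t)^(q/2)) = (Real.exp (-(x/2)*t) * Real.exp (-(x/2)*t)) * (t^((p+2)/2) * t^((p+2)/2)) *
        ((1+t)^(q/2) * (1+t)^(q/2)) from by ring,
      ← Real.exp_add, ← Real.rpow_add ht, ← Real.rpow_add h1t,
      show -(x/2)*t + -(x/2)*t = -x*t by ring, show (p+2)/2 + (p+2)/2 = p + 2 by ring,
      show q/2 + q/2 = q by ring]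
  have hnn : 0 ≤ ∫ t in Set.Ioi (0:ℝ),
      (I2^2 * (Real.exp (-x * t) * t ^ p * (1 + t) ^ q)
       - 2*I2*I1 * (Real.exp (-x * t) * t ^ (p+1) * (1 + t) ^ q)
       + I1^2 * (Real.exp (-x * t) * t ^ (p+2) * (1 + t) ^ q)) := by
    apply setIntegral_nonneg measurableSet_Ioi
    intro t ht
    rw [Set.mem_Ioi] at ht
    have e : I2^2 * (Real.exp (-x * t) * t ^ p * (1 + t) ^ q)
       - 2*I2*I1 * (Real.exp (-x * t) * t ^ (p+1) * (1 + t) ^ q)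
       + I1^2 * (Real.exp (-x * t) * t ^ (p+2) * (1 + t) ^ q)
        = (I2 * g t - I1 * h t)^2 := by
      rw [← hgg t ht, ← hgh t ht, ← hhh t ht]; ring
    rw [e]; exact sq_nonneg _
  have hi1 : Integrable (fun t : ℝ => I2^2 * (Real.exp (-x * t) * t ^ p * (1 + t) ^ q))
      (volume.restrict (Set.Ioi 0)) := (Jx_integrable hx hp q).const_mul _
  have hi2 : Integrable (fun t : ℝ => 2*I2*I1 * (Real.exp (-x * t) * t ^ (p+1) * (1 + t) ^ q))
      (volume.restrict (Set.Ioi 0)) := (Jx_integrable hx (by linarith) q).const_mul _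
  have hi3 : Integrable (fun t : ℝ => I1^2 * (Real.exp (-x * t) * t ^ (p+2) * (1 + t) ^ q))
      (volume.restrict (Set.Ioi 0)) := (Jx_integrable hx (by linarith) q).const_mul _
  have hval : (∫ t in Set.Ioi (0:ℝ),
      (I2^2 * (Real.exp (-x * t) * t ^ p * (1 + t) ^ q)
       - 2*I2*I1 * (Real.exp (-x * t) * t ^ (p+1) * (1 + t) ^ q)
       + I1^2 * (Real.exp (-x * t) * t ^ (p+2) * (1 + t) ^ q)))
      = I2^2 * I1 - 2*I2*I1*I2 + I1^2 * I3 := by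
    have hi12 : Integrable (fun t : ℝ => I2^2 * (Real.exp (-x * t) * t ^ p * (1 + t) ^ q)
        - 2*I2*I1 * (Real.exp (-x * t) * t ^ (p+1) * (1 + t) ^ q))
        (volume.restrict (Set.Ioi 0)) := hi1.sub hi2
    rw [integral_add hi12 hi3, integral_sub hi1 hi2, integral_const_mul,
      integral_const_mul, integral_const_mul]
    rfl
  rw [hval] at hnn
  have hI1pos : 0 < I1 := Jx_pos hx hp q
  nlinarith [hnn, hI1pos]

lemma Jx_not_integrable {x p : ℝ} (hx : 0 < x) (hp : p ≤ -1) (q : ℝ) :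
    ¬ IntegrableOn (fun t : ℝ => Real.exp (-x * t) * t ^ p * (1 + t) ^ q) (Set.Ioi 0) := by
  intro h
  have h1 : IntegrableOn (fun t : ℝ => Real.exp (-x * t) * t ^ p * (1 + t) ^ q)
      (Set.Ioo 0 1) := h.mono_set Set.Ioo_subset_Ioi_self
  have h2 : IntegrableOn (fun t : ℝ => t ^ p) (Set.Ioo 0 1) := by
    apply Integrable.mono' (h1.const_mul (Real.exp x * Real.exp |q|))
    · apply ContinuousOn.aestronglyMeasurable _ measurableSet_Ioo
      intro t ht
      exact (Real.continuousAt_rpow_const t p (Or.inl (ne_of_gt ht.1))).continuousWithinAt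
    · rw [ae_restrict_iff' measurableSet_Ioo]
      filter_upwards with t ht
      obtain ⟨ht0, ht1⟩ := ht
      have h1t : (0:ℝ) < 1 + t := by linarith
      rw [Real.norm_eq_abs, abs_of_nonneg (by positivity : (0:ℝ) ≤ t ^ p)]
      have hL0 : 0 ≤ Real.log (1 + t) := Real.log_nonneg (by linarith)
      have hL1 : Real.log (1 + t) ≤ 1 := by
        have := Real.log_le_sub_one_of_pos h1t
        linarith
      have hLq : -|q| ≤ Real.log (1 + t) * q := by
        rcases le_or_gt 0 q with hq | hq
        · have : 0 ≤ Real.log (1 + t) * q := mul_nonneg hL0 hq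
          linarith [abs_nonneg q]
        · have h1 : 1 * q ≤ Real.log (1 + t) * q := mul_le_mul_of_nonpos_right hL1 hq.le
          rw [abs_of_neg hq]
          linarith
      have hxt : (0:ℝ) ≤ x * (1 - t) := mul_nonneg hx.le (by linarith)
      have key : 1 ≤ Real.exp x * Real.exp |q| * (Real.exp (-x * t) * (1 + t) ^ q) := by
        rw [Real.rpow_def_of_pos h1t, ← Real.exp_add, ← Real.exp_add, ← Real.exp_add]
        calc (1:ℝ) = Real.exp 0 := by simp
          _ ≤ _ := Real.exp_le_exp.mpr (by nlinarith [hxt, hLq])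
      calc t ^ p = t ^ p * 1 := by ring
        _ ≤ t ^ p * (Real.exp x * Real.exp |q| * (Real.exp (-x*t) * (1+t)^q)) :=
              mul_le_mul_of_nonneg_left key (Real.rpow_nonneg ht0.le p)
        _ = Real.exp x * Real.exp |q| * (Real.exp (-x * t) * t ^ p * (1 + t) ^ q) := by ring
  have := (intervalIntegral.integrableOn_Ioo_rpow_iff zero_lt_one).mp h2
  linarith


set_option maxHeartbeats 1000000 in
lemma turan_core {a c x Q0 Q1 Q2 Q3 Fp Fm : ℝ} (ha1 : 1 < a) (hc : c < 1) (hx : 0 < x)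
    (hQ0 : 0 < Q0) (hQ1 : 0 < Q1) (hQ2 : 0 < Q2) (hQ3 : 0 < Q3)
    (i1 : a * Q0 + (c-a-1) * Fp = x * Q1)
    (i2 : (a-1) * Fm + (c-a) * Q0 = x * (Q0 + Q1))
    (i3 : a * (Q0 + Q1) + (c-a) * Q1 = x * (Q1 + Q2))
    (i4 : (a+1) * (Q1 + Q2) + (c-a) * Q2 = x * (Q2 + Q3))
    (cs : Q2^2 ≤ Q1 * Q3) :
    0 < a*Q0^2 - (a-1)*Fm*Fp := by
  have ha : (0:ℝ) < a := by linarith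
  have h3' : a * Q0 = (x-c) * Q1 + x * Q2 := by linear_combination i3
  have hFm' : (a-1) * Fm = (x+a-c) * Q0 + x * Q1 := by linear_combination i2
  have hFp' : (a+1-c) * Fp = a * Q0 - x * Q1 := by linear_combination -i1
  have hxQ3 : x * Q3 = (a+1) * Q1 + (c+1-x) * Q2 := by linear_combination (-1 : ℝ) * i4
  have hH : 0 < x^2 * Q1^2 + x*(x-c) * Q0 * Q1 - a*(x-1) * Q0^2 := by
    rcases le_or_gt x 1 with hx1 | hx1
    · rcases le_or_gt c x with hcx | hcx
      · have t1 : 0 < x^2 * Q1^2 := by positivity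
        have t2 : 0 ≤ x*(x-c) * Q0 * Q1 :=
          mul_nonneg (mul_nonneg (mul_nonneg hx.le (by linarith)) hQ0.le) hQ1.le
        have t3 : 0 ≤ a*(1-x) * Q0^2 :=
          mul_nonneg (mul_nonneg ha.le (by linarith)) (sq_nonneg Q0)
        nlinarith [t1, t2, t3]
      · have hd : (c-x)^2 < 4*a*(1-x) := by nlinarith
        nlinarith [sq_nonneg (x*Q1 - (c-x)/2 * Q0), mul_pos hQ0 hQ0, hd, mul_pos hQ1 hQ1]
    · have hv : (x*Q2)^2 ≤ x*(a+1)*Q1^2 + (c+1-x) * Q1 * (x*Q2) := by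
        have h1 : x^2 * Q2^2 ≤ x^2 * (Q1*Q3) :=
          mul_le_mul_of_nonneg_left cs (by positivity)
        have h2 : x*Q1*(x*Q3) = x*(a+1)*Q1^2 + (c+1-x) * Q1 * (x*Q2) := by
          linear_combination (x*Q1) * hxQ3
        nlinarith [h1, h2]
      have keyE : a*(x^2 * Q1^2 + x*(x-c) * Q0 * Q1 - a*(x-1) * Q0^2)
          = Q1^2 * ((a+1)*x - 2*c*x + c^2) + (1-c) * (Q1*(x*Q2))
            + (x-1) * (x*(a+1)*Q1^2 + (c+1-x) * Q1 * (x*Q2) - (x*Q2)^2) := by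
        linear_combination (-((x-1)*(a*Q0) - (x-c)*Q1 + (x-1)*(x*Q2))) * h3'
      have hcoef : 0 < (a+1)*x - 2*c*x + c^2 := by nlinarith [sq_nonneg c]
      have c1 : 0 < Q1^2 * ((a+1)*x - 2*c*x + c^2) := mul_pos (by positivity) hcoef
      have c2 : 0 < (1-c) * (Q1*(x*Q2)) := mul_pos (by linarith) (by positivity)
      have c3 : 0 ≤ (x-1) * (x*(a+1)*Q1^2 + (c+1-x) * Q1 * (x*Q2) - (x*Q2)^2) :=
        mul_nonneg (by linarith) (by linarith [hv])
      have haH : 0 < a*(x^2 * Q1^2 + x*(x-c) * Q0 * Q1 - a*(x-1) * Q0^2) := by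
        rw [keyE]; linarith [c1, c2, c3]
      by_contra hcon
      push_neg at hcon
      have : a*(x^2 * Q1^2 + x*(x-c) * Q0 * Q1 - a*(x-1) * Q0^2) ≤ 0 :=
        mul_nonpos_of_nonneg_of_nonpos ha.le hcon
      linarith
  have hα : (0:ℝ) < a+1-c := by linarith
  have e2 : (a+1-c) * (a*Q0^2 - (a-1)*Fm*Fp)
      = x^2 * Q1^2 + x*(x-c) * Q0 * Q1 - a*(x-1) * Q0^2 := by
    linear_combination (-(a+1-c)*Fp) * hFm' + (-((x+a-c)*Q0 + x*Q1)) * hFp'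
  by_contra hcon
  push_neg at hcon
  have : (a+1-c) * (a*Q0^2 - (a-1)*Fm*Fp) ≤ 0 :=
    mul_nonpos_of_nonneg_of_nonpos hα.le hcon
  linarith

set_option maxHeartbeats 1000000 in
theorem turan_shift_a_pos (a c x : ℝ) (ha : 0 < a) (hc : c < 1) (hx : 0 < x) :
    (tricomiPsi a c x) ^ 2 - tricomiPsi (a - 1) c x * tricomiPsi (a + 1) c x > 0 := by
  have hψ : tricomiPsi a c x = (1 / Real.Gamma a) * Jx x (a-1) (c-a-1) := rfl
  rcases le_or_gt a 1 with ha1 | ha1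
  · -- case a ≤ 1 : the (a-1)-integral diverges, so that term is 0
    have h0 : tricomiPsi (a-1) c x = 0 := by
      have hni : ¬ Integrable (fun t : ℝ => Real.exp (-x * t) * t ^ (a-1-1) * (1+t) ^ (c-(a-1)-1))
          (volume.restrict (Set.Ioi (0:ℝ))) :=
        Jx_not_integrable hx (show a-1-1 ≤ -1 by linarith) (c-(a-1)-1)
      rw [tricomiPsi, integral_undef hni, mul_zero]
    rw [h0, zero_mul, sub_zero]
    have hpos : 0 < tricomiPsi a c x := by
      rw [hψ]
      have h1 : 0 < Real.Gamma a := Real.Gamma_pos_of_pos ha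
      have h2 : 0 < Jx x (a-1) (c-a-1) := Jx_pos hx (by linarith) _
      positivity
    positivity
  · -- case a > 1
    set Q0 := Jx x (a-1) (c-a-1) with hQ0def
    set Q1 := Jx x a (c-a-1) with hQ1def
    set Q2 := Jx x (a+1) (c-a-1) with hQ2def
    set Q3 := Jx x (a+2) (c-a-1) with hQ3def
    set Fp := Jx x a (c-a-2) with hFpdef
    set Fm := Jx x (a-2) (c-a) with hFmdef
    have hQ0 : 0 < Q0 := Jx_pos hx (by linarith) _
    have hQ1 : 0 < Q1 := Jx_pos hx (by linarith) _
    have hQ2 : 0 < Q2 := Jx_pos hx (by linarith) _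
    have hQ3 : 0 < Q3 := Jx_pos hx (by linarith) _
    have hFp : 0 < Fp := Jx_pos hx (by linarith) _
    have hFm : 0 < Fm := Jx_pos hx (by linarith) _
    -- splitting identities
    have hs0 : Jx x (a-1) (c-a) = Q0 + Q1 := by
      have h := Jx_split hx (p := a-1) (by linarith) (c-a-1)
      rw [show c-a-1+1 = c-a by ring, show a-1+1 = a by ring] at h
      exact h
    have hs1 : Jx x a (c-a) = Q1 + Q2 := by
      have h := Jx_split hx (p := a) (by linarith) (c-a-1)
      rw [show c-a-1+1 = c-a by ring] at h
      exact h
    have hs2 : Jx x (a+1) (c-a) = Q2 + Q3 := by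
      have h := Jx_split hx (p := a+1) (by linarith) (c-a-1)
      rw [show c-a-1+1 = c-a by ring, show a+1+1 = a+2 by ring] at h
      exact h
    -- integration by parts identities
    have i1 : a * Q0 + (c-a-1) * Fp = x * Q1 := by
      have h := Jx_ibp hx ha (c-a-1)
      rw [show c-a-1-1 = c-a-2 by ring] at h
      exact h
    have i2 : (a-1) * Fm + (c-a) * Q0 = x * (Q0 + Q1) := by
      have h := Jx_ibp hx (show (0:ℝ) < a-1 by linarith) (c-a)
      rw [show a-1-1 = a-2 by ring, hs0] at h
      exact h
    have i3 : a * (Q0 + Q1) + (c-a) * Q1 = x * (Q1 + Q2) := by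
      have h := Jx_ibp hx ha (c-a)
      rw [hs0, hs1] at h
      exact h
    have i4 : (a+1) * (Q1 + Q2) + (c-a) * Q2 = x * (Q2 + Q3) := by
      have h := Jx_ibp hx (show (0:ℝ) < a+1 by linarith) (c-a)
      rw [show a+1-1 = a by ring, hs1, hs2] at h
      exact h
    have cs : Q2^2 ≤ Q1 * Q3 := Jx_cs hx (show (-1:ℝ) < a by linarith) (c-a-1)
    have hN : 0 < a*Q0^2 - (a-1)*Fm*Fp :=
      turan_core ha1 hc hx hQ0 hQ1 hQ2 hQ3 i1 i2 i3 i4 cs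
    have hψm : tricomiPsi (a-1) c x = (1 / Real.Gamma (a-1)) * Fm := by
      have h : tricomiPsi (a-1) c x = (1 / Real.Gamma (a-1)) * Jx x (a-1-1) (c-(a-1)-1) := rfl
      rw [show a-1-1 = a-2 by ring, show c-(a-1)-1 = c-a by ring] at h
      exact h
    have hψp : tricomiPsi (a+1) c x = (1 / Real.Gamma (a+1)) * Fp := by
      have h : tricomiPsi (a+1) c x = (1 / Real.Gamma (a+1)) * Jx x (a+1-1) (c-(a+1)-1) := rfl
      rw [show a+1-1 = a by ring, show c-(a+1)-1 = c-a-2 by ring] at h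
      exact h
    have hGm : 0 < Real.Gamma (a-1) := Real.Gamma_pos_of_pos (by linarith)
    have hGa : 0 < Real.Gamma a := Real.Gamma_pos_of_pos ha
    have hGaEq : Real.Gamma a = (a-1) * Real.Gamma (a-1) := by
      have h := Real.Gamma_add_one (show a-1 ≠ 0 by intro h; rw [sub_eq_zero] at h; linarith)
      rw [show a-1+1 = a by ring] at h
      exact h
    have hGpEq : Real.Gamma (a+1) = a * Real.Gamma a := Real.Gamma_add_one (ne_of_gt ha)
    have heq : (1 / ((a-1) * Real.Gamma (a-1)) * Q0)^2
        - (1 / Real.Gamma (a-1) * Fm) * (1 / (a * ((a-1) * Real.Gamma (a-1))) * Fp)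
        = (a*Q0^2 - (a-1)*Fm*Fp) / (a * ((a-1) * Real.Gamma (a-1))^2) := by
      have h1 : Real.Gamma (a-1) ≠ 0 := ne_of_gt hGm
      have h2 : a - 1 ≠ 0 := ne_of_gt (by linarith : (0:ℝ) < a-1)
      field_simp
    rw [hψ, hψm, hψp, hGpEq, hGaEq, gt_iff_lt, heq]
    apply div_pos hN
    exact mul_pos ha (pow_pos (mul_pos (by linarith) hGm) 2)
end

section
/- For a > 0, c < 0, and x > 0, define Δₐ(x) = ψ(a,c,x)² − ψ(a−1,c,x)·ψ(a+1,c,x). Then Δₐ(x) > (1/(1+a−c))·(1 + x/(2c))·ψ(a,c,x)². -/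
open MeasureTheory Real

open Set Filter Topology
open scoped ENNReal

noncomputable def TI (x γ δ : ℝ) : ℝ :=
  ∫ t in Set.Ioi (0:ℝ), Real.exp (-x * t) * t ^ γ * (1 + t) ^ δ

lemma TI_integrable {x γ δ : ℝ} (hx : 0 < x) (hγ : -1 < γ) (hδ : δ ≤ 0) :
    IntegrableOn (fun t => Real.exp (-x * t) * t ^ γ * (1 + t) ^ δ) (Set.Ioi (0:ℝ)) := by
  have base : IntegrableOn (fun t : ℝ => t ^ γ * Real.exp (-x * t)) (Set.Ioi (0:ℝ)) := by
    have := integrableOn_rpow_mul_exp_neg_mul_rpow hγ zero_lt_one hx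
    simpa [Real.rpow_one] using this
  refine Integrable.mono' base ?_ ?_
  · apply Measurable.aestronglyMeasurable
    fun_prop
  · filter_upwards [ae_restrict_mem measurableSet_Ioi] with t ht
    have ht0 : (0:ℝ) < t := ht
    have h1 : (1 + t) ^ δ ≤ 1 :=
      Real.rpow_le_one_of_one_le_of_nonpos (by linarith) hδ
    have h2 : (0:ℝ) ≤ (1+t) ^ δ := Real.rpow_nonneg (by linarith) _
    have h3 : (0:ℝ) ≤ Real.exp (-x*t) * t ^ γ :=
      mul_nonneg (Real.exp_nonneg _) (Real.rpow_nonneg ht0.le _)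
    rw [Real.norm_eq_abs, abs_of_nonneg (mul_nonneg h3 h2)]
    calc Real.exp (-x*t) * t ^ γ * (1+t) ^ δ ≤ Real.exp (-x*t) * t ^ γ * 1 :=
        mul_le_mul_of_nonneg_left h1 h3
    _ = t ^ γ * Real.exp (-x * t) := by ring

lemma TI_pos {x γ δ : ℝ} (hx : 0 < x) (hγ : -1 < γ) (hδ : δ ≤ 0) :
    0 < TI x γ δ := by
  rw [TI]
  rw [setIntegral_pos_iff_support_of_nonneg_ae]
  · have hsub : Set.Ioi (0:ℝ) ⊆ Function.support (fun t => Real.exp (-x * t) * t ^ γ * (1 + t) ^ δ) := by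
      intro t ht
      have ht0 : (0:ℝ) < t := ht
      have : 0 < Real.exp (-x * t) * t ^ γ * (1 + t) ^ δ := by positivity
      exact this.ne'
    rw [Set.inter_eq_right.mpr hsub]
    simp
  · filter_upwards [ae_restrict_mem measurableSet_Ioi] with t ht
    have ht0 : (0:ℝ) < t := ht
    positivity
  · exact TI_integrable hx hγ hδ

lemma TI_rec {x γ δ : ℝ} (hx : 0 < x) (hγ : 0 < γ) (hδ : δ ≤ 0) :
    x * TI x γ δ = γ * TI x (γ - 1) δ + δ * TI x γ (δ - 1) := by
  set F : ℝ → ℝ := fun t => Real.exp (-x * t) * t ^ γ * (1 + t) ^ δ with hF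
  set F' : ℝ → ℝ := fun t =>
      γ * (Real.exp (-x * t) * t ^ (γ - 1) * (1 + t) ^ δ)
    + δ * (Real.exp (-x * t) * t ^ γ * (1 + t) ^ (δ - 1))
    - x * (Real.exp (-x * t) * t ^ γ * (1 + t) ^ δ) with hF'
  have hderiv : ∀ t ∈ Set.Ioi (0:ℝ), HasDerivAt F (F' t) t := by
    intro t ht
    have ht0 : (0:ℝ) < t := ht
    have hE : HasDerivAt (fun s : ℝ => Real.exp (-x * s)) (Real.exp (-x * t) * (-x * 1)) t :=
      ((hasDerivAt_id t).const_mul (-x)).exp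
    have hP : HasDerivAt (fun s : ℝ => s ^ γ) (γ * t ^ (γ - 1)) t :=
      Real.hasDerivAt_rpow_const (Or.inl ht0.ne')
    have h0 : HasDerivAt (fun s : ℝ => 1 + s) 1 t := by
      simpa using (hasDerivAt_id t).const_add (1:ℝ)
    have hQ : HasDerivAt (fun s : ℝ => (1 + s) ^ δ) (δ * (1 + t) ^ (δ - 1)) t := by
      have := (Real.hasDerivAt_rpow_const (x := 1 + t) (p := δ)
        (Or.inl (by linarith))).comp t h0
      simpa [Function.comp_def] using this
    have : HasDerivAt (fun s : ℝ => Real.exp (-x * s) * s ^ γ * (1 + s) ^ δ) _ t := (hE.mul hP).mul hQ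
    convert this using 1
    simp only [hF', Pi.mul_apply]
    ring
  have hcont : ContinuousWithinAt F (Set.Ici 0) 0 := by
    have h1 : ContinuousAt (fun s : ℝ => Real.exp (-x * s)) 0 := by fun_prop
    have h2 : ContinuousAt (fun s : ℝ => s ^ γ) 0 :=
      Real.continuousAt_rpow_const 0 γ (Or.inr hγ.le)
    have h3 : ContinuousAt (fun s : ℝ => (1 + s) ^ δ) 0 :=
      ContinuousAt.rpow_const ((continuous_const.add continuous_id).continuousAt)
        (Or.inl (by norm_num))
    exact ((h1.mul h2).mul h3).continuousWithinAt
  have hint1 := TI_integrable hx (by linarith : (-1:ℝ) < γ - 1) hδ (x := x)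
  have hint2 := TI_integrable hx (by linarith : (-1:ℝ) < γ) (by linarith : δ - 1 ≤ 0) (x := x)
  have hint3 := TI_integrable hx (by linarith : (-1:ℝ) < γ) hδ (x := x)
  have hint : IntegrableOn F' (Set.Ioi (0:ℝ)) :=
    ((hint1.const_mul γ).add (hint2.const_mul δ)).sub (hint3.const_mul x)
  have htend : Tendsto F atTop (𝓝 0) := by
    have hmaj := tendsto_rpow_mul_exp_neg_mul_atTop_nhds_zero γ x hx
    refine squeeze_zero' ?_ ?_ hmaj
    · filter_upwards [eventually_gt_atTop (0:ℝ)] with t ht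
      have : (0:ℝ) < 1 + t := by linarith
      positivity
    · filter_upwards [eventually_gt_atTop (0:ℝ)] with t ht
      have h1 : (1 + t) ^ δ ≤ 1 :=
        Real.rpow_le_one_of_one_le_of_nonpos (by linarith) hδ
      have h3 : (0:ℝ) ≤ Real.exp (-x*t) * t ^ γ :=
        mul_nonneg (Real.exp_nonneg _) (Real.rpow_nonneg ht.le _)
      calc F t ≤ Real.exp (-x*t) * t ^ γ * 1 := mul_le_mul_of_nonneg_left h1 h3
      _ = t ^ γ * Real.exp (-x * t) := by ring
  have key := integral_Ioi_of_hasDerivAt_of_tendsto hcont hderiv hint htend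
  have hF0 : F 0 = 0 := by
    simp [hF, Real.zero_rpow hγ.ne']
  rw [hF0, sub_zero] at key
  have hm1 : Integrable (fun a : ℝ => γ * (Real.exp (-x*a) * a ^ (γ-1) * (1+a) ^ δ))
      (volume.restrict (Set.Ioi 0)) := hint1.const_mul γ
  have hm2 : Integrable (fun a : ℝ => δ * (Real.exp (-x*a) * a ^ γ * (1+a) ^ (δ-1)))
      (volume.restrict (Set.Ioi 0)) := hint2.const_mul δ
  have hadd : Integrable (fun a : ℝ => γ * (Real.exp (-x*a) * a ^ (γ-1) * (1+a) ^ δ)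
      + δ * (Real.exp (-x*a) * a ^ γ * (1+a) ^ (δ-1))) (volume.restrict (Set.Ioi 0)) :=
    hm1.add hm2
  have hmul3 : Integrable (fun a : ℝ => x * (Real.exp (-x*a) * a ^ γ * (1+a) ^ δ))
      (volume.restrict (Set.Ioi 0)) := hint3.const_mul x
  have e1 : (∫ t in Set.Ioi (0:ℝ), F' t)
      = (∫ t in Set.Ioi (0:ℝ), (γ * (Real.exp (-x*t) * t ^ (γ-1) * (1+t) ^ δ)
          + δ * (Real.exp (-x*t) * t ^ γ * (1+t) ^ (δ-1))))
        - ∫ t in Set.Ioi (0:ℝ), x * (Real.exp (-x*t) * t ^ γ * (1+t) ^ δ) :=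
    integral_sub hadd hmul3
  have e2 : (∫ t in Set.Ioi (0:ℝ), (γ * (Real.exp (-x*t) * t ^ (γ-1) * (1+t) ^ δ)
        + δ * (Real.exp (-x*t) * t ^ γ * (1+t) ^ (δ-1))))
      = (∫ t in Set.Ioi (0:ℝ), γ * (Real.exp (-x*t) * t ^ (γ-1) * (1+t) ^ δ))
        + ∫ t in Set.Ioi (0:ℝ), δ * (Real.exp (-x*t) * t ^ γ * (1+t) ^ (δ-1)) :=
    integral_add hm1 hm2
  have e3 : (∫ t in Set.Ioi (0:ℝ), γ * (Real.exp (-x*t) * t ^ (γ-1) * (1+t) ^ δ))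
      = γ * TI x (γ-1) δ := integral_const_mul γ _
  have e4 : (∫ t in Set.Ioi (0:ℝ), δ * (Real.exp (-x*t) * t ^ γ * (1+t) ^ (δ-1)))
      = δ * TI x γ (δ-1) := integral_const_mul δ _
  have e5 : (∫ t in Set.Ioi (0:ℝ), x * (Real.exp (-x*t) * t ^ γ * (1+t) ^ δ))
      = x * TI x γ δ := integral_const_mul x _
  rw [key] at e1
  rw [e2, e3, e4, e5] at e1
  linarith

lemma TI_succ {x γ δ : ℝ} (hx : 0 < x) (hγ : -1 < γ) (hδ : δ + 1 ≤ 0) :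
    TI x γ (δ + 1) = TI x γ δ + TI x (γ + 1) δ := by
  have hδ0 : δ ≤ 0 := by linarith
  have h1 := TI_integrable hx hγ hδ0 (x := x)
  have h2 := TI_integrable hx (by linarith : (-1:ℝ) < γ + 1) hδ0 (x := x)
  unfold TI
  rw [← integral_add h1 h2]
  apply setIntegral_congr_fun measurableSet_Ioi
  intro t ht
  have ht0 : (0:ℝ) < t := ht
  have e1 : (1 + t) ^ (δ + 1) = (1 + t) ^ δ * (1 + t) :=
    Real.rpow_add_one (by linarith) δ
  have e2 : t ^ (γ + 1) = t ^ γ * t := Real.rpow_add_one ht0.ne' γ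
  simp only [e1, e2]
  ring

lemma TI_nonneg (x γ δ : ℝ) : 0 ≤ TI x γ δ := by
  apply setIntegral_nonneg measurableSet_Ioi
  intro t ht
  have ht0 : (0:ℝ) < t := ht
  positivity

lemma TI_cauchy_schwarz {x γ δ : ℝ} (hx : 0 < x) (hγ : -1 < γ) (hδ : δ ≤ 0) :
    TI x (γ + 1) δ ^ 2 ≤ TI x γ δ * TI x (γ + 2) δ := by
  set μ := volume.restrict (Set.Ioi (0:ℝ)) with hμ
  set f : ℝ → ℝ := fun t => Real.exp (-(x/2) * t) * t ^ (γ/2) * (1 + t) ^ (δ/2) with hf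
  set g : ℝ → ℝ := fun t => Real.exp (-(x/2) * t) * t ^ ((γ+2)/2) * (1 + t) ^ (δ/2) with hg
  have hsq : ∀ y : ℝ, y ^ (2:ℝ) = y ^ 2 := fun y => by
    rw [show (2:ℝ) = ((2:ℕ):ℝ) by norm_num, Real.rpow_natCast]
  have hfm : AEStronglyMeasurable f μ := by apply Measurable.aestronglyMeasurable; fun_prop
  have hgm : AEStronglyMeasurable g μ := by apply Measurable.aestronglyMeasurable; fun_prop
  have hfsq : ∀ t ∈ Set.Ioi (0:ℝ), f t ^ 2 = Real.exp (-x * t) * t ^ γ * (1 + t) ^ δ := by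
    intro t ht
    have ht0 : (0:ℝ) < t := ht
    have ht1 : (0:ℝ) < 1 + t := by linarith
    calc f t ^ 2
        = Real.exp (-(x/2)*t + -(x/2)*t) * t ^ (γ/2 + γ/2) * (1+t) ^ (δ/2 + δ/2) := by
          rw [Real.exp_add, Real.rpow_add ht0, Real.rpow_add ht1]; simp only [hf]; ring
      _ = Real.exp (-x * t) * t ^ γ * (1 + t) ^ δ := by
          rw [show -(x/2)*t + -(x/2)*t = -x*t by ring, show γ/2+γ/2 = γ by ring,
            show δ/2+δ/2 = δ by ring]
  have hgsq : ∀ t ∈ Set.Ioi (0:ℝ), g t ^ 2 = Real.exp (-x * t) * t ^ (γ+2) * (1 + t) ^ δ := by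
    intro t ht
    have ht0 : (0:ℝ) < t := ht
    have ht1 : (0:ℝ) < 1 + t := by linarith
    calc g t ^ 2
        = Real.exp (-(x/2)*t + -(x/2)*t) * t ^ ((γ+2)/2 + (γ+2)/2) * (1+t) ^ (δ/2 + δ/2) := by
          rw [Real.exp_add, Real.rpow_add ht0, Real.rpow_add ht1]; simp only [hg]; ring
      _ = Real.exp (-x * t) * t ^ (γ+2) * (1 + t) ^ δ := by
          rw [show -(x/2)*t + -(x/2)*t = -x*t by ring, show (γ+2)/2+(γ+2)/2 = γ+2 by ring,
            show δ/2+δ/2 = δ by ring]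
  have hfg : ∀ t ∈ Set.Ioi (0:ℝ), f t * g t = Real.exp (-x * t) * t ^ (γ+1) * (1 + t) ^ δ := by
    intro t ht
    have ht0 : (0:ℝ) < t := ht
    have ht1 : (0:ℝ) < 1 + t := by linarith
    calc f t * g t
        = Real.exp (-(x/2)*t + -(x/2)*t) * t ^ (γ/2 + (γ+2)/2) * (1+t) ^ (δ/2 + δ/2) := by
          rw [Real.exp_add, Real.rpow_add ht0, Real.rpow_add ht1]; simp only [hf, hg]; ring
      _ = Real.exp (-x * t) * t ^ (γ+1) * (1 + t) ^ δ := by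
          rw [show -(x/2)*t + -(x/2)*t = -x*t by ring, show γ/2+(γ+2)/2 = γ+1 by ring,
            show δ/2+δ/2 = δ by ring]
  have hfLp : MemLp f (ENNReal.ofReal 2) μ := by
    rw [show ENNReal.ofReal 2 = 2 by norm_num]
    rw [memLp_two_iff_integrable_sq hfm]
    apply (TI_integrable hx hγ hδ (x := x)).congr
    filter_upwards [ae_restrict_mem measurableSet_Ioi] with t ht
    exact (hfsq t ht).symm
  have hgLp : MemLp g (ENNReal.ofReal 2) μ := by
    rw [show ENNReal.ofReal 2 = 2 by norm_num]
    rw [memLp_two_iff_integrable_sq hgm]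
    apply (TI_integrable hx (by linarith : (-1:ℝ) < γ + 2) hδ (x := x)).congr
    filter_upwards [ae_restrict_mem measurableSet_Ioi] with t ht
    exact (hgsq t ht).symm
  have hf0 : 0 ≤ᵐ[μ] f := by
    filter_upwards [ae_restrict_mem measurableSet_Ioi] with t ht
    have ht0 : (0:ℝ) < t := ht
    have ht1 : (0:ℝ) < 1 + t := by linarith
    simp only [hf]
    positivity
  have hg0 : 0 ≤ᵐ[μ] g := by
    filter_upwards [ae_restrict_mem measurableSet_Ioi] with t ht
    have ht0 : (0:ℝ) < t := ht
    have ht1 : (0:ℝ) < 1 + t := by linarith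
    simp only [hg]
    positivity
  have hconj : Real.HolderConjugate 2 2 := (Real.holderConjugate_iff_eq_conjExponent one_lt_two).2 (by norm_num)
  have H := integral_mul_le_Lp_mul_Lq_of_nonneg hconj hf0 hg0 hfLp hgLp
  have e1 : ∫ t, f t * g t ∂μ = TI x (γ+1) δ := by
    unfold TI
    exact setIntegral_congr_fun measurableSet_Ioi hfg
  have e2 : ∫ t, f t ^ (2:ℝ) ∂μ = TI x γ δ := by
    unfold TI
    simp only [hsq]
    exact setIntegral_congr_fun measurableSet_Ioi hfsq
  have e3 : ∫ t, g t ^ (2:ℝ) ∂μ = TI x (γ+2) δ := by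
    unfold TI
    simp only [hsq]
    exact setIntegral_congr_fun measurableSet_Ioi hgsq
  rw [e1, e2, e3] at H
  have hA := TI_nonneg x γ δ
  have hB := TI_nonneg x (γ+2) δ
  have hL := TI_nonneg x (γ+1) δ
  have hA2 : (TI x γ δ ^ ((1:ℝ)/2)) ^ 2 = TI x γ δ := by
    rw [← Real.rpow_natCast (TI x γ δ ^ ((1:ℝ)/2)) 2, ← Real.rpow_mul hA]
    norm_num
  have hB2 : (TI x (γ+2) δ ^ ((1:ℝ)/2)) ^ 2 = TI x (γ+2) δ := by
    rw [← Real.rpow_natCast (TI x (γ+2) δ ^ ((1:ℝ)/2)) 2, ← Real.rpow_mul hB]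
    norm_num
  calc TI x (γ+1) δ ^ 2 ≤ (TI x γ δ ^ ((1:ℝ)/2) * TI x (γ+2) δ ^ ((1:ℝ)/2)) ^ 2 := by
        apply pow_le_pow_left₀ hL H
    _ = TI x γ δ * TI x (γ+2) δ := by rw [mul_pow, hA2, hB2]

lemma not_integrable_low {a c x : ℝ} (ha : 0 < a) (ha1 : a ≤ 1) (hc : c < 0) (hx : 0 < x) :
    ¬ IntegrableOn (fun t => Real.exp (-x * t) * t ^ (a - 1 - 1) * (1 + t) ^ (c - (a-1) - 1))
      (Set.Ioi (0:ℝ)) := by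
  intro h
  have h1 : IntegrableOn (fun t => Real.exp (-x * t) * t ^ (a - 1 - 1) * (1 + t) ^ (c - (a-1) - 1))
      (Set.Ioo (0:ℝ) 1) := h.mono_set (fun t ht => ht.1)
  have key : IntegrableOn (fun t : ℝ => t ^ (-1:ℝ)) (Set.Ioo (0:ℝ) 1) := by
    have hK : (0:ℝ) < Real.exp (-x) * (2:ℝ) ^ (c - a) := by positivity
    apply Integrable.mono' (h1.const_mul (Real.exp (-x) * (2:ℝ) ^ (c - a))⁻¹)
    · apply Measurable.aestronglyMeasurable; fun_prop
    · filter_upwards [ae_restrict_mem measurableSet_Ioo] with t ht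
      have ht0 : (0:ℝ) < t := ht.1
      have ht1 : t < 1 := ht.2
      rw [Real.norm_eq_abs, abs_of_nonneg (Real.rpow_nonneg ht0.le _)]
      have b1 : t ^ (-1:ℝ) ≤ t ^ (a - 1 - 1) :=
        Real.rpow_le_rpow_of_exponent_ge ht0 ht1.le (by linarith)
      have b2 : Real.exp (-x) ≤ Real.exp (-x * t) := by
        apply Real.exp_le_exp.2; nlinarith
      have b3 : (2:ℝ) ^ (c - a) ≤ (1 + t) ^ (c - (a-1) - 1) := by
        have : (c - (a-1) - 1) = c - a := by ring
        rw [this]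
        exact Real.rpow_le_rpow_of_nonpos (by linarith) (by linarith) (by linarith)
      have hfpos : Real.exp (-x) * (2:ℝ) ^ (c-a) * t ^ (-1:ℝ)
          ≤ Real.exp (-x * t) * t ^ (a - 1 - 1) * (1 + t) ^ (c - (a-1) - 1) := by
        have e1 : (0:ℝ) ≤ t ^ (-1:ℝ) := Real.rpow_nonneg ht0.le _
        have e2 : (0:ℝ) ≤ Real.exp (-x*t) := Real.exp_nonneg _
        have e3 : (0:ℝ) ≤ t ^ (a-1-1) := Real.rpow_nonneg ht0.le _
        have e4 : (0:ℝ) ≤ (2:ℝ) ^ (c-a) := by positivity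
        calc Real.exp (-x) * (2:ℝ) ^ (c-a) * t ^ (-1:ℝ)
            ≤ Real.exp (-x*t) * (2:ℝ) ^ (c-a) * t ^ (-1:ℝ) := by
              apply mul_le_mul_of_nonneg_right (mul_le_mul_of_nonneg_right b2 e4) e1
          _ ≤ Real.exp (-x*t) * (2:ℝ) ^ (c-a) * t ^ (a-1-1) := by
              apply mul_le_mul_of_nonneg_left b1 (by positivity)
          _ = Real.exp (-x*t) * t ^ (a-1-1) * (2:ℝ) ^ (c-a) := by ring
          _ ≤ Real.exp (-x*t) * t ^ (a-1-1) * (1 + t) ^ (c - (a-1) - 1) := by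
              apply mul_le_mul_of_nonneg_left b3 (by positivity)
      rw [show (Real.exp (-x) * (2:ℝ) ^ (c - a))⁻¹ *
          (Real.exp (-x * t) * t ^ (a - 1 - 1) * (1 + t) ^ (c - (a-1) - 1))
          = (Real.exp (-x * t) * t ^ (a - 1 - 1) * (1 + t) ^ (c - (a-1) - 1)) /
            (Real.exp (-x) * (2:ℝ) ^ (c - a)) by ring]
      rw [le_div_iff₀ hK]
      nlinarith [hfpos]
  rw [intervalIntegral.integrableOn_Ioo_rpow_iff zero_lt_one] at key
  linarith

set_option maxHeartbeats 1000000 in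
theorem turan_shift_a_lower (a c x : ℝ) (ha : 0 < a) (hc : c < 0) (hx : 0 < x) :
    (tricomiPsi a c x) ^ 2 - tricomiPsi (a - 1) c x * tricomiPsi (a + 1) c x
      > (1 / (1 + a - c)) * (1 + x / (2 * c)) * (tricomiPsi a c x) ^ 2 := by
  have hG : 0 < Real.Gamma a := Real.Gamma_pos_of_pos ha
  have hβ : c - a - 1 ≤ 0 := by linarith
  have hψ : tricomiPsi a c x = (1/Real.Gamma a) * TI x (a-1) (c-a-1) := rfl
  have hIpos : 0 < TI x (a-1) (c-a-1) := TI_pos hx (by linarith) hβ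
  have hψpos : 0 < tricomiPsi a c x := by rw [hψ]; positivity
  have hcoef : (1 / (1 + a - c)) * (1 + x / (2 * c)) < 1 := by
    have h1 : (1:ℝ) < 1 + a - c := by linarith
    have h2 : x / (2*c) < 0 := div_neg_of_pos_of_neg hx (by linarith)
    have h3 : 0 < 1/(1+a-c) := by positivity
    have h4 : 1/(1+a-c) < 1 := by rw [div_lt_one (by linarith)]; linarith
    rcases le_or_gt (1 + x/(2*c)) 0 with h5 | h5
    · nlinarith
    · nlinarith
  rcases le_or_gt a 1 with hA | hA
  · -- junk case : tricomiPsi (a-1) c x = 0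
    have h0 : tricomiPsi (a-1) c x = 0 := by
      unfold tricomiPsi
      rw [integral_undef (not_integrable_low ha hA hc hx)]
      ring
    rw [h0, zero_mul, sub_zero]
    nlinarith [pow_pos hψpos 2]
  · -- main case
    have ha1 : (0:ℝ) < a - 1 := by linarith
    have hca : c - a ≤ 0 := by linarith
    have TIc : ∀ (γ1 γ2 δ1 δ2 : ℝ), γ1 = γ2 → δ1 = δ2 → TI x γ1 δ1 = TI x γ2 δ2 :=
      fun _ _ _ _ h1 h2 => by rw [h1, h2]
    set V := TI x (a-1) (c-a-1) with hIdef
    set J := TI x a (c-a-1) with hJdef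
    set L := TI x (a+1) (c-a-1) with hLdef
    set L2 := TI x (a+2) (c-a-1) with hL2def
    set Im := TI x (a-2) (c-a) with hImdef
    set Ip := TI x a (c-a-2) with hIpdef
    have hJpos : 0 < J := TI_pos hx (by linarith) hβ
    have hLpos : 0 < L := TI_pos hx (by linarith) hβ
    -- identity (i)
    have hi : x * J = a * V + (c-a-1) * Ip := by
      have := TI_rec (x := x) (γ := a) (δ := c-a-1) hx ha hβ
      rwa [TIc a a (c-a-1-1) (c-a-2) rfl (by ring), ← hIdef, ← hJdef, ← hIpdef] at this
    -- succ expansions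
    have hs1 : TI x (a-1) (c-a) = V + J := by
      have := TI_succ (x := x) (γ := a-1) (δ := c-a-1) hx (by linarith) (by linarith)
      rwa [TIc (a-1) (a-1) (c-a-1+1) (c-a) rfl (by ring), TIc (a-1+1) a (c-a-1) (c-a-1) (by ring) rfl,
        ← hIdef, ← hJdef] at this
    have hs2 : TI x a (c-a) = J + L := by
      have := TI_succ (x := x) (γ := a) (δ := c-a-1) hx (by linarith) (by linarith)
      rwa [TIc a a (c-a-1+1) (c-a) rfl (by ring), ← hJdef, ← hLdef] at this
    have hs3 : TI x (a+1) (c-a) = L + L2 := by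
      have := TI_succ (x := x) (γ := a+1) (δ := c-a-1) hx (by linarith) (by linarith)
      rwa [TIc (a+1) (a+1) (c-a-1+1) (c-a) rfl (by ring), TIc (a+1+1) (a+2) (c-a-1) (c-a-1) (by ring) rfl,
        ← hLdef, ← hL2def] at this
    -- identity (ii)
    have hii : x * (V + J) = (a-1) * Im + (c-a) * V := by
      have := TI_rec (x := x) (γ := a-1) (δ := c-a) hx ha1 hca
      rwa [hs1, TIc (a-1-1) (a-2) (c-a) (c-a) (by ring) rfl, ← hImdef, ← hIdef] at this
    -- identity (iii)
    have hiii : x * (J + L) = a * (V + J) + (c-a) * J := by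
      have := TI_rec (x := x) (γ := a) (δ := c-a) hx ha hca
      rwa [hs2, hs1, ← hJdef] at this
    -- identity (iv)
    have hiv : x * (L + L2) = (a+1) * (J + L) + (c-a) * L := by
      have := TI_rec (x := x) (γ := a+1) (δ := c-a) hx (by linarith) hca
      rwa [hs3, TIc (a+1-1) a (c-a) (c-a) (by ring) rfl, hs2, ← hLdef] at this
    -- Cauchy-Schwarz
    have hCS : L^2 ≤ J * L2 := by
      have := TI_cauchy_schwarz (x := x) (γ := a) (δ := c-a-1) hx (by linarith) hβ
      rwa [← hLdef, ← hJdef, ← hL2def] at this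
    clear_value V J L L2 Im Ip
    -- R = x*L
    have hR : x * L = a*V + c*J - x*J := by linarith
    have h2 : x*(x*L2) = x*(a+1)*J + (1+c-x)*(x*L) := by linear_combination x * hiv
    have h1 : (x*L)^2 ≤ J * (x*(x*L2)) := by nlinarith [mul_le_mul_of_nonneg_left hCS (sq_nonneg x)]
    have hPt : (a*V + c*J - x*J)^2 ≤ x*(a+1)*J^2 + (1+c-x)*(a*V + c*J - x*J)*J := by
      have h3 : (x*L)^2 ≤ x*(a+1)*J^2 + (1+c-x)*(x*L)*J := by
        calc (x*L)^2 ≤ J * (x*(x*L2)) := h1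
          _ = x*(a+1)*J^2 + (1+c-x)*(x*L)*J := by rw [h2]; ring
      rwa [hR] at h3
    -- positive target
    have hT : 0 < a*(1+a-c)*(-2*c)*V^2 + 2*c*((x*(V+J)+(a-c)*V)*(a*V-x*J)) + a*(2*c+x)*V^2 := by
      have c0 : (0:ℝ) < 4*(-c) := by linarith
      have c1 : 0 ≤ x*(4*(-c))*(x*(a+1)*J^2 + (1+c-x)*(a*V+c*J-x*J)*J - (a*V+c*J-x*J)^2) :=
        mul_nonneg (mul_pos hx c0).le (by linarith [hPt])
      have c2 : 0 ≤ x*(2*(-c)*J - a*V)^2 := by positivity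
      have c3 : 0 < x*(a^2*V^2) := by positivity
      have hid : 2*a*(a*(1+a-c)*(-2*c)*V^2 + 2*c*((x*(V+J)+(a-c)*V)*(a*V-x*J)) + a*(2*c+x)*V^2)
          = x*(4*(-c))*(x*(a+1)*J^2 + (1+c-x)*(a*V+c*J-x*J)*J - (a*V+c*J-x*J)^2)
            + x*(2*(-c)*J - a*V)^2 + x*(a^2*V^2) := by ring
      nlinarith [c1, c2, c3, hid, ha]
    -- Gamma relations
    have hGm : Real.Gamma a = (a-1) * Real.Gamma (a-1) := by
      have := Real.Gamma_add_one (ne_of_gt ha1)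
      rwa [show a - 1 + 1 = a by ring] at this
    have hGmpos : 0 < Real.Gamma (a-1) := Real.Gamma_pos_of_pos ha1
    have hGp : Real.Gamma (a+1) = a * Real.Gamma a := Real.Gamma_add_one ha.ne'
    -- psi values
    have hψm : tricomiPsi (a-1) c x = (1/Real.Gamma (a-1)) * Im := by
      have e : tricomiPsi (a-1) c x = (1/Real.Gamma (a-1)) * TI x (a-1-1) (c-(a-1)-1) := rfl
      rw [e, TIc (a-1-1) (a-2) (c-(a-1)-1) (c-a) (by ring) (by ring), ← hImdef]
    have hψp : tricomiPsi (a+1) c x = (1/Real.Gamma (a+1)) * Ip := by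
      have e : tricomiPsi (a+1) c x = (1/Real.Gamma (a+1)) * TI x (a+1-1) (c-(a+1)-1) := rfl
      rw [e, TIc (a+1-1) a (c-(a+1)-1) (c-a-2) (by ring) (by ring), ← hIpdef]
    -- substitute Im, Ip
    have eIm : Im = (x*(V+J) + (a-c)*V) / (a-1) := by
      rw [eq_div_iff (ne_of_gt ha1)]; linarith
    have eIp : Ip = (a*V - x*J) / (1+a-c) := by
      rw [eq_div_iff (by linarith : (1:ℝ)+a-c ≠ 0)]; nlinarith [hi]
    have hne1 : Real.Gamma (a-1) ≠ 0 := ne_of_gt hGmpos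
    have hne2 : (a:ℝ) ≠ 0 := ha.ne'
    have hne3 : (a:ℝ)-1 ≠ 0 := ne_of_gt ha1
    have hne4 : (1:ℝ)+a-c ≠ 0 := by linarith
    have hne5 : (c:ℝ) ≠ 0 := ne_of_lt hc
    have key : tricomiPsi a c x ^ 2 - tricomiPsi (a-1) c x * tricomiPsi (a+1) c x
        - (1 / (1 + a - c)) * (1 + x / (2 * c)) * tricomiPsi a c x ^ 2
        = (a*(1+a-c)*(-2*c)*V^2 + 2*c*((x*(V+J)+(a-c)*V)*(a*V-x*J)) + a*(2*c+x)*V^2)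
          / (a*(1+a-c)*(-2*c)*((a-1) * Real.Gamma (a-1))^2) := by
      rw [hψ, hψm, hψp, hGp, hGm, eIm, eIp]
      field_simp
      ring
    have hD : 0 < a*(1+a-c)*(-2*c)*((a-1) * Real.Gamma (a-1))^2 := by
      have : (0:ℝ) < (a-1) * Real.Gamma (a-1) := by positivity
      have h6 : (0:ℝ) < 1+a-c := by linarith
      have h7 : (0:ℝ) < -2*c := by linarith
      positivity
    have := div_pos hT hD
    linarith [key, this]
end

section
/- For a > 1, c < −1, and x > 0, define Δₐ(x) = ψ(a,c,x)² − ψ(a−1,c,x)·ψ(a+1,c,x). Then Δₐ(x) > (1/(1+a−c))·(1 − x²·(c−a)/(c²(c+1)))·ψ(a,c,x)². -/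
open MeasureTheory Real Set Filter

namespace TuranProof


/-- integrand -/
noncomputable def g (x p q t : ℝ) : ℝ := Real.exp (-x * t) * t ^ p * (1 + t) ^ q

lemma g_contOn (x p q : ℝ) : ContinuousOn (g x p q) (Ioi 0) := by
  apply ContinuousOn.mul
  · apply ContinuousOn.mul
    · exact (Real.continuous_exp.comp (continuous_const.mul continuous_id)).continuousOn
    · intro t ht
      exact (Real.continuousAt_rpow_const t p (Or.inl (ne_of_gt ht))).continuousWithinAt
  · intro t ht
    have h1 : (1 : ℝ) + t ≠ 0 := by have : (0:ℝ) < t := ht; positivity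
    exact (ContinuousAt.comp (Real.continuousAt_rpow_const _ q (Or.inl h1))
      (continuous_const.add continuous_id).continuousAt).continuousWithinAt

lemma integrable_exp_rpow {x p : ℝ} (hx : 0 < x) (hp : -1 < p) :
    IntegrableOn (fun t : ℝ => Real.exp (-x * t) * t ^ p) (Ioi 0) := by
  have h0 : IntegrableOn (fun u : ℝ => Real.exp (-u) * u ^ ((p + 1) - 1)) (Ioi 0) :=
    Real.GammaIntegral_convergent (by linarith)
  have h1 : IntegrableOn (fun t : ℝ => Real.exp (-(x * t)) * (x * t) ^ ((p + 1) - 1))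
      (Ioi 0) := by
    have := (integrableOn_Ioi_comp_mul_left_iff
      (fun u : ℝ => Real.exp (-u) * u ^ ((p + 1) - 1)) (0 : ℝ) hx).mpr
    simp only [mul_zero] at this
    exact this h0
  have h2 : IntegrableOn (fun t : ℝ => (x ^ p)⁻¹ * (Real.exp (-(x * t)) * (x * t) ^ ((p + 1) - 1))) (Ioi 0) := h1.const_mul (x ^ p)⁻¹
  apply h2.congr_fun ?_ measurableSet_Ioi
  intro t ht
  have ht' : (0:ℝ) < t := ht
  simp only [add_sub_cancel_right]
  rw [Real.mul_rpow hx.le ht'.le]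
  field_simp [neg_mul]

lemma g_integrable {x p : ℝ} (hx : 0 < x) (hp : -1 < p) (q : ℝ) :
    IntegrableOn (g x p q) (Ioi 0) := by
  have hbound : IntegrableOn
      (fun t : ℝ => 2 ^ |q| * (Real.exp (-x * t) * t ^ p)
        + 2 ^ |q| * (Real.exp (-x * t) * t ^ (p + |q|))) (Ioi 0) :=
    ((integrable_exp_rpow hx hp).const_mul _).add
      ((integrable_exp_rpow hx (by linarith [abs_nonneg q] : (-1:ℝ) < p + |q|)).const_mul _)
  apply Integrable.mono' hbound
  · exact (g_contOn x p q).aestronglyMeasurable measurableSet_Ioi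
  · filter_upwards [ae_restrict_mem measurableSet_Ioi] with t ht
    have ht' : (0:ℝ) < t := ht
    have h1t : (0:ℝ) < 1 + t := by linarith
    have hgpos : 0 ≤ g x p q t := by
      unfold g
      positivity
    rw [Real.norm_of_nonneg hgpos]
    unfold g
    have key : (1 + t) ^ q ≤ 2 ^ |q| * (1 + t ^ |q|) := by
      have h1 : (1 + t) ^ q ≤ (1 + t) ^ |q| :=
        Real.rpow_le_rpow_of_exponent_le (by linarith) (le_abs_self q)
      have h2 : (1 + t) ^ |q| ≤ (2 * max 1 t) ^ |q| := by
        apply Real.rpow_le_rpow h1t.le ?_ (abs_nonneg q)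
        rcases le_total t 1 with h | h
        · simp [max_eq_left h]; linarith
        · simp [max_eq_right h]; linarith
      have h3 : (2 * max 1 t) ^ |q| = 2 ^ |q| * (max 1 t) ^ |q| :=
        Real.mul_rpow (by norm_num) (le_max_of_le_left zero_le_one)
      have h4 : (max 1 t) ^ |q| ≤ 1 + t ^ |q| := by
        rcases le_total t 1 with h | h
        · simp only [max_eq_left h, Real.one_rpow]
          have : (0:ℝ) ≤ t ^ |q| := Real.rpow_nonneg ht'.le _
          linarith
        · simp only [max_eq_right h]
          have : (0:ℝ) ≤ 1 := zero_le_one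
          linarith [Real.rpow_nonneg ht'.le |q|]
      calc (1 + t) ^ q ≤ (2 * max 1 t) ^ |q| := le_trans h1 h2
        _ = 2 ^ |q| * (max 1 t) ^ |q| := h3
        _ ≤ 2 ^ |q| * (1 + t ^ |q|) := by
            apply mul_le_mul_of_nonneg_left h4 (by positivity)
    have hexp : (0:ℝ) < Real.exp (-x * t) := Real.exp_pos _
    have htp : (0:ℝ) ≤ t ^ p := Real.rpow_nonneg ht'.le _
    calc Real.exp (-x*t) * t ^ p * (1+t) ^ q
        ≤ Real.exp (-x*t) * t ^ p * (2 ^ |q| * (1 + t ^ |q|)) := by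
          apply mul_le_mul_of_nonneg_left key (by positivity)
      _ = 2 ^ |q| * (Real.exp (-x*t) * t ^ p) + 2 ^ |q| * (Real.exp (-x*t) * t ^ (p + |q|)) := by
          rw [Real.rpow_add ht']
          ring




noncomputable def J (x p q : ℝ) : ℝ := ∫ t in Ioi (0:ℝ), g x p q t

variable {x p q : ℝ}


lemma g_pos {t : ℝ} (ht : 0 < t) : 0 < g x p q t := by
  unfold g
  have : (0:ℝ) < 1 + t := by linarith
  positivity

lemma J_pos (hx : 0 < x) (hp : -1 < p) (q : ℝ) : 0 < J x p q := by
  rw [J, setIntegral_pos_iff_support_of_nonneg_ae]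
  · have hsupp : (Function.support (g x p q)) ∩ Ioi 0 = Ioi 0 := by
      rw [inter_eq_right]
      intro t ht
      exact (g_pos ht).ne'
    rw [hsupp, volume_Ioi]
    exact ENNReal.zero_lt_top
  · filter_upwards [ae_restrict_mem measurableSet_Ioi] with t ht
    exact (g_pos ht).le
  · exact g_integrable hx hp q

/-- splitting (1+t) factor -/
lemma J_split (hx : 0 < x) (hp : -1 < p) (q : ℝ) :
    J x p (q + 1) = J x p q + J x (p + 1) q := by
  rw [J, J, J, ← integral_add (g_integrable hx hp q) (g_integrable hx (by linarith) q)]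
  apply setIntegral_congr_fun measurableSet_Ioi
  intro t ht
  have ht' : (0:ℝ) < t := ht
  have h1t : (0:ℝ) < 1 + t := by linarith
  show Real.exp (-x*t) * t ^ p * (1+t) ^ (q+1)
      = Real.exp (-x*t) * t ^ p * (1+t) ^ q + Real.exp (-x*t) * t ^ (p+1) * (1+t) ^ q
  rw [Real.rpow_add_one h1t.ne', Real.rpow_add_one ht'.ne']
  ring

lemma g_tendsto_zero (hx : 0 < x) (p q : ℝ) :
    Tendsto (g x p q) atTop (nhds 0) := by
  have h1 : Tendsto (fun t : ℝ => t ^ p * Real.exp (-(x/2) * t)) atTop (nhds 0) :=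
    tendsto_rpow_mul_exp_neg_mul_atTop_nhds_zero p (x/2) (by linarith)
  have h2 : Tendsto (fun t : ℝ => (1+t) ^ q * Real.exp (-(x/2) * (1+t))) atTop (nhds 0) := by
    apply (tendsto_rpow_mul_exp_neg_mul_atTop_nhds_zero q (x/2) (by linarith)).comp
    exact tendsto_atTop_add_const_left atTop 1 tendsto_id
  have h3 := (h1.mul h2).const_mul (Real.exp ((x/2)))
  simp only [mul_zero, zero_mul] at h3 h1 h2
  apply h3.congr'
  filter_upwards [eventually_gt_atTop (0:ℝ)] with t ht
  have hexp : Real.exp (x/2) * Real.exp (-(x/2)*t) * Real.exp (-(x/2)*(1+t))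
      = Real.exp (-x*t) := by
    rw [← Real.exp_add, ← Real.exp_add]; congr 1; ring
  unfold g
  rw [← hexp]
  ring

lemma g_deriv (hx : 0 < x) {p : ℝ} (q : ℝ) {t : ℝ} (ht : 0 < t) :
    HasDerivAt (g x p q)
      (-x * g x p q t + p * g x (p-1) q t + q * g x p (q-1) t) t := by
  have h1t : (0:ℝ) < 1 + t := by linarith
  have hexp : HasDerivAt (fun t : ℝ => Real.exp (-x * t)) (Real.exp (-x * t) * (-x)) t := by
    have : HasDerivAt (fun t : ℝ => -x * t) (-x) t := by
      simpa using (hasDerivAt_id t).const_mul (-x)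
    exact this.exp
  have hrp : HasDerivAt (fun t : ℝ => t ^ p) (p * t ^ (p - 1)) t :=
    Real.hasDerivAt_rpow_const (Or.inl ht.ne')
  have hrq : HasDerivAt (fun t : ℝ => (1 + t) ^ q) (q * (1 + t) ^ (q - 1)) t := by
    have hadd : HasDerivAt (fun t : ℝ => 1 + t) 1 t := by
      simpa using (hasDerivAt_id t).const_add 1
    have := (Real.hasDerivAt_rpow_const (p := q) (Or.inl h1t.ne')).comp t hadd
    rw [mul_one] at this
    exact this
  have h := (hexp.mul hrp).mul hrq
  have hg : g x p q = fun t => Real.exp (-x*t) * t ^ p * (1+t) ^ q := rfl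
  rw [hg]
  simp only [Pi.mul_apply] at h
  refine h.congr_deriv ?_
  unfold g
  rw [Real.rpow_sub_one ht.ne', Real.rpow_sub_one h1t.ne']
  field_simp

lemma g_cont_at_zero (hx : 0 < x) (hp : 0 < p) (q : ℝ) :
    ContinuousWithinAt (g x p q) (Ici 0) 0 := by
  unfold g
  apply ContinuousWithinAt.mul
  apply ContinuousWithinAt.mul
  · exact ((Real.continuous_exp.comp (continuous_const.mul continuous_id)).continuousAt).continuousWithinAt
  · exact (Real.continuousAt_rpow_const 0 p (Or.inr hp.le)).continuousWithinAt
  · apply ContinuousAt.continuousWithinAt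
    apply ContinuousAt.comp (Real.continuousAt_rpow_const _ q (Or.inl (by norm_num)))
    exact (continuous_const.add continuous_id).continuousAt

lemma g_zero (hp : 0 < p) (x q : ℝ) : g x p q 0 = 0 := by
  unfold g
  rw [Real.zero_rpow hp.ne']
  ring

/-- Integration by parts identity -/
lemma J_ibp (hx : 0 < x) (hp : 0 < p) (q : ℝ) :
    x * J x p q = p * J x (p-1) q + q * J x p (q-1) := by
  have hint : IntegrableOn (fun t => -x * g x p q t + p * g x (p-1) q t + q * g x p (q-1) t)
      (Ioi 0) := by
    exact (((g_integrable hx (by linarith) q).const_mul _).add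
      ((g_integrable hx (by linarith) q).const_mul _)).add
      ((g_integrable hx (by linarith) (q-1)).const_mul _)
  have key : ∫ t in Ioi (0:ℝ), (-x * g x p q t + p * g x (p-1) q t + q * g x p (q-1) t)
      = 0 - g x p q 0 := by
    apply integral_Ioi_of_hasDerivAt_of_tendsto (g_cont_at_zero hx hp q)
      (fun t ht => g_deriv hx q ht) hint (g_tendsto_zero hx p q)
  rw [g_zero hp, sub_zero] at key
  have expand : ∫ t in Ioi (0:ℝ), (-x * g x p q t + p * g x (p-1) q t + q * g x p (q-1) t)
      = -x * J x p q + p * J x (p-1) q + q * J x p (q-1) := by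
    have e1 : ∫ t in Ioi (0:ℝ), (-x * g x p q t + p * g x (p-1) q t + q * g x p (q-1) t)
        = (∫ t in Ioi (0:ℝ), (-x * g x p q t + p * g x (p-1) q t))
          + ∫ t in Ioi (0:ℝ), q * g x p (q-1) t :=
      integral_add (((g_integrable hx (by linarith) q).const_mul _).add
          ((g_integrable hx (by linarith) q).const_mul _))
        ((g_integrable hx (by linarith) (q-1)).const_mul _)
    have e2 : ∫ t in Ioi (0:ℝ), (-x * g x p q t + p * g x (p-1) q t)
        = (∫ t in Ioi (0:ℝ), -x * g x p q t) + ∫ t in Ioi (0:ℝ), p * g x (p-1) q t :=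
      integral_add ((g_integrable hx (by linarith) q).const_mul _)
        ((g_integrable hx (by linarith) q).const_mul _)
    rw [e1, e2, integral_const_mul, integral_const_mul, integral_const_mul]
    rfl
  rw [expand] at key
  linarith







lemma g_mul_t {x p q t : ℝ} (ht : 0 < t) : t * g x p q t = g x (p+1) q t := by
  unfold g
  rw [Real.rpow_add_one ht.ne']
  ring

/-- Cauchy-Schwarz for the moments -/
lemma J_cs {x r : ℝ} (hx : 0 < x) (hr : 0 < r) (q : ℝ) :
    (J x (r+1) q)^2 ≤ J x r q * J x (r+2) q := by
  set lam := J x (r+1) q / J x r q with hlam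
  have h0 : 0 < J x r q := J_pos hx (by linarith) q
  have hint : IntegrableOn
      (fun t => g x (r+2) q t - 2*lam * g x (r+1) q t + lam^2 * g x r q t) (Ioi 0) := by
    exact ((g_integrable hx (by linarith) q).sub
      ((g_integrable hx (by linarith) q).const_mul _)).add
      ((g_integrable hx (by linarith) q).const_mul _)
  have hnn : 0 ≤ ∫ t in Ioi (0:ℝ),
      (g x (r+2) q t - 2*lam * g x (r+1) q t + lam^2 * g x r q t) := by
    apply setIntegral_nonneg measurableSet_Ioi
    intro t ht
    have ht' : (0:ℝ) < t := ht
    have key : g x (r+2) q t - 2*lam * g x (r+1) q t + lam^2 * g x r q t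
        = (t - lam)^2 * g x r q t := by
      rw [show r+(2:ℝ) = (r+1)+1 by ring, ← g_mul_t ht', ← g_mul_t ht']
      ring
    rw [key]
    have : (0:ℝ) < 1 + t := by linarith
    have hg : 0 ≤ g x r q t := by unfold g; positivity
    positivity
  have hexpand : ∫ t in Ioi (0:ℝ),
      (g x (r+2) q t - 2*lam * g x (r+1) q t + lam^2 * g x r q t)
      = J x (r+2) q - 2*lam * J x (r+1) q + lam^2 * J x r q := by
    have e1 : ∫ t in Ioi (0:ℝ),
        (g x (r+2) q t - 2*lam * g x (r+1) q t + lam^2 * g x r q t)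
        = (∫ t in Ioi (0:ℝ), (g x (r+2) q t - 2*lam * g x (r+1) q t))
          + ∫ t in Ioi (0:ℝ), lam^2 * g x r q t :=
      integral_add ((g_integrable hx (by linarith) q).sub
        ((g_integrable hx (by linarith) q).const_mul _))
        ((g_integrable hx (by linarith) q).const_mul _)
    have e2 : ∫ t in Ioi (0:ℝ), (g x (r+2) q t - 2*lam * g x (r+1) q t)
        = (∫ t in Ioi (0:ℝ), g x (r+2) q t) - ∫ t in Ioi (0:ℝ), 2*lam * g x (r+1) q t :=
      integral_sub (g_integrable hx (by linarith) q)
        ((g_integrable hx (by linarith) q).const_mul _)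
    rw [e1, e2, integral_const_mul, integral_const_mul]
    rfl
  rw [hexpand] at hnn
  have : lam * J x r q = J x (r+1) q := by
    rw [hlam, div_mul_cancel₀ _ h0.ne']
  nlinarith [sq_nonneg lam, h0]



/-- The key algebraic lemma. -/
lemma key_alg (a d x A0 A1 : ℝ) (ha : 1 < a) (hd : 1 < d) (hx : 0 < x)
    (h0 : 0 < A0) (h1 : 0 < A1)
    (hcs : 0 ≤ (a*x - d)*A1^2 + a*(1+x+d)*A0*A1 - a^2*A0^2) :
    0 < d^2*(d-1)*(x*A1^2 + (x+d)*A0*A1 - a*A0^2) + a*(a+d)*x*A0^2 := by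
  have hd0 : (0:ℝ) < d := by linarith
  have ha0 : (0:ℝ) < a := by linarith
  rcases le_or_gt (a*A0) (d*A1) with hcase | hcase
  · -- trivial case : d*A1 ≥ a*A0
    have h5 : d^2*(d-1)*(a*A0*A0) ≤ d^2*(d-1)*(d*A1*A0) := by
      apply mul_le_mul_of_nonneg_left (mul_le_mul_of_nonneg_right hcase h0.le)
      nlinarith [sq_nonneg d]
    have h6 : 0 < d^2*(d-1)*(x*A1^2) := by
      have : (0:ℝ) < d - 1 := by linarith
      positivity
    have h7 : 0 < d^2*(d-1)*(x*(A0*A1)) := by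
      have : (0:ℝ) < d - 1 := by linarith
      positivity
    have h8 : 0 < a*(a+d)*x*A0^2 := by positivity
    nlinarith [h5, h6, h7, h8]
  · -- main case : σ := a*A0 - d*A1 > 0
    have hσ : 0 < a*A0 - d*A1 := by linarith
    have hE : 0 < d^2*(A1^2 + A0*A1) := by positivity
    have hEbound : d*(a*A0 - d*A1)*((a*A0 - d*A1) + a*(d-1)*A0)
        ≤ a*x*(d^2*(A1^2 + A0*A1)) := by
      nlinarith [mul_nonneg (sq_nonneg d) hcs]
    have hC : (d*A1)^2*(d*A1 + d*A0) < a^2*(a+d)*A0^3 := by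
      have hu : 0 < d*A1 := mul_pos hd0 h1
      have hv : 0 < a*A0 := mul_pos ha0 h0
      have hw0 : 0 < d*A0 := mul_pos hd0 h0
      have s1 : (d*A1)^2 ≤ (a*A0)^2 := by nlinarith [hcase, hu]
      have s2 : d*A1 + d*A0 < a*A0 + d*A0 := by linarith
      have s3 : (d*A1)^2*(d*A1 + d*A0) ≤ (a*A0)^2*(d*A1 + d*A0) :=
        mul_le_mul_of_nonneg_right s1 (by linarith)
      have s4 : (a*A0)^2*(d*A1 + d*A0) < (a*A0)^2*(a*A0 + d*A0) := by
        apply mul_lt_mul_of_pos_left s2 (by positivity)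
      nlinarith [s3, s4]
    set σ := a*A0 - d*A1 with hσdef
    set E := d^2*(A1^2 + A0*A1) with hEdef
    have k1 : (d-1)*E*(d*σ*(σ + a*(d-1)*A0)) ≤ (d-1)*E*(a*x*E) :=
      mul_le_mul_of_nonneg_left hEbound (mul_nonneg (by linarith : (0:ℝ) ≤ d-1) hE.le)
    have k2 : a*(a+d)*A0^2*(d*σ*(σ + a*(d-1)*A0)) ≤ a*(a+d)*A0^2*(a*x*E) :=
      mul_le_mul_of_nonneg_left hEbound (by positivity)
    have hmain : 0 < (a*E) * (d^2*(d-1)*(x*A1^2 + (x+d)*A0*A1 - a*A0^2) + a*(a+d)*x*A0^2) := by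
      have e1 : (a*E) * (d^2*(d-1)*(x*A1^2 + (x+d)*A0*A1 - a*A0^2) + a*(a+d)*x*A0^2)
          = (d-1)*E*(a*x*E) + a*(a+d)*A0^2*(a*x*E) - a*d^2*(d-1)*σ*A0*E := by
        rw [hσdef, hEdef]; ring
      have e2 : (d-1)*E*(d*σ*(σ + a*(d-1)*A0)) + a*(a+d)*A0^2*(d*σ*(σ + a*(d-1)*A0))
            - a*d^2*(d-1)*σ*A0*E
          = d*σ*( a*(a+d)*A0^2*σ
              + (d-1)*(a^2*(a+d)*A0^3 - (d*A1)^2*(d*A1 + d*A0)) ) := by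
        rw [hσdef, hEdef]; ring
      have e3 : 0 < d*σ*( a*(a+d)*A0^2*σ
          + (d-1)*(a^2*(a+d)*A0^3 - (d*A1)^2*(d*A1 + d*A0)) ) := by
        have hb1 : 0 < a*(a+d)*A0^2*σ := mul_pos (by positivity) hσ
        have hb2 : 0 < a^2*(a+d)*A0^3 - (d*A1)^2*(d*A1 + d*A0) := by linarith
        have hb3 : 0 ≤ (d-1)*(a^2*(a+d)*A0^3 - (d*A1)^2*(d*A1 + d*A0)) := by
          apply mul_nonneg (by linarith) hb2.le
        have : 0 < d*σ := mul_pos hd0 hσ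
        nlinarith [this, hb1, hb3]
      linarith [k1, k2, e3, e1.ge, e2.le]
    exact pos_of_mul_pos_right hmain (mul_pos ha0 hE).le



lemma final_alg (a c x A0 A1 : ℝ) (hc : c < -1)
    (hkey : 0 < (-c)^2*(-c-1)*(x*A1^2 + (x + -c)*A0*A1 - a*A0^2) + a*(a + -c)*x*A0^2) :
    0 < x*A1^2 + (x - c)*A0*A1 + (a*((c-a)/(c^2*(c+1)))*x - a)*A0^2 := by
  have hc2 : (0:ℝ) < c^2 := by nlinarith
  have hccneg : c^2*(c+1) < 0 := mul_neg_of_pos_of_neg hc2 (by linarith)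
  have hcc : c^2*(c+1) ≠ 0 := hccneg.ne
  have hden : 0 < (-c)^2*(-c-1) := by nlinarith
  have hKval : ((-c)^2*(-c-1)) * ((c-a)/(c^2*(c+1))) = a + -c := by
    rw [mul_div_assoc', div_eq_iff hcc]
    ring
  have expand : ((-c)^2*(-c-1)) * (x*A1^2 + (x - c)*A0*A1 + (a*((c-a)/(c^2*(c+1)))*x - a)*A0^2)
      = (-c)^2*(-c-1)*(x*A1^2 + (x + -c)*A0*A1 - a*A0^2) + a*(a + -c)*x*A0^2 := by
    linear_combination (a*x*A0^2) * hKval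
  nlinarith [hkey, hden, expand]

lemma heq_alg (a c x A0 A1 G : ℝ) (ha1 : a - 1 ≠ 0) (ha0 : a ≠ 0) (hG : G ≠ 0)
    (hgam : 1 + a - c ≠ 0) (hca : c - a - 1 ≠ 0) (hcc : c^2*(c+1) ≠ 0) :
    (1/((a-1)*G) * A0)^2
      - 1/G * ((x*(A0+A1) + (a-c)*A0)/(a-1)) * (1/(a*((a-1)*G)) * ((x*A1 - a*A0)/(c-a-1)))
      - 1/(1+a-c) * (1 - x^2*((c-a)/(c^2*(c+1)))) * (1/((a-1)*G) * A0)^2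
    = x / ((1+a-c)*a*((a-1)*G)^2)
      * (x*A1^2 + (x-c)*A0*A1 + (a*((c-a)/(c^2*(c+1)))*x - a)*A0^2) := by
  field_simp
  ring

/-- Master inequality in terms of the moments. -/
lemma master {a c x : ℝ} (ha : 1 < a) (hc : c < -1) (hx : 0 < x) :
    0 < x*(J x a (c-a-1))^2 + (x - c)*(J x (a-1) (c-a-1))*(J x a (c-a-1))
      + (a*((c-a)/(c^2*(c+1)))*x - a)*(J x (a-1) (c-a-1))^2 := by
  have ha0 : (0:ℝ) < a := by linarith
  have hxne : x ≠ 0 := hx.ne'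
  have hA0 : 0 < J x (a-1) (c-a-1) := J_pos hx (by linarith) _
  have hA1 : 0 < J x a (c-a-1) := J_pos hx (by linarith) _
  -- splitting identities
  have split2 : J x a (c-a) = J x a (c-a-1) + J x (a+1) (c-a-1) := by
    have := J_split hx (p := a) (by linarith) (c-a-1)
    rwa [show c - a - 1 + 1 = c - a by ring] at this
  have split1 : J x (a-1) (c-a) = J x (a-1) (c-a-1) + J x a (c-a-1) := by
    have := J_split hx (p := a-1) (by linarith) (c-a-1)
    rwa [show c - a - 1 + 1 = c - a by ring, show a - 1 + 1 = a by ring] at this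
  have split3 : J x (a+1) (c-a) = J x (a+1) (c-a-1) + J x (a+2) (c-a-1) := by
    have := J_split hx (p := a+1) (by linarith) (c-a-1)
    rwa [show c - a - 1 + 1 = c - a by ring, show a + 1 + 1 = a + 2 by ring] at this
  -- integration by parts identities
  have ibp3 : x * (J x a (c-a-1) + J x (a+1) (c-a-1))
      = a * (J x (a-1) (c-a-1) + J x a (c-a-1)) + (c-a) * J x a (c-a-1) := by
    have := J_ibp hx (p := a) ha0 (c-a)
    rwa [split2, split1, show c - a - 1 = c - a - 1 by ring] at this
  have ibp4 : x * (J x (a+1) (c-a-1) + J x (a+2) (c-a-1))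
      = (a+1) * (J x a (c-a-1) + J x (a+1) (c-a-1)) + (c-a) * J x (a+1) (c-a-1) := by
    have := J_ibp hx (p := a+1) (by linarith) (c-a)
    rwa [show a + 1 - 1 = a by ring, split3, split2] at this
  -- Cauchy-Schwarz
  have hcs : (J x (a+1) (c-a-1))^2 ≤ J x a (c-a-1) * J x (a+2) (c-a-1) :=
    J_cs hx ha0 (c-a-1)
  -- translate CS into the key quadratic inequality
  have hA2e : J x (a+1) (c-a-1)
      = (a*(J x (a-1) (c-a-1)) + c*(J x a (c-a-1)) - x*(J x a (c-a-1)))/x := by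
    rw [eq_div_iff hxne]
    nlinarith [ibp3]
  have hA3e : J x (a+2) (c-a-1)
      = ((a+1)*(J x a (c-a-1)) + (c+1)*(J x (a+1) (c-a-1)) - x*(J x (a+1) (c-a-1)))/x := by
    rw [eq_div_iff hxne]
    nlinarith [ibp4]
  have hqcs : 0 ≤ (a*x + c)*(J x a (c-a-1))^2
      + a*(1+x-c)*(J x (a-1) (c-a-1))*(J x a (c-a-1)) - a^2*(J x (a-1) (c-a-1))^2 := by
    have h1 : 0 ≤ x^2 * (J x a (c-a-1) * J x (a+2) (c-a-1) - (J x (a+1) (c-a-1))^2) := by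
      apply mul_nonneg (sq_nonneg x)
      linarith
    have h2 : x^2 * (J x a (c-a-1) * J x (a+2) (c-a-1) - (J x (a+1) (c-a-1))^2)
        = (a*x + c)*(J x a (c-a-1))^2
          + a*(1+x-c)*(J x (a-1) (c-a-1))*(J x a (c-a-1)) - a^2*(J x (a-1) (c-a-1))^2 := by
      rw [hA3e, hA2e]
      field_simp
      ring
    linarith [h1, h2.le, h2.ge]
  -- apply the key algebraic lemma with d = -c
  have hkey := key_alg a (-c) x (J x (a-1) (c-a-1)) (J x a (c-a-1)) ha (by linarith) hx hA0 hA1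
    (by nlinarith [hqcs])
  -- conclude
  exact final_alg a c x _ _ hc hkey

end TuranProof

open MeasureTheory Real

theorem turan_shift_a_lower2 (a c x : ℝ) (ha : 1 < a) (hc : c < -1) (hx : 0 < x) :
    (tricomiPsi a c x) ^ 2 - tricomiPsi (a - 1) c x * tricomiPsi (a + 1) c x
      > (1 / (1 + a - c)) * (1 - x ^ 2 * ((c - a) / (c ^ 2 * (c + 1)))) * (tricomiPsi a c x) ^ 2 := by
  have ha0 : (0:ℝ) < a := by linarith
  have ha1 : (0:ℝ) < a - 1 := by linarith
  have hxne : x ≠ 0 := hx.ne'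
  have hA0 : 0 < TuranProof.J x (a-1) (c-a-1) := TuranProof.J_pos hx (by linarith) _
  have hA1 : 0 < TuranProof.J x a (c-a-1) := TuranProof.J_pos hx (by linarith) _
  -- expressing the Tricomi psi values
  have hpsi : tricomiPsi a c x = (1 / Real.Gamma a) * TuranProof.J x (a-1) (c-a-1) := by
    simp only [tricomiPsi, TuranProof.J, TuranProof.g]
  have hpsim : tricomiPsi (a-1) c x = (1 / Real.Gamma (a-1)) * TuranProof.J x (a-2) (c-a) := by
    have e1 : a - 1 - 1 = a - 2 := by ring
    have e2 : c - (a-1) - 1 = c - a := by ring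
    simp only [tricomiPsi, TuranProof.J, TuranProof.g, e1, e2]
  have hpsip : tricomiPsi (a+1) c x = (1 / Real.Gamma (a+1)) * TuranProof.J x a (c-a-2) := by
    have e1 : a + 1 - 1 = a := by ring
    have e2 : c - (a+1) - 1 = c - a - 2 := by ring
    simp only [tricomiPsi, TuranProof.J, TuranProof.g, e1, e2]
  -- contiguous relations
  have split1 : TuranProof.J x (a-1) (c-a) = TuranProof.J x (a-1) (c-a-1) + TuranProof.J x a (c-a-1) := by
    have := TuranProof.J_split hx (p := a-1) (by linarith) (c-a-1)
    rwa [show c - a - 1 + 1 = c - a by ring, show a - 1 + 1 = a by ring] at this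
  have ibp1 : x * (TuranProof.J x (a-1) (c-a-1) + TuranProof.J x a (c-a-1))
      = (a-1) * TuranProof.J x (a-2) (c-a) + (c-a) * TuranProof.J x (a-1) (c-a-1) := by
    have := TuranProof.J_ibp hx (p := a-1) ha1 (c-a)
    rwa [show a - 1 - 1 = a - 2 by ring, split1, show c - a - 1 = c - a - 1 by ring] at this
  have ibp2 : x * TuranProof.J x a (c-a-1)
      = a * TuranProof.J x (a-1) (c-a-1) + (c-a-1) * TuranProof.J x a (c-a-2) := by
    have := TuranProof.J_ibp hx (p := a) ha0 (c-a-1)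
    rwa [show c - a - 1 - 1 = c - a - 2 by ring] at this
  have hB1e : TuranProof.J x (a-2) (c-a)
      = (x*(TuranProof.J x (a-1) (c-a-1) + TuranProof.J x a (c-a-1)) + (a-c)*TuranProof.J x (a-1) (c-a-1))/(a-1) := by
    rw [eq_div_iff ha1.ne']
    nlinarith [ibp1]
  have hB2e : TuranProof.J x a (c-a-2)
      = (x*(TuranProof.J x a (c-a-1)) - a*(TuranProof.J x (a-1) (c-a-1)))/(c-a-1) := by
    rw [eq_div_iff (by linarith : c - a - 1 ≠ 0)]
    nlinarith [ibp2]
  -- Gamma function facts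
  have hG : 0 < Real.Gamma a := Real.Gamma_pos_of_pos ha0
  have hGm : 0 < Real.Gamma (a-1) := Real.Gamma_pos_of_pos ha1
  have hGrec1 : Real.Gamma a = (a-1) * Real.Gamma (a-1) := by
    have := Real.Gamma_add_one (by linarith : a - (1:ℝ) ≠ 0)
    rwa [show a - 1 + 1 = a by ring] at this
  have hGrec2 : Real.Gamma (a+1) = a * Real.Gamma a := Real.Gamma_add_one ha0.ne'
  have hgam : 0 < 1 + a - c := by linarith
  have hc2 : (0:ℝ) < c^2 := by nlinarith
  have hcc : c^2*(c+1) ≠ 0 := (mul_neg_of_pos_of_neg hc2 (by linarith)).ne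
  -- main identity
  have heq : tricomiPsi a c x ^ 2 - tricomiPsi (a - 1) c x * tricomiPsi (a + 1) c x
      - 1 / (1 + a - c) * (1 - x ^ 2 * ((c - a) / (c ^ 2 * (c + 1)))) * tricomiPsi a c x ^ 2
      = x / ((1 + a - c) * a * (Real.Gamma a)^2)
        * (x*(TuranProof.J x a (c-a-1))^2 + (x - c)*(TuranProof.J x (a-1) (c-a-1))*(TuranProof.J x a (c-a-1))
          + (a*((c-a)/(c^2*(c+1)))*x - a)*(TuranProof.J x (a-1) (c-a-1))^2) := by
    rw [hpsi, hpsim, hpsip, hB1e, hB2e, hGrec2, hGrec1]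
    exact TuranProof.heq_alg a c x _ _ (Real.Gamma (a-1)) ha1.ne' ha0.ne' hGm.ne'
      hgam.ne' (by linarith) hcc
  have hpos : 0 < x / ((1 + a - c) * a * (Real.Gamma a)^2)
        * (x*(TuranProof.J x a (c-a-1))^2 + (x - c)*(TuranProof.J x (a-1) (c-a-1))*(TuranProof.J x a (c-a-1))
          + (a*((c-a)/(c^2*(c+1)))*x - a)*(TuranProof.J x (a-1) (c-a-1))^2) := by
    apply mul_pos (by positivity) (TuranProof.master ha hc hx)
  rw [gt_iff_lt, ← sub_pos]
  calc (0:ℝ) < _ := hpos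
    _ = _ := heq.symm
end

section
/- For a > 0, c < 1, and x > 0, define Δ_c(x) = ψ(a,c,x)² − ψ(a,c−1,x)·ψ(a,c+1,x). Then Δ_c(x) > −(a/x²)·ψ(a,c,x)². -/
open MeasureTheory Real Set

noncomputable def Jint (x p q : ℝ) : ℝ :=
  ∫ t in Set.Ioi (0:ℝ), t ^ p * Real.exp (-x * t) * (1 + t) ^ q

lemma contJ (x p q : ℝ) :
    ContinuousOn (fun t : ℝ => t ^ p * Real.exp (-x * t) * (1 + t) ^ q) (Set.Ioi 0) := by
  apply ContinuousOn.mul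
  apply ContinuousOn.mul
  · exact continuousOn_id.rpow_const (fun t ht => Or.inl (ne_of_gt ht))
  · exact (Real.continuous_exp.comp (continuous_const.mul continuous_id)).continuousOn
  · exact (continuous_const.add continuous_id).continuousOn.rpow_const
      (fun t ht => Or.inl (by have : (0:ℝ) < t := ht; show (1:ℝ) + t ≠ 0; positivity))

lemma integrableJ {x p : ℝ} (q : ℝ) (hx : 0 < x) (hp : -1 < p) :
    IntegrableOn (fun t : ℝ => t ^ p * Real.exp (-x * t) * (1 + t) ^ q) (Set.Ioi 0) := by
  set C : ℝ := max ((2:ℝ) ^ q) 1 with hC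
  have hC0 : 0 < C := lt_max_of_lt_right one_pos
  rw [← Set.Ioc_union_Ioi_eq_Ioi (zero_le_one' ℝ), integrableOn_union]
  constructor
  · -- on Ioc 0 1
    have hig : IntegrableOn (fun t : ℝ => C * t ^ p) (Set.Ioc (0:ℝ) 1) := by
      exact Integrable.const_mul ((intervalIntegrable_iff_integrableOn_Ioc_of_le
        zero_le_one).mp (intervalIntegral.intervalIntegrable_rpow' hp)) _
    apply Integrable.mono' hig
    · exact ((contJ x p q).mono (Set.Ioc_subset_Ioi_self)).aestronglyMeasurable measurableSet_Ioc
    · refine (ae_restrict_iff' measurableSet_Ioc).mpr (ae_of_all _ (fun t ht => ?_))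
      obtain ⟨ht0, ht1⟩ := ht
      have h1t : (0:ℝ) < 1 + t := by linarith
      rw [Real.norm_eq_abs, abs_of_nonneg (by positivity)]
      have e1 : Real.exp (-x * t) ≤ 1 := Real.exp_le_one_iff.mpr (by nlinarith)
      have e2 : (1 + t) ^ q ≤ C := by
        rcases le_or_gt 0 q with hq | hq
        · exact le_trans (Real.rpow_le_rpow h1t.le (by linarith) hq) (le_max_left _ _)
        · exact le_trans (Real.rpow_le_one_of_one_le_of_nonpos (by linarith) hq.le)
            (le_max_right _ _)
      have hp0 : (0:ℝ) < t ^ p := Real.rpow_pos_of_pos ht0 _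
      calc t ^ p * Real.exp (-x * t) * (1 + t) ^ q
          ≤ t ^ p * 1 * C := by
            apply mul_le_mul _ e2 (Real.rpow_nonneg h1t.le _) (by positivity)
            exact mul_le_mul_of_nonneg_left e1 hp0.le
        _ = C * t ^ p := by ring
  · -- on Ioi 1
    set s : ℝ := max (p + q) 0 with hs
    have hig : IntegrableOn (fun t : ℝ => C * (t ^ s * Real.exp (-x * t))) (Set.Ioi (1:ℝ)) := by
      apply Integrable.const_mul
      have := integrableOn_rpow_mul_exp_neg_mul_rpow (p := 1) (s := s) (b := x)
        (lt_of_lt_of_le neg_one_lt_zero (le_max_right _ _)) zero_lt_one hx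
      simp only [Real.rpow_one] at this
      exact this.mono_set (Set.Ioi_subset_Ioi zero_le_one)
    apply Integrable.mono' hig
    · exact ((contJ x p q).mono (fun t (ht : t ∈ Set.Ioi (1:ℝ)) => Set.mem_Ioi.mpr (lt_trans zero_lt_one ht))).aestronglyMeasurable
        measurableSet_Ioi
    · refine (ae_restrict_iff' measurableSet_Ioi).mpr (ae_of_all _ (fun t ht => ?_))
      have ht1 : (1:ℝ) < t := ht
      have ht0 : (0:ℝ) < t := lt_trans zero_lt_one ht1
      have h1t : (0:ℝ) < 1 + t := by linarith
      rw [Real.norm_eq_abs, abs_of_nonneg (by positivity)]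
      have e2 : (1 + t) ^ q ≤ C * t ^ q := by
        rcases le_or_gt 0 q with hq | hq
        · calc (1 + t) ^ q ≤ (2 * t) ^ q := Real.rpow_le_rpow h1t.le (by linarith) hq
            _ = 2 ^ q * t ^ q := Real.mul_rpow (by norm_num) ht0.le
            _ ≤ C * t ^ q := by
              apply mul_le_mul_of_nonneg_right (le_max_left _ _) (Real.rpow_nonneg ht0.le _)
        · calc (1 + t) ^ q ≤ t ^ q := Real.rpow_le_rpow_of_nonpos ht0 (by linarith) hq.le
            _ ≤ C * t ^ q := by
              nlinarith [Real.rpow_pos_of_pos ht0 q, hC0, le_max_right ((2:ℝ)^q) 1]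
      have e3 : t ^ p * t ^ q ≤ t ^ s := by
        rw [← Real.rpow_add ht0]
        exact Real.rpow_le_rpow_of_exponent_le ht1.le (le_max_left _ _)
      calc t ^ p * Real.exp (-x * t) * (1 + t) ^ q
          ≤ t ^ p * Real.exp (-x * t) * (C * t ^ q) := by
            apply mul_le_mul_of_nonneg_left e2 (by positivity)
        _ = C * (t ^ p * t ^ q * Real.exp (-x * t)) := by ring
        _ ≤ C * (t ^ s * Real.exp (-x * t)) := by
            apply mul_le_mul_of_nonneg_left _ hC0.le
            exact mul_le_mul_of_nonneg_right e3 (Real.exp_pos _).le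
lemma posJ {x p : ℝ} (q : ℝ) (hx : 0 < x) (hp : -1 < p) : 0 < Jint x p q := by
  rw [Jint, setIntegral_pos_iff_support_of_nonneg_ae]
  · have : (Function.support fun t : ℝ => t ^ p * Real.exp (-x * t) * (1 + t) ^ q)
        ∩ Set.Ioi 0 = Set.Ioi 0 := by
      rw [Set.inter_eq_right]
      intro t ht
      have ht0 : (0:ℝ) < t := ht
      have h1t : (0:ℝ) < 1 + t := by linarith
      exact ne_of_gt (by positivity)
    rw [this, Real.volume_Ioi]
    exact ENNReal.zero_lt_top
  · refine Filter.eventually_of_mem (self_mem_ae_restrict measurableSet_Ioi) (fun t ht => ?_)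
    have ht0 : (0:ℝ) < t := ht
    have h1t : (0:ℝ) < 1 + t := by linarith
    positivity
  · exact integrableJ q hx hp

lemma splitJ {x p : ℝ} (q : ℝ) (hx : 0 < x) (hp : -1 < p) :
    Jint x p (q + 1) = Jint x p q + Jint x (p + 1) q := by
  rw [Jint, Jint, Jint, ← integral_add (integrableJ q hx hp) (integrableJ q hx (by linarith))]
  apply setIntegral_congr_fun measurableSet_Ioi
  intro t ht
  have ht0 : (0:ℝ) < t := ht
  have h1t : (0:ℝ) < 1 + t := by linarith
  have e1 : (1 + t) ^ (q + 1) = (1 + t) ^ q * (1 + t) := Real.rpow_add_one (ne_of_gt h1t) q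
  have e2 : t ^ (p + 1) = t ^ p * t := Real.rpow_add_one (ne_of_gt ht0) p
  simp only [e1, e2]
  ring
lemma ibpJ {x p : ℝ} (q : ℝ) (hx : 0 < x) (hp : 0 < p) :
    p * Jint x (p - 1) q - x * Jint x p q + q * Jint x p (q - 1) = 0 := by
  set F : ℝ → ℝ := fun t => t ^ p * Real.exp (-x * t) * (1 + t) ^ q with hF
  set F' : ℝ → ℝ := fun t =>
    p * (t ^ (p - 1) * Real.exp (-x * t) * (1 + t) ^ q)
      - x * (t ^ p * Real.exp (-x * t) * (1 + t) ^ q)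
      + q * (t ^ p * Real.exp (-x * t) * (1 + t) ^ (q - 1)) with hF'
  have hi1 : IntegrableOn (fun t : ℝ => t ^ (p - 1) * Real.exp (-x * t) * (1 + t) ^ q)
      (Set.Ioi 0) := integrableJ q hx (by linarith)
  have hi2 : IntegrableOn (fun t : ℝ => t ^ p * Real.exp (-x * t) * (1 + t) ^ q)
      (Set.Ioi 0) := integrableJ q hx (by linarith)
  have hi3 : IntegrableOn (fun t : ℝ => t ^ p * Real.exp (-x * t) * (1 + t) ^ (q - 1))
      (Set.Ioi 0) := integrableJ (q - 1) hx (by linarith)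
  have hFint : IntegrableOn F' (Set.Ioi 0) := by
    apply Integrable.add
    · exact Integrable.sub (hi1.const_mul p) (hi2.const_mul x)
    · exact hi3.const_mul q
  have hderiv : ∀ t ∈ Set.Ioi (0:ℝ), HasDerivAt F (F' t) t := by
    intro t ht
    have ht0 : (0:ℝ) < t := ht
    have h1t : (0:ℝ) < 1 + t := by linarith
    have d1 : HasDerivAt (fun t : ℝ => t ^ p) (p * t ^ (p - 1)) t :=
      Real.hasDerivAt_rpow_const (Or.inl (ne_of_gt ht0))
    have d2 : HasDerivAt (fun t : ℝ => Real.exp (-x * t)) (-x * Real.exp (-x * t)) t := by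
      have := (((hasDerivAt_id t).const_mul (-x)).exp)
      simpa [mul_comm] using this
    have d3 : HasDerivAt (fun t : ℝ => (1 + t) ^ q) (q * (1 + t) ^ (q - 1)) t := by
      have hb : HasDerivAt (fun t : ℝ => 1 + t) 1 t := (hasDerivAt_id t).const_add 1
      have := (Real.hasDerivAt_rpow_const (p := q) (Or.inl (ne_of_gt h1t))).comp t hb
      rw [mul_one] at this; exact this
    have : HasDerivAt F _ t := ((d1.mul d2).mul d3)
    convert this using 1
    simp only [hF', Pi.mul_apply]
    ring
  have hcont : ContinuousWithinAt F (Set.Ici 0) 0 := by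
    have c1 : ContinuousWithinAt (fun t : ℝ => t ^ p) (Set.Ici 0) 0 :=
      (Real.continuousAt_rpow_const 0 p (Or.inr hp.le)).continuousWithinAt
    have c2 : ContinuousWithinAt (fun t : ℝ => Real.exp (-x * t)) (Set.Ici 0) 0 :=
      (Real.continuous_exp.comp (continuous_const.mul continuous_id)).continuousAt.continuousWithinAt
    have c3 : ContinuousWithinAt (fun t : ℝ => (1 + t) ^ q) (Set.Ici 0) 0 := by
      apply ContinuousAt.continuousWithinAt
      have : ContinuousAt (fun y : ℝ => y ^ q) ((fun t : ℝ => 1 + t) 0) := by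
        apply Real.continuousAt_rpow_const
        norm_num
      exact this.comp (by fun_prop)
    exact (c1.mul c2).mul c3
  have htop : Filter.Tendsto F Filter.atTop (nhds 0) := by
    have h1 : Filter.Tendsto (fun t : ℝ => t ^ (p + q) * Real.exp (-x * t))
        Filter.atTop (nhds 0) := tendsto_rpow_mul_exp_neg_mul_atTop_nhds_zero (p + q) x hx
    have h2 : Filter.Tendsto (fun t : ℝ => (1 + t⁻¹) ^ q) Filter.atTop (nhds 1) := by
      have : Filter.Tendsto (fun t : ℝ => 1 + t⁻¹) Filter.atTop (nhds 1) := by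
        simpa using (tendsto_const_nhds (x := (1:ℝ))).add tendsto_inv_atTop_zero
      simpa using this.rpow_const (Or.inl one_ne_zero)
    have h3 := h1.mul h2
    rw [zero_mul] at h3
    apply h3.congr'
    filter_upwards [Filter.eventually_gt_atTop (0:ℝ)] with t ht0
    have h1t : (0:ℝ) < 1 + t := by linarith
    have e1 : (1 + t⁻¹) ^ q = (1 + t) ^ q / t ^ q := by
      rw [← Real.div_rpow h1t.le ht0.le]
      congr 1
      field_simp
      ring
    have e2 : t ^ (p + q) = t ^ p * t ^ q := Real.rpow_add ht0 p q
    simp only [hF, e1, e2]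
    have htq : t ^ q ≠ 0 := ne_of_gt (Real.rpow_pos_of_pos ht0 q)
    field_simp
  have key : ∫ t in Set.Ioi (0:ℝ), F' t = 0 - F 0 :=
    integral_Ioi_of_hasDerivAt_of_tendsto hcont hderiv hFint htop
  have hF0 : F 0 = 0 := by
    simp [hF, Real.zero_rpow (ne_of_gt hp)]
  rw [hF0, sub_zero] at key
  have expand : ∫ t in Set.Ioi (0:ℝ), F' t
      = p * Jint x (p - 1) q - x * Jint x p q + q * Jint x p (q - 1) := by
    have hg : Integrable (fun t : ℝ => -x * (t ^ p * Real.exp (-x * t) * (1 + t) ^ q)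
        + q * (t ^ p * Real.exp (-x * t) * (1 + t) ^ (q - 1)))
        (volume.restrict (Set.Ioi 0)) := (hi2.const_mul (-x)).add (hi3.const_mul q)
    have e : ∀ t : ℝ, F' t = p * (t ^ (p - 1) * Real.exp (-x * t) * (1 + t) ^ q)
        + (-x * (t ^ p * Real.exp (-x * t) * (1 + t) ^ q)
          + q * (t ^ p * Real.exp (-x * t) * (1 + t) ^ (q - 1))) := by
      intro t; simp only [hF']; ring
    simp only [e]
    rw [integral_add (hi1.const_mul p) hg,
      integral_add (hi2.const_mul (-x)) (hi3.const_mul q),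
      integral_const_mul, integral_const_mul, integral_const_mul]
    simp only [Jint]
    ring
  rw [← expand, key]
lemma jensenJ {x p : ℝ} (q : ℝ) (hx : 0 < x) (hp : 0 < p) :
    Jint x p (q - 1) * (Jint x (p - 1) q + Jint x p q)
      ≤ Jint x (p - 1) q * Jint x p q := by
  set A0 := Jint x (p - 1) q with hA0d
  set A1 := Jint x p q with hA1d
  have hA0 : 0 < A0 := posJ q hx (by linarith)
  have hA1 : 0 < A1 := posJ q hx (by linarith)
  set m : ℝ := A1 / A0 with hm
  have hm0 : 0 < m := div_pos hA1 hA0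
  have hm1 : (0:ℝ) < 1 + m := by linarith
  have hmono : Jint x p (q - 1)
      ≤ (m / (1 + m)) * A0 + (1 / (1 + m) ^ 2) * A1 - (m / (1 + m) ^ 2) * A0 := by
    have hiB : IntegrableOn (fun t : ℝ => t ^ p * Real.exp (-x * t) * (1 + t) ^ (q - 1))
        (Set.Ioi 0) := integrableJ (q - 1) hx (by linarith)
    have hi0 : IntegrableOn (fun t : ℝ => t ^ (p - 1) * Real.exp (-x * t) * (1 + t) ^ q)
        (Set.Ioi 0) := integrableJ q hx (by linarith)
    have hi1 : IntegrableOn (fun t : ℝ => t ^ p * Real.exp (-x * t) * (1 + t) ^ q)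
        (Set.Ioi 0) := integrableJ q hx (by linarith)
    have hig : IntegrableOn (fun t : ℝ =>
        (m / (1 + m)) * (t ^ (p - 1) * Real.exp (-x * t) * (1 + t) ^ q)
        + (1 / (1 + m) ^ 2) * (t ^ p * Real.exp (-x * t) * (1 + t) ^ q)
        - (m / (1 + m) ^ 2) * (t ^ (p - 1) * Real.exp (-x * t) * (1 + t) ^ q))
        (Set.Ioi 0) :=
      ((hi0.const_mul _).add (hi1.const_mul _)).sub (hi0.const_mul _)
    have hadd : Integrable (fun t : ℝ =>
        (m / (1 + m)) * (t ^ (p - 1) * Real.exp (-x * t) * (1 + t) ^ q)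
        + (1 / (1 + m) ^ 2) * (t ^ p * Real.exp (-x * t) * (1 + t) ^ q))
        (volume.restrict (Set.Ioi 0)) := (hi0.const_mul _).add (hi1.const_mul _)
    have hle := setIntegral_mono_on hiB hig measurableSet_Ioi ?_
    · rw [Jint]
      refine le_trans hle (le_of_eq ?_)
      rw [integral_sub hadd (hi0.const_mul _),
        integral_add (hi0.const_mul _) (hi1.const_mul _),
        integral_const_mul, integral_const_mul, integral_const_mul]
      rfl
    · intro t ht
      have ht0 : (0:ℝ) < t := ht
      have h1t : (0:ℝ) < 1 + t := by linarith
      have e1 : (1 + t) ^ q = (1 + t) ^ (q - 1) * (1 + t) := by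
        rw [← Real.rpow_add_one (ne_of_gt h1t) (q - 1), sub_add_cancel]
      have e2 : t ^ p = t ^ (p - 1) * t := by
        rw [← Real.rpow_add_one (ne_of_gt ht0) (p - 1), sub_add_cancel]
      have hT : (0:ℝ) < t ^ (p - 1) * Real.exp (-x * t) * (1 + t) ^ (q - 1) := by positivity
      set V : ℝ := t ^ (p - 1) * Real.exp (-x * t) * (1 + t) ^ (q - 1) with hV
      have key : t * (1 + m) ^ 2 ≤ m * (1 + m) * (1 + t) + (t - m) * (1 + t) := by
        nlinarith [sq_nonneg (t - m)]
      calc t ^ p * Real.exp (-x * t) * (1 + t) ^ (q - 1)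
          = t * (1 + m) ^ 2 * V / (1 + m) ^ 2 := by
            rw [e2, hV]; field_simp
        _ ≤ (m * (1 + m) * (1 + t) + (t - m) * (1 + t)) * V / (1 + m) ^ 2 := by
            gcongr
        _ = (m / (1 + m)) * (t ^ (p - 1) * Real.exp (-x * t) * (1 + t) ^ q)
            + (1 / (1 + m) ^ 2) * (t ^ p * Real.exp (-x * t) * (1 + t) ^ q)
            - (m / (1 + m) ^ 2) * (t ^ (p - 1) * Real.exp (-x * t) * (1 + t) ^ q) := by
            rw [e1, e2, hV]; field_simp; ring
  have hsimp : (m / (1 + m)) * A0 + (1 / (1 + m) ^ 2) * A1 - (m / (1 + m) ^ 2) * A0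
      = A0 * A1 / (A0 + A1) := by
    rw [hm]
    have h01 : A0 + A1 ≠ 0 := by positivity
    field_simp
    ring
  rw [hsimp] at hmono
  have h01 : (0:ℝ) < A0 + A1 := by positivity
  calc Jint x p (q - 1) * (A0 + A1) ≤ (A0 * A1 / (A0 + A1)) * (A0 + A1) := by gcongr
    _ = A0 * A1 := by field_simp

lemma csJ {x p : ℝ} (q : ℝ) (hx : 0 < x) (hp : 0 < p) :
    Jint x p q ^ 2 ≤ Jint x (p - 1) q * Jint x (p + 1) q := by
  set A0 := Jint x (p - 1) q with hA0d
  set A1 := Jint x p q with hA1d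
  set A2 := Jint x (p + 1) q with hA2d
  have hA0 : 0 < A0 := posJ q hx (by linarith)
  set m : ℝ := A1 / A0 with hm
  have hi0 : IntegrableOn (fun t : ℝ => t ^ (p - 1) * Real.exp (-x * t) * (1 + t) ^ q)
      (Set.Ioi 0) := integrableJ q hx (by linarith)
  have hi1 : IntegrableOn (fun t : ℝ => t ^ p * Real.exp (-x * t) * (1 + t) ^ q)
      (Set.Ioi 0) := integrableJ q hx (by linarith)
  have hi2 : IntegrableOn (fun t : ℝ => t ^ (p + 1) * Real.exp (-x * t) * (1 + t) ^ q)
      (Set.Ioi 0) := integrableJ q hx (by linarith)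
  have h0 : 0 ≤ ∫ t in Set.Ioi (0:ℝ),
      (t ^ (p + 1) * Real.exp (-x * t) * (1 + t) ^ q
        + (-(2 * m)) * (t ^ p * Real.exp (-x * t) * (1 + t) ^ q)
        + (m ^ 2) * (t ^ (p - 1) * Real.exp (-x * t) * (1 + t) ^ q)) := by
    apply setIntegral_nonneg measurableSet_Ioi
    intro t ht
    have ht0 : (0:ℝ) < t := ht
    have h1t : (0:ℝ) < 1 + t := by linarith
    have e2 : t ^ p = t ^ (p - 1) * t := by
      rw [← Real.rpow_add_one (ne_of_gt ht0) (p - 1), sub_add_cancel]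
    have e3 : t ^ (p + 1) = t ^ (p - 1) * t * t := by
      rw [Real.rpow_add_one (ne_of_gt ht0) p, e2]
    have hT : (0:ℝ) ≤ t ^ (p - 1) * Real.exp (-x * t) * (1 + t) ^ q := by positivity
    have : t ^ (p + 1) * Real.exp (-x * t) * (1 + t) ^ q
        + (-(2 * m)) * (t ^ p * Real.exp (-x * t) * (1 + t) ^ q)
        + (m ^ 2) * (t ^ (p - 1) * Real.exp (-x * t) * (1 + t) ^ q)
        = (t - m) ^ 2 * (t ^ (p - 1) * Real.exp (-x * t) * (1 + t) ^ q) := by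
      rw [e3, e2]; ring
    rw [this]
    positivity
  have hadd : Integrable (fun t : ℝ => t ^ (p + 1) * Real.exp (-x * t) * (1 + t) ^ q
      + (-(2 * m)) * (t ^ p * Real.exp (-x * t) * (1 + t) ^ q))
      (volume.restrict (Set.Ioi 0)) := hi2.add (hi1.const_mul _)
  rw [integral_add hadd (hi0.const_mul _),
    integral_add hi2 (hi1.const_mul _), integral_const_mul, integral_const_mul] at h0
  have h0' : 0 ≤ A2 - 2 * m * A1 + m ^ 2 * A0 := by
    rw [hA2d, hA1d, hA0d, Jint, Jint, Jint]
    convert h0 using 1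
    ring
  rw [hm] at h0'
  have hA0' : A0 ≠ 0 := ne_of_gt hA0
  have key : A0 * (A2 - 2 * (A1 / A0) * A1 + (A1 / A0) ^ 2 * A0) = A0 * A2 - A1 ^ 2 := by
    field_simp
    ring
  have h4 := mul_nonneg hA0.le h0'
  rw [key] at h4
  linarith
lemma pPos {a c x : ℝ} (ha : 0 < a) (hc : c < 1) (hx : 1 < x) :
    0 < x * a * (a + x) ^ 2 + (x + 1 - c) * (a + x) * (x ^ 2 + a * (2 - c) - a * x)
      - (x ^ 2 + a * (2 - c) - a * x) ^ 2 := by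
  have hy : 0 < x - 1 := by linarith
  have hw : 0 < 1 - c := by linarith
  nlinarith [mul_nonneg (mul_nonneg (sq_nonneg (a - 1)) hy.le) hw.le,
    mul_nonneg (mul_nonneg (sq_nonneg (a - (x - 1))) hy.le) hw.le,
    mul_pos ha hy, mul_pos hy hw, mul_pos (mul_pos ha hy) hw,
    mul_pos (mul_pos ha ha) ha, mul_pos (mul_pos (mul_pos ha hy) hy) hy,
    mul_pos (mul_pos ha ha) hy, mul_pos (mul_pos ha hy) hy,
    mul_pos (mul_pos hy hy) hw, mul_pos (mul_pos (mul_pos hy hy) hy) hw,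
    mul_pos (mul_pos ha hw) hw, mul_pos (mul_pos (mul_pos ha hy) hw) hw]

lemma gPos {a c x A0 A1 : ℝ} (ha : 0 < a) (hc : c < 1) (hx : 0 < x)
    (hA0 : 0 < A0) (hA1 : 0 < A1)
    (hPhi : 0 ≤ x * A1 ^ 2 + (x + 2 - c) * A0 * A1 - a * A0 ^ 2)
    (hPsi : x * A1 ^ 2 + (x + 1 - c) * A0 * A1 - a * A0 ^ 2 ≤ 0) :
    0 < a * (1 - x) * A0 ^ 2 + (2 * a + x * (1 - c) + x ^ 2) * A0 * A1
      + (a + x ^ 2) * A1 ^ 2 := by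
  rcases le_or_gt x 1 with h1 | h1
  · have c1 : 0 ≤ a * (1 - x) * A0 ^ 2 := by
      apply mul_nonneg (mul_nonneg ha.le (by linarith)) (sq_nonneg _)
    have c2 : 0 < (2 * a + x * (1 - c) + x ^ 2) * A0 * A1 := by
      apply mul_pos (mul_pos (by nlinarith) hA0) hA1
    have c3 : 0 < (a + x ^ 2) * A1 ^ 2 := by positivity
    linarith
  · rcases le_or_gt (x ^ 2 + a * (2 - c)) (a * x) with hK | hK
    · -- x*Goal = (a+x^2)*Phi + (a*x - x^2 - a*(2-c))*A0*A1 + a*(a+x)*A0^2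
      have t1 : 0 ≤ (a + x ^ 2) * (x * A1 ^ 2 + (x + 2 - c) * A0 * A1 - a * A0 ^ 2) :=
        mul_nonneg (by positivity) hPhi
      have t2 : 0 ≤ (a * x - x ^ 2 - a * (2 - c)) * (A0 * A1) :=
        mul_nonneg (by linarith) (mul_pos hA0 hA1).le
      have t3 : 0 < a * (a + x) * A0 ^ 2 := by positivity
      nlinarith [t1, t2, t3]
    · -- K > 0 case
      set K : ℝ := x ^ 2 + a * (2 - c) - a * x with hKd
      have hKpos : 0 < K := by rw [hKd]; linarith
      have hP := pPos ha hc h1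
      have hrK : K * A1 < a * (a + x) * A0 := by
        by_contra h'
        push_neg at h'
        have hq : 0 < a * (a + x) * A0 := by positivity
        have t6 : x * ((a * (a + x) * A0) * (a * (a + x) * A0)) ≤ x * ((K * A1) * (K * A1)) := by
          apply mul_le_mul_of_nonneg_left _ hx.le
          exact mul_le_mul h' h' hq.le (mul_nonneg hKpos.le hA1.le)
        have t7 : ((x + 1 - c) * K * A0) * (a * (a + x) * A0)
            ≤ ((x + 1 - c) * K * A0) * (K * A1) := by
          apply mul_le_mul_of_nonneg_left h'
          exact mul_nonneg (mul_nonneg (by linarith) hKpos.le) hA0.le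
        have t8 : K ^ 2 * (x * A1 ^ 2 + (x + 1 - c) * A0 * A1 - a * A0 ^ 2) ≤ K ^ 2 * 0 :=
          mul_le_mul_of_nonneg_left hPsi (sq_nonneg K)
        have hP' : 0 < x * a * (a + x) ^ 2 + (x + 1 - c) * (a + x) * K - K ^ 2 := by
          rw [hKd]; exact hP
        nlinarith [t6, t7, t8, mul_pos hP' (mul_pos ha (mul_pos hA0 hA0))]
      have t1 : 0 ≤ (a + x ^ 2) * (x * A1 ^ 2 + (x + 2 - c) * A0 * A1 - a * A0 ^ 2) :=
        mul_nonneg (by positivity) hPhi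
      have t2 : 0 < A0 * (a * (a + x) * A0 - K * A1) := mul_pos hA0 (by linarith)
      nlinarith [t1, t2]
set_option maxHeartbeats 1000000 in
theorem turan_shift_c_lower (a c x : ℝ) (ha : 0 < a) (hc : c < 1) (hx : 0 < x) :
    (tricomiPsi a c x) ^ 2 - tricomiPsi a (c - 1) x * tricomiPsi a (c + 1) x
      > -(a / x ^ 2) * (tricomiPsi a c x) ^ 2 := by
  have ham : (-1:ℝ) < a - 1 := by linarith
  have ham' : (-1:ℝ) < a := by linarith
  have ham2 : (-1:ℝ) < a + 1 := by linarith
  set A0 : ℝ := Jint x (a - 1) (c - a - 2) with hA0d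
  set A1 : ℝ := Jint x a (c - a - 2) with hA1d
  set A2 : ℝ := Jint x (a + 1) (c - a - 2) with hA2d
  set B1 : ℝ := Jint x a (c - a - 2 - 1) with hB1d
  set B2 : ℝ := Jint x (a + 1) (c - a - 2 - 1) with hB2d
  have hA0 : 0 < A0 := posJ _ hx ham
  have hA1 : 0 < A1 := posJ _ hx ham'
  -- splitting identities
  have s1 : Jint x (a - 1) (c - a - 1) = A0 + A1 := by
    have h := splitJ (x := x) (p := a - 1) (c - a - 2) hx ham
    rw [show c - a - 2 + 1 = c - a - 1 by ring, show a - 1 + 1 = a by ring] at h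
    exact h
  have s2 : Jint x a (c - a - 1) = A1 + A2 := by
    have h := splitJ (x := x) (p := a) (c - a - 2) hx ham'
    rw [show c - a - 2 + 1 = c - a - 1 by ring] at h
    exact h
  have s3 : Jint x (a - 1) (c - a) = A0 + A1 + (A1 + A2) := by
    have h := splitJ (x := x) (p := a - 1) (c - a - 1) hx ham
    rw [show c - a - 1 + 1 = c - a by ring, show a - 1 + 1 = a by ring, s1, s2] at h
    exact h
  have s4 : A1 = B1 + B2 := by
    have h := splitJ (x := x) (p := a) (c - a - 2 - 1) hx ham'
    rw [show c - a - 2 - 1 + 1 = c - a - 2 by ring] at h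
    exact h
  -- integration by parts identities
  have i1 : a * A0 - x * A1 + (c - a - 2) * B1 = 0 := by
    have h := ibpJ (x := x) (p := a) (c - a - 2) hx ha
    rw [show c - a - 2 - 1 = c - a - 2 - 1 by ring] at h
    exact h
  have i2 : (a + 1) * A1 - x * A2 + (c - a - 2) * B2 = 0 := by
    have h := ibpJ (x := x) (p := a + 1) (c - a - 2) hx (by linarith)
    rw [show a + 1 - 1 = a by ring] at h
    exact h
  have hJen : B1 * (A0 + A1) ≤ A0 * A1 := jensenJ (x := x) (p := a) (c - a - 2) hx ha
  have hCS : A1 ^ 2 ≤ A0 * A2 := csJ (x := x) (p := a) (c - a - 2) hx ha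
  -- translate tricomiPsi into Jint
  have hG : 0 < Real.Gamma a := Real.Gamma_pos_of_pos ha
  have e0 : tricomiPsi a (c - 1) x = (1 / Real.Gamma a) * A0 := by
    rw [tricomiPsi, hA0d, Jint]
    congr 1
    apply setIntegral_congr_fun measurableSet_Ioi
    intro t _
    rw [show c - 1 - a - 1 = c - a - 2 by ring]
    ring
  have e1 : tricomiPsi a c x = (1 / Real.Gamma a) * (A0 + A1) := by
    rw [tricomiPsi, ← s1, Jint]
    congr 1
    apply setIntegral_congr_fun measurableSet_Ioi
    intro t _
    ring
  have e2 : tricomiPsi a (c + 1) x = (1 / Real.Gamma a) * (A0 + 2 * A1 + A2) := by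
    rw [tricomiPsi, show A0 + 2 * A1 + A2 = A0 + A1 + (A1 + A2) by ring, ← s3, Jint]
    congr 1
    apply setIntegral_congr_fun measurableSet_Ioi
    intro t _
    rw [show c + 1 - a - 1 = c - a by ring]
    ring
  clear_value A0 A1 A2 B1 B2
  -- the exact second-moment identity
  have hxA2 : x * A2 = (c - 1 - x) * A1 + a * A0 := by
    linear_combination (-1 : ℝ) * i1 + (-1 : ℝ) * i2 + (-(c - a - 2)) * s4
  have hB1e : (a + 2 - c) * B1 = a * A0 - x * A1 := by linear_combination -i1
  have hJ2 : (a * A0 - x * A1) * (A0 + A1) ≤ (a + 2 - c) * (A0 * A1) := by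
    calc (a * A0 - x * A1) * (A0 + A1) = ((a + 2 - c) * B1) * (A0 + A1) := by rw [hB1e]
      _ = (a + 2 - c) * (B1 * (A0 + A1)) := by ring
      _ ≤ (a + 2 - c) * (A0 * A1) := by
          apply mul_le_mul_of_nonneg_left hJen (by linarith)
  have hPhi : 0 ≤ x * A1 ^ 2 + (x + 2 - c) * A0 * A1 - a * A0 ^ 2 := by nlinarith [hJ2]
  have hCS2 : x * A1 ^ 2 ≤ x * (A0 * A2) := mul_le_mul_of_nonneg_left hCS hx.le
  have hxA2A0 : x * (A0 * A2) = (c - 1 - x) * A0 * A1 + a * A0 ^ 2 := by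
    linear_combination A0 * hxA2
  have hPsi : x * A1 ^ 2 + (x + 1 - c) * A0 * A1 - a * A0 ^ 2 ≤ 0 := by
    rw [hxA2A0] at hCS2
    nlinarith [hCS2]
  -- main positivity
  have hGfin := gPos ha hc hx hA0 hA1 hPhi hPsi
  have key : x ^ 2 * (A0 * A2 - A1 ^ 2) < a * (A0 + A1) ^ 2 := by
    have e : x ^ 2 * (A0 * A2) = x * ((c - 1 - x) * A0 * A1 + a * A0 ^ 2) := by
      linear_combination (x * A0) * hxA2
    nlinarith [hGfin, e]
  rw [e0, e1, e2, gt_iff_lt]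
  have hx2 : (0:ℝ) < x ^ 2 := by positivity
  have hdiv : A0 * A2 - A1 ^ 2 < a / x ^ 2 * (A0 + A1) ^ 2 := by
    rw [div_mul_eq_mul_div, lt_div_iff₀ hx2]
    nlinarith [key]
  have hg2 : (0:ℝ) < (1 / Real.Gamma a) ^ 2 := by positivity
  nlinarith [mul_lt_mul_of_pos_left hdiv hg2]
end
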